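/- arXiv:math/9902035 — 6 statements merged into one kernel-verified Lean document; each statement's English description precedes it below -/
import Mathlib

section
/- Let σ = (C,a,ρ,r) ∈ H and let (z,w) ∈ ℂ^n × ℂ satisfy 1 + δ_σ(z,w) ≠ 0, where δ_σ(z,w) = 2i⟨z,a⟩ − (r + i⟨a,a⟩)w. Write (z*,w*) = φ_σ(z,w). Then Im w* − ⟨z*,z*⟩ = ρ·(Im w − ⟨z,z⟩)/|1 + δ_σ(z,w)|². -/
open Complex Matrix

/-- The Hermitian form `⟨z,ζ⟩ = Σ_{α<e} z^α conj(ζ^α) − Σ_{α≥e} z^α conj(ζ^α)`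
of signature `(e, n-e)` on `ℂ^n`. -/
noncomputable def herm (n e : ℕ) (z ζ : Fin n → ℂ) : ℂ :=
  ∑ α : Fin n, (if (α : ℕ) < e then (1 : ℂ) else -1) * z α * (starRingEnd ℂ) (ζ α)

/-- `δ_σ(z,w) = 2i⟨z,a⟩ − (r + i⟨a,a⟩)w` for `σ = (C,a,ρ,r)`. -/
noncomputable def deltaSigma (n e : ℕ) (a : Fin n → ℂ) (r : ℝ) (z : Fin n → ℂ) (w : ℂ) : ℂ :=
  2 * Complex.I * herm n e z a - ((r : ℂ) + Complex.I * herm n e a a) * w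

/-- The fractional linear map `φ_σ(z,w) = (C(z − aw)/(1+δ_σ), ρw/(1+δ_σ))`. -/
noncomputable def phiSigma (n e : ℕ) (C : Matrix (Fin n) (Fin n) ℂ) (a : Fin n → ℂ)
    (ρ r : ℝ) (p : (Fin n → ℂ) × ℂ) : (Fin n → ℂ) × ℂ :=
  ((1 + deltaSigma n e a r p.1 p.2)⁻¹ • C.mulVec (p.1 - p.2 • a),
    (ρ : ℂ) * p.2 / (1 + deltaSigma n e a r p.1 p.2))

lemma herm_conj (n e : ℕ) (z ζ : Fin n → ℂ) :
    (starRingEnd ℂ) (herm n e z ζ) = herm n e ζ z := by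
  simp only [herm, map_sum, _root_.map_mul, Complex.conj_conj, apply_ite (starRingEnd ℂ),
    _root_.map_one, map_neg]
  exact Finset.sum_congr rfl fun α _ => by ring

lemma herm_smul (n e : ℕ) (c c' : ℂ) (z ζ : Fin n → ℂ) :
    herm n e (c • z) (c' • ζ) = c * (starRingEnd ℂ) c' * herm n e z ζ := by
  simp only [herm, Pi.smul_apply, smul_eq_mul, _root_.map_mul, Finset.mul_sum]
  exact Finset.sum_congr rfl fun α _ => by ring

lemma herm_expand (n e : ℕ) (z a : Fin n → ℂ) (w : ℂ) :
    herm n e (z - w • a) (z - w • a)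
      = herm n e z z - (starRingEnd ℂ) w * herm n e z a - w * herm n e a z
        + w * (starRingEnd ℂ) w * herm n e a a := by
  simp only [herm, Pi.sub_apply, Pi.smul_apply, smul_eq_mul, map_sub, _root_.map_mul,
    Finset.mul_sum, ← Finset.sum_sub_distrib, ← Finset.sum_add_distrib]
  exact Finset.sum_congr rfl fun α _ => by ring

lemma im_eq_aux (x : ℂ) : (x.im : ℂ) = (x - (starRingEnd ℂ) x) / (2 * Complex.I) := by
  rw [eq_div_iff (by simp [Complex.I_ne_zero] : (2 * Complex.I : ℂ) ≠ 0), Complex.sub_conj]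
  push_cast; ring

set_option maxHeartbeats 2000000 in
lemma key_aux (ρ r : ℝ) (h H Z w : ℂ) (hH : (starRingEnd ℂ) H = H)
    (hd : (1 + (2 * I * h - ((r : ℂ) + I * H) * w)) ≠ 0) :
    (((((ρ:ℂ) * w / (1 + (2 * I * h - ((r : ℂ) + I * H) * w))).im : ℂ))
      - (1 + (2 * I * h - ((r : ℂ) + I * H) * w))⁻¹
        * ((starRingEnd ℂ) (1 + (2 * I * h - ((r : ℂ) + I * H) * w)))⁻¹
        * ((ρ:ℂ) * (Z - (starRingEnd ℂ) w * h - w * (starRingEnd ℂ) h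
            + w * (starRingEnd ℂ) w * H)))
    = (ρ:ℂ) * ((w.im : ℂ) - Z)
        / ((‖1 + (2 * I * h - ((r : ℂ) + I * H) * w)‖ : ℝ) : ℂ) ^ 2 := by
  set d : ℂ := 1 + (2 * I * h - ((r : ℂ) + I * H) * w) with hdef
  have hcd : (starRingEnd ℂ) d ≠ 0 := by simpa using hd
  have hcd_eq : (starRingEnd ℂ) d
      = 1 - 2 * I * (starRingEnd ℂ) h - ((r : ℂ) - I * H) * (starRingEnd ℂ) w := by
    simp only [hdef, map_add, map_sub, _root_.map_mul, _root_.map_one, map_ofNat,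
      Complex.conj_I, Complex.conj_ofReal, hH]
    ring
  have habs : ((‖d‖ : ℝ) : ℂ) ^ 2 = d * (starRingEnd ℂ) d := by
    rw [← Complex.ofReal_pow, Complex.sq_norm, Complex.mul_conj]
  rw [im_eq_aux (((ρ:ℂ) * w / d)), im_eq_aux w, map_div₀, _root_.map_mul,
    Complex.conj_ofReal, habs]
  rw [hcd_eq] at hcd ⊢
  rw [hdef] at hd ⊢
  have hd2 : 1 + (2 * I * h - w * ((r : ℂ) + I * H)) ≠ 0 := by rwa [mul_comm w]
  have hcd2 : 1 - 2 * I * (starRingEnd ℂ) h - (starRingEnd ℂ) w * ((r : ℂ) - I * H) ≠ 0 := by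
    rwa [mul_comm ((starRingEnd ℂ) w)]
  field_simp [hd, hcd, hd2, hcd2]
  ring_nf

/-- For `σ = (C,a,ρ,r) ∈ H` and `(z,w)` with `1 + δ_σ(z,w) ≠ 0`, writing
`(z*,w*) = φ_σ(z,w)`, one has `Im w* − ⟨z*,z*⟩ = ρ (Im w − ⟨z,z⟩)/|1+δ_σ(z,w)|²`. -/
theorem stmt0 (n e : ℕ) (hn : 1 ≤ n) (he1 : n ≤ 2 * e) (he2 : e ≤ n)
    (C : Matrix (Fin n) (Fin n) ℂ) (a : Fin n → ℂ) (ρ r : ℝ)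
    (hC : IsUnit C) (hρ : ρ ≠ 0)
    (hCρ : ∀ z : Fin n → ℂ, herm n e (C.mulVec z) (C.mulVec z) = (ρ : ℂ) * herm n e z z)
    (z : Fin n → ℂ) (w : ℂ)
    (hδ : 1 + deltaSigma n e a r z w ≠ 0) :
    (((phiSigma n e C a ρ r (z, w)).2.im : ℂ)
        - herm n e (phiSigma n e C a ρ r (z, w)).1 (phiSigma n e C a ρ r (z, w)).1)
      = (ρ : ℂ) * ((w.im : ℂ) - herm n e z z)
          / ((‖1 + deltaSigma n e a r z w‖ : ℝ) : ℂ) ^ 2 := by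
  have hH : (starRingEnd ℂ) (herm n e a a) = herm n e a a := herm_conj n e a a
  have hd' : (1 + (2 * I * herm n e z a - ((r : ℂ) + I * herm n e a a) * w)) ≠ 0 := by
    simpa [deltaSigma] using hδ
  have hkey := key_aux ρ r (herm n e z a) (herm n e a a) (herm n e z z) w hH hd'
  simp only [phiSigma, deltaSigma] at *
  rw [herm_smul, hCρ, herm_expand, ← herm_conj n e z a, map_inv₀]
  exact hkey
end

section
/- Let k ≥ 3. Let φ = (f,g) and Φ = (f̃,g̃) be biholomorphic map germs at the origin of ℂ^n × ℂ fixing the origin, with f, f̃ valued in ℂ^n and g, g̃ valued in ℂ, and suppose each satisfies f(0,0) = 0, g(0,0) = 0 and (∂g/∂z^α)(0,0) = 0 for all α = 1,…,n (and likewise for f̃, g̃). If φ = Φ + O_×(k), then φ⁻¹ = Φ⁻¹ + O_×(k). -/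
open Complex

/-- A holomorphic-germ `f : ℂ^n × ℂ → ℂ` is `O(m)` in the weighted sense
(`z^α` of weight 1, `w` of weight 2) if all Taylor coefficients at the origin on
monomials of weight `< m` vanish; equivalently, for every `(z,w)` the one-variable
function `t ↦ f(tz, t²w)` has vanishing derivatives at `0` up to order `m − 1`. -/
def wBigO (n m : ℕ) (f : (Fin n → ℂ) × ℂ → ℂ) : Prop :=
  ∀ (z : Fin n → ℂ) (w : ℂ) (j : ℕ), j < m →
    iteratedDeriv j (fun t : ℂ => f (t • z, t ^ 2 * w)) 0 = 0

/-- `h = h̃ + O_×(m)`: the `ℂ^n`-components differ by `O(m−1)` and the `ℂ`-components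
differ by `O(m)`. -/
def wBigOx (n m : ℕ) (h h' : (Fin n → ℂ) × ℂ → (Fin n → ℂ) × ℂ) : Prop :=
  (∀ α : Fin n, wBigO n (m - 1) (fun p => (h p).1 α - (h' p).1 α)) ∧
    wBigO n m (fun p => (h p).2 - (h' p).2)

open Filter Asymptotics Metric Set Topology

section Aux

variable {E : Type*} [NormedAddCommGroup E] [NormedSpace ℂ E] [CompleteSpace E]

lemma iteratedDeriv_eq_smul_coeff {f : ℂ → E} {p : FormalMultilinearSeries ℂ ℂ E}
    (hp : HasFPowerSeriesAt f p 0) (j : ℕ) :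
    iteratedDeriv j f 0 = ((j.factorial : ℕ) : ℂ) • p.coeff j := by
  obtain ⟨r, hr⟩ := hp
  have h := hr.factorial_smul (1 : ℂ) j
  rw [iteratedDeriv_eq_iteratedFDeriv, ← h, FormalMultilinearSeries.coeff,
    Nat.cast_smul_eq_nsmul]
  rfl

lemma vord_iff_coeff {f : ℂ → E} {p : FormalMultilinearSeries ℂ ℂ E}
    (hp : HasFPowerSeriesAt f p 0) (m : ℕ) :
    (∀ j < m, iteratedDeriv j f 0 = 0) ↔ (∀ j < m, p.coeff j = 0) := by
  have key : ∀ j, iteratedDeriv j f 0 = 0 ↔ p.coeff j = 0 := by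
    intro j
    rw [iteratedDeriv_eq_smul_coeff hp, smul_eq_zero]
    simp [Nat.factorial_ne_zero]
  exact ⟨fun h j hj => (key j).1 (h j hj), fun h j hj => (key j).2 (h j hj)⟩

/-- Local factorization: an analytic germ with vanishing derivatives up to order `m-1`
is `t ^ m • g t` for an analytic germ `g`. -/
lemma eq_pow_smul {f : ℂ → E} (hf : AnalyticAt ℂ f 0) (m : ℕ)
    (hd : ∀ j < m, iteratedDeriv j f 0 = 0) :
    ∃ g : ℂ → E, AnalyticAt ℂ g 0 ∧ ∀ t : ℂ, f t = t ^ m • g t := by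
  induction m generalizing f with
  | zero => exact ⟨f, hf, fun t => by simp⟩
  | succ m ih =>
    have hf0 : f 0 = 0 := by simpa using hd 0 (Nat.succ_pos m)
    obtain ⟨p, hp⟩ := hf
    have hp1 : HasFPowerSeriesAt (dslope f 0) p.fslope 0 :=
      hp.has_fpower_series_dslope_fslope
    have hd1 : ∀ j < m, iteratedDeriv j (dslope f 0) 0 = 0 := by
      intro j hj
      rw [iteratedDeriv_eq_smul_coeff hp1, FormalMultilinearSeries.coeff_fslope]
      have : p.coeff (j + 1) = 0 :=
        (vord_iff_coeff hp (m + 1)).1 hd (j + 1) (Nat.succ_lt_succ hj)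
      simp [this]
    obtain ⟨g, hg, hgt⟩ := ih hp1.analyticAt hd1
    refine ⟨g, hg, fun t => ?_⟩
    have h1 : (t - 0) • dslope f 0 t = f t - f 0 := sub_smul_dslope f 0 t
    rw [hf0, sub_zero, sub_zero] at h1
    rw [← h1, hgt t, smul_smul, pow_succ, mul_comm]

lemma isBigO_of_vord {f : ℂ → E} (hf : AnalyticAt ℂ f 0) (m : ℕ)
    (hd : ∀ j < m, iteratedDeriv j f 0 = 0) :
    f =O[𝓝 0] fun t : ℂ => t ^ m := by
  obtain ⟨g, hg, hgt⟩ := eq_pow_smul hf m hd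
  have hb : ∀ᶠ t in 𝓝 (0 : ℂ), ‖g t‖ ≤ ‖g 0‖ + 1 :=
    (hg.continuousAt.norm).eventually_le_const (lt_add_one ‖g 0‖)
  rw [isBigO_iff]
  refine ⟨‖g 0‖ + 1, hb.mono fun t ht => ?_⟩
  rw [hgt t, norm_smul]
  calc ‖t ^ m‖ * ‖g t‖ ≤ ‖t ^ m‖ * (‖g 0‖ + 1) :=
        mul_le_mul_of_nonneg_left ht (norm_nonneg _)
    _ = (‖g 0‖ + 1) * ‖t ^ m‖ := mul_comm _ _

lemma smul_coeff_zero {c : E} (j : ℕ)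
    (h1 : (fun y : ℂ => y ^ j • c) =O[𝓝 0] fun y : ℂ => ‖y‖ ^ (j + 1)) : c = 0 := by
  obtain ⟨C, hC⟩ := isBigO_iff.1 h1
  rw [Metric.eventually_nhds_iff] at hC
  obtain ⟨δ, hδ, hball⟩ := hC
  have key : ∀ x : ℝ, x ∈ Ioo (0 : ℝ) δ → ‖c‖ ≤ C * x := by
    intro x hx
    have hd : dist (x : ℂ) 0 < δ := by
      simp only [dist_zero_right, Complex.norm_real, Real.norm_eq_abs]
      rw [abs_of_pos hx.1]
      exact hx.2
      
    have := hball hd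
    simp only [norm_smul, norm_pow, norm_norm, Complex.norm_real, Real.norm_eq_abs,
      abs_of_pos hx.1] at this
    have hxj : (0 : ℝ) < x ^ j := pow_pos hx.1 j
    calc ‖c‖ = x ^ j * ‖c‖ / x ^ j := by field_simp
      _ ≤ C * x ^ (j + 1) / x ^ j := by gcongr
      _ = C * x := by rw [pow_succ]; field_simp
  have hev : ∀ᶠ x in 𝓝[>] (0 : ℝ), ‖c‖ ≤ C * x := by
    filter_upwards [Ioo_mem_nhdsGT_of_mem (by constructor <;> simp [hδ] : (0:ℝ) ∈ Ico 0 δ)]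
      with x hx using key x hx
  have hlim : Tendsto (fun x : ℝ => C * x) (𝓝[>] (0 : ℝ)) (𝓝 0) := by
    have : Tendsto (fun x : ℝ => C * x) (𝓝 0) (𝓝 (C * 0)) :=
      (continuous_const.mul continuous_id).continuousAt
    rw [mul_zero] at this
    exact this.mono_left nhdsWithin_le_nhds
  have : ‖c‖ ≤ 0 := ge_of_tendsto hlim hev
  exact norm_le_zero_iff.1 this

/-- Converse: `O(t^m)` implies vanishing derivatives below order `m`. -/
lemma vord_of_isBigO {f : ℂ → E} (hf : AnalyticAt ℂ f 0) (m : ℕ)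
    (h : f =O[𝓝 0] fun t : ℂ => t ^ m) :
    ∀ j < m, iteratedDeriv j f 0 = 0 := by
  obtain ⟨p, hp⟩ := hf
  rw [vord_iff_coeff hp]
  intro j hj
  induction j using Nat.strong_induction_on with
  | _ j ih =>
  have hj' : j < m := hj
  have hps := hp.isBigO_sub_partialSum_pow (j + 1)
  have hsum : ∀ y : ℂ, p.partialSum (j + 1) y = y ^ j • p.coeff j := by
    intro y
    rw [FormalMultilinearSeries.partialSum, Finset.sum_eq_single j]
    · exact FormalMultilinearSeries.apply_eq_pow_smul_coeff
    · intro i hi hne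
      have hij : i < j := lt_of_le_of_ne (Nat.lt_succ_iff.1 (Finset.mem_range.1 hi)) hne
      rw [FormalMultilinearSeries.apply_eq_pow_smul_coeff, ih i hij (hij.trans hj'), smul_zero]
    · intro hj2; exact absurd (Finset.self_mem_range_succ j) hj2
  have hmono : (fun y : ℂ => y ^ m) =O[𝓝 0] fun y : ℂ => ‖y‖ ^ (j + 1) := by
    rw [isBigO_iff]
    refine ⟨1, ?_⟩
    filter_upwards [Metric.ball_mem_nhds (0:ℂ) one_pos] with y hy
    rw [mem_ball_zero_iff] at hy
    rw [norm_pow, one_mul, Real.norm_eq_abs,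
      _root_.abs_of_nonneg (pow_nonneg (norm_nonneg y) _)]
    exact pow_le_pow_of_le_one (norm_nonneg y) hy.le (Nat.succ_le_of_lt hj')
  have h3 : (fun y : ℂ => f y) =O[𝓝 0] fun y : ℂ => ‖y‖ ^ (j + 1) := h.trans hmono
  have h2 : (fun y : ℂ => f (0 + y) - p.partialSum (j + 1) y)
      =O[𝓝 0] fun y : ℂ => ‖y‖ ^ (j + 1) := hps
  have h4 : (fun y : ℂ => y ^ j • p.coeff j) =O[𝓝 0] fun y : ℂ => ‖y‖ ^ (j + 1) := by
    have h5 := h3.sub h2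
    refine (h5.congr_left fun y => ?_)
    rw [zero_add, sub_sub_cancel, hsum y]
  exact smul_coeff_zero j h4

/-- Two-variable Schwarz-type lemma: if every `s`-slice of an analytic germ `Λ` on `ℂ²`
vanishes to order `k` at `s = 0`, then `Λ(t,t) = O(t^k)`. -/
lemma schwarz2 {Λ : ℂ × ℂ → ℂ} (hΛ : AnalyticAt ℂ Λ 0) {k : ℕ} (hk : 0 < k)
    (hs : ∀ t : ℂ, ∀ j < k, iteratedDeriv j (fun s => Λ (s, t)) 0 = 0) :
    (fun t => Λ (t, t)) =O[𝓝 0] fun t : ℂ => t ^ k := by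
  obtain ⟨r, hr, hball⟩ : ∃ r > 0, ∀ q ∈ ball (0 : ℂ × ℂ) r, AnalyticAt ℂ Λ q := by
    have := hΛ.eventually_analyticAt
    rw [Metric.eventually_nhds_iff_ball] at this
    exact this
  set ρ := r / 2 with hρdef
  have hρ : 0 < ρ := by positivity
  have hρr : ρ < r := by rw [hρdef]; linarith
  have hcont : ContinuousOn Λ (closedBall (0 : ℂ × ℂ) ρ) := by
    intro q hq
    exact (hball q (lt_of_le_of_lt (mem_closedBall.1 hq) hρr)).continuousAt.continuousWithinAt
  obtain ⟨M, hM⟩ := (isCompact_closedBall (0 : ℂ × ℂ) ρ).exists_bound_of_continuousOn hcont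
  have hM0 : 0 ≤ M := le_trans (norm_nonneg _) (hM 0 (mem_closedBall_self hρ.le))
  rw [isBigO_iff]
  refine ⟨M / ρ ^ k, ?_⟩
  filter_upwards [Metric.ball_mem_nhds (0 : ℂ) hρ] with t ht
  rw [mem_ball_zero_iff] at ht
  set ft : ℂ → ℂ := fun s => Λ (s, t) with hft
  have hmem : ∀ s : ℂ, ‖s‖ < r → (s, t) ∈ ball (0 : ℂ × ℂ) r := by
    intro s hsr
    rw [mem_ball_zero_iff, Prod.norm_def]
    exact max_lt hsr (ht.trans hρr)
  have hslice : ∀ s : ℂ, ‖s‖ < r → AnalyticAt ℂ ft s := by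
    intro s hsr
    have hin : AnalyticAt ℂ (fun s : ℂ => ((s, t) : ℂ × ℂ)) s :=
      (analyticAt_id).prod analyticAt_const
    have := AnalyticAt.comp (f := fun s : ℂ => ((s, t) : ℂ × ℂ)) (g := Λ) (x := s)
      (hball _ (hmem s hsr)) hin
    simpa [Function.comp_def] using this
  obtain ⟨g, hg, hgt⟩ := eq_pow_smul (hslice 0 (by simpa using hr)) k (hs t)
  have hgdiv : ∀ s : ℂ, s ≠ 0 → g s = ft s / s ^ k := by
    intro s hs0
    rw [hgt s, smul_eq_mul]
    field_simp
  have hgd : ∀ s : ℂ, ‖s‖ < r → DifferentiableAt ℂ g s := by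
    intro s hsr
    by_cases hs0 : s = 0
    · exact hs0 ▸ hg.differentiableAt
    · have hev : (fun x : ℂ => ft x / x ^ k) =ᶠ[𝓝 s] g := by
        filter_upwards [eventually_ne_nhds hs0] with x hx0
        exact (hgdiv x hx0).symm
      have hd : DifferentiableAt ℂ (fun x : ℂ => ft x / x ^ k) s :=
        ((hslice s hsr).differentiableAt).div (differentiableAt_pow k) (pow_ne_zero k hs0)
      exact hd.congr_of_eventuallyEq hev.symm
  have hdc : DiffContOnCl ℂ g (ball (0 : ℂ) ρ) := by
    constructor
    · intro s hsmem
      exact (hgd s ((mem_ball_zero_iff.1 hsmem).trans hρr)).differentiableWithinAt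
    · rw [closure_ball (0 : ℂ) hρ.ne']
      intro s hsmem
      exact (hgd s (lt_of_le_of_lt (mem_closedBall_zero_iff.1 hsmem) hρr)).continuousAt.continuousWithinAt
  have hfront : ∀ s ∈ frontier (ball (0 : ℂ) ρ), ‖g s‖ ≤ M / ρ ^ k := by
    intro s hsmem
    rw [frontier_ball (0 : ℂ) hρ.ne'] at hsmem
    have hsn : ‖s‖ = ρ := by simpa using hsmem
    have hs0 : s ≠ 0 := by
      intro hc; rw [hc] at hsn; simp at hsn; exact hρ.ne' hsn.symm
    rw [hgdiv s hs0, norm_div, norm_pow, hsn]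
    have hMs : ‖ft s‖ ≤ M := hM (s, t) (by
        rw [mem_closedBall_zero_iff, Prod.norm_def]
        exact max_le hsn.le ht.le)
    gcongr
  have hgb : ‖g t‖ ≤ M / ρ ^ k :=
    Complex.norm_le_of_forall_mem_frontier_norm_le isBounded_ball hdc hfront
      (subset_closure (mem_ball_zero_iff.2 ht))
  calc ‖Λ (t, t)‖ = ‖t ^ k‖ * ‖g t‖ := by rw [show Λ (t, t) = ft t from rfl, hgt t, norm_smul]
    _ ≤ ‖t ^ k‖ * (M / ρ ^ k) := mul_le_mul_of_nonneg_left hgb (norm_nonneg _)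
    _ = M / ρ ^ k * ‖t ^ k‖ := mul_comm _ _

/-- Weighted composition: a weighted-`O(m)` analytic germ composed with an analytic curve
`(u, v)` with `u = O(t)`, `v = O(t²)` is `O(t^m)`. -/
lemma transfer {n : ℕ} {F : (Fin n → ℂ) × ℂ → ℂ} (hF : AnalyticAt ℂ F 0) {m : ℕ} (hm : 0 < m)
    (hord : wBigO n m F) {u : ℂ → Fin n → ℂ} {v : ℂ → ℂ}
    (hu : AnalyticAt ℂ u 0) (hv : AnalyticAt ℂ v 0)
    (hu0 : u 0 = 0) (hv0 : v 0 = 0) (hv1 : deriv v 0 = 0) :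
    (fun t => F (u t, v t)) =O[𝓝 0] fun t : ℂ => t ^ m := by
  obtain ⟨a, ha, hau⟩ := eq_pow_smul hu 1 (by
    intro j hj
    interval_cases j
    simpa [iteratedDeriv_zero] using hu0)
  obtain ⟨b, hb, hbv⟩ := eq_pow_smul hv 2 (by
    intro j hj
    interval_cases j
    · simpa [iteratedDeriv_zero] using hv0
    · simpa [iteratedDeriv_one] using hv1)
  set G : ℂ × ℂ → (Fin n → ℂ) × ℂ := fun q => (q.1 • a q.2, q.1 ^ 2 * b q.2) with hGdef
  have hasnd : AnalyticAt ℂ (fun q : ℂ × ℂ => a q.2) 0 := by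
    have := AnalyticAt.comp (g := a) (f := fun q : ℂ × ℂ => q.2) (x := (0 : ℂ × ℂ))
      ha analyticAt_snd
    simpa [Function.comp_def] using this
  have hbsnd : AnalyticAt ℂ (fun q : ℂ × ℂ => b q.2) 0 := by
    have := AnalyticAt.comp (g := b) (f := fun q : ℂ × ℂ => q.2) (x := (0 : ℂ × ℂ))
      hb analyticAt_snd
    simpa [Function.comp_def] using this
  have hin : AnalyticAt ℂ G 0 := by
    apply AnalyticAt.prod
    · exact (analyticAt_fst).smul hasnd
    · exact ((analyticAt_fst).pow 2).mul hbsnd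
  have hG0 : G 0 = 0 := by simp [hGdef]
  have hΛ : AnalyticAt ℂ (fun q : ℂ × ℂ => F (G q)) 0 := by
    have hF' : AnalyticAt ℂ F (G 0) := by rw [hG0]; exact hF
    have := hF'.comp hin
    simpa [Function.comp_def] using this
  have hsl : ∀ t : ℂ, ∀ j < m, iteratedDeriv j (fun s => F (G (s, t))) 0 = 0 := by
    intro t j hj
    exact hord (a t) (b t) j hj
  have hbig := schwarz2 hΛ hm hsl
  have heq : (fun t : ℂ => F (u t, v t)) = fun t : ℂ => F (G (t, t)) := by
    funext t
    rw [hGdef]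
    simp only
    rw [hau t, hbv t, pow_one, smul_eq_mul]
  rw [heq]
  exact hbig

/-- Second-order Taylor-type difference bound for an analytic germ. -/
lemma quad_diff {E' F' : Type*} [NormedAddCommGroup E'] [NormedSpace ℂ E']
    [NormedAddCommGroup F'] [NormedSpace ℂ F'] [CompleteSpace F']
    {f : E' → F'} (hf : AnalyticAt ℂ f 0) :
    ∃ C r : ℝ, 0 < r ∧ ∀ x y : E', ‖x‖ < r → ‖y‖ < r →
      ‖f x - f y - fderiv ℂ f 0 (x - y)‖ ≤ C * max ‖x‖ ‖y‖ * ‖x - y‖ := by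
  have hD : DifferentiableAt ℂ (fderiv ℂ f) 0 := hf.fderiv.differentiableAt
  obtain ⟨C₁, hC₁⟩ := isBigO_iff.1 hD.hasFDerivAt.isBigO_sub
  rw [Metric.eventually_nhds_iff_ball] at hC₁
  obtain ⟨r₁, hr₁, hball₁⟩ := hC₁
  obtain ⟨r₂, hr₂, hball₂⟩ : ∃ r > 0, ∀ q ∈ ball (0 : E') r, AnalyticAt ℂ f q := by
    have := hf.eventually_analyticAt
    rw [Metric.eventually_nhds_iff_ball] at this
    exact this
  set C := max C₁ 0 with hCdef
  set r := min r₁ r₂ with hrdef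
  have hr : 0 < r := lt_min hr₁ hr₂
  refine ⟨C, r, hr, fun x y hx hy => ?_⟩
  set L := fderiv ℂ f 0 with hLdef
  set G : E' → F' := fun p => f p - L p with hGdef
  set ρ := max ‖x‖ ‖y‖ with hρdef
  have hρr : ρ < r := max_lt hx hy
  have hGd : ∀ p ∈ closedBall (0 : E') ρ, DifferentiableAt ℂ G p := by
    intro p hp
    have hpr : ‖p‖ < r₂ :=
      lt_of_le_of_lt (mem_closedBall_zero_iff.1 hp) (hρr.trans_le (min_le_right _ _))
    exact ((hball₂ p (mem_ball_zero_iff.2 hpr)).differentiableAt).sub (L.differentiableAt)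
  have hbound : ∀ p ∈ closedBall (0 : E') ρ, ‖fderiv ℂ G p‖ ≤ C * ρ := by
    intro p hp
    have hpn := mem_closedBall_zero_iff.1 hp
    have hpr₂ : ‖p‖ < r₂ := lt_of_le_of_lt hpn (hρr.trans_le (min_le_right _ _))
    have hpr₁ : ‖p‖ < r₁ := lt_of_le_of_lt hpn (hρr.trans_le (min_le_left _ _))
    have hfd : DifferentiableAt ℂ f p := (hball₂ p (mem_ball_zero_iff.2 hpr₂)).differentiableAt
    have : fderiv ℂ G p = fderiv ℂ f p - L := by
      rw [hGdef]
      rw [fderiv_fun_sub hfd L.differentiableAt, L.fderiv]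
    rw [this]
    have h1 := hball₁ p (mem_ball_zero_iff.2 hpr₁)
    simp only [sub_zero] at h1
    calc ‖fderiv ℂ f p - L‖ ≤ C₁ * ‖p‖ := h1
      _ ≤ C * ρ := by
          apply mul_le_mul (le_max_left _ _) hpn (norm_nonneg _) (le_max_right _ _)
  have hconv := (convex_closedBall (0 : E') ρ).norm_image_sub_le_of_norm_fderiv_le
    hGd hbound (mem_closedBall_zero_iff.2 (le_max_right _ _))
    (mem_closedBall_zero_iff.2 (le_max_left _ _))
  -- hconv : ‖G x - G y‖ ≤ C * ρ * ‖x - y‖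
  have : G x - G y = f x - f y - L (x - y) := by
    rw [hGdef]
    simp only [map_sub]
    abel
  rw [this] at hconv
  exact hconv

section LinAlg
variable {n : ℕ}

lemma clm_kill (T : ((Fin n → ℂ) × ℂ) →L[ℂ] ℂ)
    (h : ∀ α, T ((Pi.single α 1 : Fin n → ℂ), 0) = 0) (z : Fin n → ℂ) : T (z, 0) = 0 := by
  have hrep : ((z, (0 : ℂ)) : (Fin n → ℂ) × ℂ)
      = ∑ α : Fin n, z α • ((Pi.single α 1 : Fin n → ℂ), (0 : ℂ)) := by
    apply Prod.ext
    · rw [Prod.fst_sum]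
      simp only [Prod.smul_mk]
      funext j
      rw [Finset.sum_apply]
      simp [Pi.single_apply, Finset.sum_ite_eq]
    · rw [Prod.snd_sum]
      simp
  rw [hrep, map_sum]
  apply Finset.sum_eq_zero
  intro α _
  rw [map_smul, h α, smul_zero]

lemma clm_dec (T : ((Fin n → ℂ) × ℂ) →L[ℂ] ℂ)
    (h : ∀ z : Fin n → ℂ, T (z, 0) = 0) (x : (Fin n → ℂ) × ℂ) :
    T x = x.2 * T (0, 1) := by
  have hx : x = (x.1, (0 : ℂ)) + x.2 • ((0 : Fin n → ℂ), (1 : ℂ)) := by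
    apply Prod.ext <;> simp
  have hT := map_add T (x.1, (0 : ℂ)) (x.2 • ((0 : Fin n → ℂ), (1 : ℂ)))
  rw [← hx] at hT
  rw [hT, h, map_smul, zero_add, smul_eq_mul]

end LinAlg

/-- The `w`-component of the inverse also has vanishing `z`-derivatives at `0`. -/
lemma inv_snd_fderiv {n : ℕ} {φ ψ : (Fin n → ℂ) × ℂ → (Fin n → ℂ) × ℂ}
    (hφa : AnalyticAt ℂ φ 0) (hψa : AnalyticAt ℂ ψ 0) (hψ0 : ψ 0 = 0)
    (hφg : ∀ α : Fin n, fderiv ℂ (fun p => (φ p).2) 0 ((Pi.single α 1 : Fin n → ℂ), 0) = 0)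
    (hinv : ∀ᶠ p in 𝓝 (0 : (Fin n → ℂ) × ℂ), φ (ψ p) = p) :
    ∀ z : Fin n → ℂ, fderiv ℂ (fun p => (ψ p).2) 0 (z, 0) = 0 := by
  set π := ContinuousLinearMap.snd ℂ (Fin n → ℂ) ℂ with hπdef
  set gφ : (Fin n → ℂ) × ℂ → ℂ := fun p => (φ p).2 with hgφdef
  have hgφa : AnalyticAt ℂ gφ 0 := by
    have := (π.analyticAt (φ 0)).comp hφa
    exact this
  have hgφd0 : DifferentiableAt ℂ gφ ((0 : (Fin n → ℂ) × ℂ)) := hgφa.differentiableAt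
  set B := fderiv ℂ ψ 0 with hBdef
  set Dg := fderiv ℂ gφ 0 with hDgdef
  have hψd : DifferentiableAt ℂ ψ 0 := hψa.differentiableAt
  have hgφdψ0 : DifferentiableAt ℂ gφ (ψ 0) := by rw [hψ0]; exact hgφd0
  have hkey : Dg.comp B = π := by
    have h1 : (fun p => gφ (ψ p)) =ᶠ[𝓝 (0 : (Fin n → ℂ) × ℂ)] (fun p => p.2) :=
      hinv.mono fun p hp => by simp only [hgφdef, hp]
    have h2 := Filter.EventuallyEq.fderiv_eq (𝕜 := ℂ) h1
    have h3 : fderiv ℂ (fun p => gφ (ψ p)) 0 = Dg.comp B := by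
      have := fderiv_comp (𝕜 := ℂ) 0 hgφdψ0 hψd
      rw [Function.comp_def] at this
      rw [this, hψ0]
    have h4 : fderiv ℂ (fun p : (Fin n → ℂ) × ℂ => p.2) 0 = π := π.fderiv
    rw [h3, h4] at h2
    exact h2
  have hdec : ∀ x : (Fin n → ℂ) × ℂ, Dg x = x.2 * Dg (0, 1) :=
    clm_dec Dg (clm_kill Dg hφg)
  have happ : ∀ x : (Fin n → ℂ) × ℂ, (B x).2 * Dg (0, 1) = x.2 := by
    intro x
    have := congrArg (fun T : ((Fin n → ℂ) × ℂ) →L[ℂ] ℂ => T x) hkey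
    simp only [ContinuousLinearMap.comp_apply] at this
    rw [← hdec (B x)]
    exact this
  have hcne : Dg (0, 1) ≠ 0 := by
    intro hc
    have := happ (0, 1)
    rw [hc, mul_zero] at this
    simp at this
  intro z
  have hgoal : fderiv ℂ (fun p => (ψ p).2) 0 = π.comp B := by
    have := fderiv_comp (𝕜 := ℂ) 0 (π.differentiableAt (x := ψ 0)) hψd
    rw [Function.comp_def, π.fderiv] at this
    exact this
  rw [hgoal]
  have h0 := happ (z, 0)
  simp only at h0
  have : (B (z, 0)).2 = 0 := by
    by_contra hne
    exact hne (by
      have := mul_eq_zero.1 (by rw [h0] : (B (z, 0)).2 * Dg (0, 1) = 0)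
      tauto)
  exact this

lemma pow_isBigO_pow {a b : ℕ} (hab : b ≤ a) :
    (fun t : ℂ => t ^ a) =O[𝓝 0] fun t : ℂ => t ^ b := by
  rw [isBigO_iff]
  refine ⟨1, ?_⟩
  filter_upwards [Metric.ball_mem_nhds (0 : ℂ) one_pos] with t ht
  rw [mem_ball_zero_iff] at ht
  rw [norm_pow, norm_pow, one_mul]
  exact pow_le_pow_of_le_one (norm_nonneg t) ht.le hab

lemma pow_tendsto {a : ℕ} (ha : 0 < a) :
    Tendsto (fun t : ℂ => t ^ a) (𝓝 0) (𝓝 0) := by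
  have := (continuous_pow a (M := ℂ)).tendsto 0
  simpa [zero_pow ha.ne'] using this


/-- For biholomorphic germs `φ, Φ` fixing the origin with
`g(0,0) = 0`, `f(0,0) = 0` and `∂g/∂z(0,0) = 0`, if `φ = Φ + O_×(k)` (`k ≥ 3`)
then `φ⁻¹ = Φ⁻¹ + O_×(k)`. -/
theorem stmt5 (n k : ℕ) (hk : 3 ≤ k)
    (φ Φ ψ Ψ : (Fin n → ℂ) × ℂ → (Fin n → ℂ) × ℂ)
    (hφa : AnalyticAt ℂ φ 0) (hΦa : AnalyticAt ℂ Φ 0)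
    (hψa : AnalyticAt ℂ ψ 0) (hΨa : AnalyticAt ℂ Ψ 0)
    (hφ0 : φ 0 = 0) (hΦ0 : Φ 0 = 0) (hψ0 : ψ 0 = 0) (hΨ0 : Ψ 0 = 0)
    (hφg : ∀ α : Fin n, fderiv ℂ (fun p => (φ p).2) 0 ((Pi.single α 1 : Fin n → ℂ), 0) = 0)
    (hΦg : ∀ α : Fin n, fderiv ℂ (fun p => (Φ p).2) 0 ((Pi.single α 1 : Fin n → ℂ), 0) = 0)
    (hφinv : ∀ᶠ p in nhds (0 : (Fin n → ℂ) × ℂ), ψ (φ p) = p ∧ φ (ψ p) = p)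
    (hΦinv : ∀ᶠ p in nhds (0 : (Fin n → ℂ) × ℂ), Ψ (Φ p) = p ∧ Φ (Ψ p) = p)
    (h : wBigOx n k φ Φ) :
    wBigOx n k ψ Ψ := by
  have hk1 : 0 < k - 1 := by omega
  have hk0 : 0 < k := by omega
  have hk1k : k - 1 ≤ k := by omega
  have h1k1 : 1 ≤ k - 1 := by omega
  -- the `w`-derivative structure of `ψ` and `Ψ`
  have hψw : ∀ z : Fin n → ℂ, fderiv ℂ (fun p => (ψ p).2) 0 (z, 0) = 0 :=
    inv_snd_fderiv hφa hψa hψ0 hφg (hφinv.mono fun p hp => hp.2)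
  have hΨw : ∀ z : Fin n → ℂ, fderiv ℂ (fun p => (Ψ p).2) 0 (z, 0) = 0 :=
    inv_snd_fderiv hΦa hΨa hΨ0 hΦg (hΦinv.mono fun p hp => hp.2)
  have hΨdec : ∀ x : (Fin n → ℂ) × ℂ,
      fderiv ℂ (fun p => (Ψ p).2) 0 x = x.2 * fderiv ℂ (fun p => (Ψ p).2) 0 (0, 1) :=
    clm_dec _ hΨw
  -- quadratic difference bound for Ψ
  obtain ⟨C, r, hr, hquad⟩ := quad_diff hΨa
  set L := fderiv ℂ Ψ 0 with hLdef
  set π := ContinuousLinearMap.snd ℂ (Fin n → ℂ) ℂ with hπdef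
  have hΨgL : ∀ x : (Fin n → ℂ) × ℂ, (L x).2 = fderiv ℂ (fun p => (Ψ p).2) 0 x := by
    intro x
    have hcomp : fderiv ℂ (fun p => (Ψ p).2) 0 = π.comp L := by
      have := fderiv_comp (𝕜 := ℂ) 0 (π.differentiableAt (x := Ψ 0)) hΨa.differentiableAt
      rw [Function.comp_def, π.fderiv] at this
      exact this
    rw [hcomp]
    rfl
  -- per-curve analysis
  have key : ∀ (z : Fin n → ℂ) (w : ℂ),
      ((fun t : ℂ => ψ (t • z, t ^ 2 * w) - Ψ (t • z, t ^ 2 * w)) =O[𝓝 0]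
        fun t : ℂ => t ^ (k - 1)) ∧
      ((fun t : ℂ => (ψ (t • z, t ^ 2 * w)).2 - (Ψ (t • z, t ^ 2 * w)).2) =O[𝓝 0]
        fun t : ℂ => t ^ k) ∧
      (∀ α : Fin n, AnalyticAt ℂ
        (fun t : ℂ => (ψ (t • z, t ^ 2 * w)).1 α - (Ψ (t • z, t ^ 2 * w)).1 α) 0) ∧
      AnalyticAt ℂ (fun t : ℂ => (ψ (t • z, t ^ 2 * w)).2 - (Ψ (t • z, t ^ 2 * w)).2) 0 := by
    intro z w
    set γ : ℂ → (Fin n → ℂ) × ℂ := fun t => (t • z, t ^ 2 * w) with hγdef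
    have hγa : AnalyticAt ℂ γ 0 :=
      ((analyticAt_id).smul analyticAt_const).prod (((analyticAt_id).pow 2).mul analyticAt_const)
    have hγ0 : γ 0 = 0 := by
      rw [hγdef]; simp
    have hγt : Tendsto γ (𝓝 0) (𝓝 0) := by
      have := hγa.continuousAt.tendsto
      rwa [hγ0] at this
    set c : ℂ → (Fin n → ℂ) × ℂ := fun t => ψ (γ t) with hcdef
    have hca : AnalyticAt ℂ c 0 := by
      have hψγ : AnalyticAt ℂ ψ (γ 0) := by rw [hγ0]; exact hψa
      have := hψγ.comp hγa
      simpa [Function.comp_def] using this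
    have hc0 : c 0 = 0 := by rw [hcdef]; simp only [hγ0, hψ0]
    have hct : Tendsto c (𝓝 0) (𝓝 0) := by
      have := hca.continuousAt.tendsto
      rwa [hc0] at this
    set u : ℂ → Fin n → ℂ := fun t => (c t).1 with hudef
    set v : ℂ → ℂ := fun t => (c t).2 with hvdef
    have hua : AnalyticAt ℂ u 0 := by
      have := ((ContinuousLinearMap.fst ℂ (Fin n → ℂ) ℂ).analyticAt (c 0)).comp hca
      simpa [Function.comp_def] using this
    have hva : AnalyticAt ℂ v 0 := by
      have := ((ContinuousLinearMap.snd ℂ (Fin n → ℂ) ℂ).analyticAt (c 0)).comp hca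
      simpa [Function.comp_def] using this
    have hu0 : u 0 = 0 := by rw [hudef]; simp only [hc0]; rfl
    have hv0 : v 0 = 0 := by rw [hvdef]; simp only [hc0]; rfl
    -- the curve derivative of γ at 0 is (z, 0)
    have hγ' : HasDerivAt γ ((z, 0) : (Fin n → ℂ) × ℂ) 0 := by
      have h1 : HasDerivAt (fun t : ℂ => t • z) z 0 := by
        have := (hasDerivAt_id (0 : ℂ)).smul_const z
        simpa using this
      have h2 : HasDerivAt (fun t : ℂ => t ^ 2 * w) 0 0 := by
        have := (hasDerivAt_pow 2 (0 : ℂ)).mul_const w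
        simpa using this
      exact h1.prodMk h2
    have hv1 : deriv v 0 = 0 := by
      have hψgd : DifferentiableAt ℂ (fun p => (ψ p).2) ((0 : (Fin n → ℂ) × ℂ)) := by
        have := ((ContinuousLinearMap.snd ℂ (Fin n → ℂ) ℂ).analyticAt (ψ 0)).comp hψa
        exact (by simpa [Function.comp_def] using this : AnalyticAt ℂ (fun p => (ψ p).2)
          (0 : (Fin n → ℂ) × ℂ)).differentiableAt
      have hψgd' : DifferentiableAt ℂ (fun p => (ψ p).2) (γ 0) := by rw [hγ0]; exact hψgd
      have hvd : HasDerivAt v (fderiv ℂ (fun p => (ψ p).2) (γ 0) ((z, 0) : (Fin n → ℂ) × ℂ)) 0 :=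
        hψgd'.hasFDerivAt.comp_hasDerivAt 0 hγ'
      rw [hvd.deriv]
      rw [hγ0]
      exact hψw z
    -- the error term ε
    set ε : ℂ → (Fin n → ℂ) × ℂ := fun t => φ (c t) - Φ (c t) with hεdef
    have hφfa : ∀ α : Fin n, AnalyticAt ℂ (fun p => (φ p).1 α - (Φ p).1 α)
        ((0 : (Fin n → ℂ) × ℂ)) := by
      intro α
      have h1 := (((ContinuousLinearMap.proj α).comp
        (ContinuousLinearMap.fst ℂ (Fin n → ℂ) ℂ)).analyticAt (φ 0)).comp hφa
      have h2 := (((ContinuousLinearMap.proj α).comp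
        (ContinuousLinearMap.fst ℂ (Fin n → ℂ) ℂ)).analyticAt (Φ 0)).comp hΦa
      exact ((by simpa [Function.comp_def] using h1 : AnalyticAt ℂ (fun p => (φ p).1 α)
        (0 : (Fin n → ℂ) × ℂ))).sub
        ((by simpa [Function.comp_def] using h2 : AnalyticAt ℂ (fun p => (Φ p).1 α)
        (0 : (Fin n → ℂ) × ℂ)))
    have hφga : AnalyticAt ℂ (fun p => (φ p).2 - (Φ p).2) ((0 : (Fin n → ℂ) × ℂ)) := by
      have h1 := ((ContinuousLinearMap.snd ℂ (Fin n → ℂ) ℂ).analyticAt (φ 0)).comp hφa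
      have h2 := ((ContinuousLinearMap.snd ℂ (Fin n → ℂ) ℂ).analyticAt (Φ 0)).comp hΦa
      exact ((by simpa [Function.comp_def] using h1 : AnalyticAt ℂ (fun p => (φ p).2)
        (0 : (Fin n → ℂ) × ℂ))).sub
        ((by simpa [Function.comp_def] using h2 : AnalyticAt ℂ (fun p => (Φ p).2)
        (0 : (Fin n → ℂ) × ℂ)))
    have hεf : ∀ α : Fin n, (fun t => (ε t).1 α) =O[𝓝 0] fun t : ℂ => t ^ (k - 1) := by
      intro α
      exact transfer (hφfa α) hk1 (h.1 α) hua hva hu0 hv0 hv1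
    have hεg : (fun t => (ε t).2) =O[𝓝 0] fun t : ℂ => t ^ k :=
      transfer hφga hk0 h.2 hua hva hu0 hv0 hv1
    have hεO : ε =O[𝓝 0] fun t : ℂ => t ^ (k - 1) := by
      have h1 : (fun t => (ε t).1) =O[𝓝 0] fun t : ℂ => t ^ (k - 1) := isBigO_pi.2 hεf
      have h2 : (fun t => (ε t).2) =O[𝓝 0] fun t : ℂ => t ^ (k - 1) :=
        hεg.trans (pow_isBigO_pow hk1k)
      exact h1.prod_left h2
    have hεt : Tendsto ε (𝓝 0) (𝓝 0) := hεO.trans_tendsto (pow_tendsto hk1)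
    -- the main eventual identity
    have hmain : ∀ᶠ t in 𝓝 (0 : ℂ), ψ (γ t) - Ψ (γ t) = Ψ (γ t - ε t) - Ψ (γ t) := by
      filter_upwards [hγt.eventually hφinv, hct.eventually hΦinv] with t h1 h2
      have e1 : φ (c t) = γ t := h1.2
      have e2 : Φ (c t) = γ t - ε t := by
        rw [hεdef]
        simp only
        rw [e1]
        abel
      have e3 : Ψ (γ t - ε t) = c t := by rw [← e2]; exact h2.1
      rw [e3]
    -- O(t) bounds for points
    have hγO : γ =O[𝓝 0] fun t : ℂ => t ^ 1 := by
      apply isBigO_of_vord hγa 1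
      intro j hj
      interval_cases j
      simpa [iteratedDeriv_zero] using hγ0
    have hγεO : (fun t => γ t - ε t) =O[𝓝 0] fun t : ℂ => t ^ 1 :=
      hγO.sub (hεO.trans (pow_isBigO_pow h1k1))
    have hγεt : Tendsto (fun t => γ t - ε t) (𝓝 0) (𝓝 0) :=
      hγεO.trans_tendsto (pow_tendsto one_pos)
    -- remainder
    set R : ℂ → (Fin n → ℂ) × ℂ :=
      fun t => Ψ (γ t - ε t) - Ψ (γ t) - L ((γ t - ε t) - γ t) with hRdef
    have hmaxO : (fun t => max ‖γ t - ε t‖ ‖γ t‖) =O[𝓝 0] fun t : ℂ => t ^ 1 := by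
      have := (hγεO.prod_left hγO).norm_left
      refine this.congr_left fun t => ?_
      rw [Prod.norm_def]
    have hRO : R =O[𝓝 0] fun t : ℂ => t ^ k := by
      have hb : (fun t => max ‖γ t - ε t‖ ‖γ t‖ * ‖ε t‖) =O[𝓝 0] fun t : ℂ => t ^ k := by
        have heqf : (fun t : ℂ => t ^ 1 * t ^ (k - 1)) = fun t : ℂ => t ^ k := by
          funext t
          rw [← pow_add]
          congr 1
          omega
        have := hmaxO.mul hεO.norm_left
        rwa [heqf] at this
      refine IsBigO.trans ?_ hb
      rw [isBigO_iff]
      refine ⟨C, ?_⟩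
      have hev1 : ∀ᶠ t in 𝓝 (0 : ℂ), ‖γ t - ε t‖ < r := by
        have := hγεt.eventually (Metric.ball_mem_nhds (0 : (Fin n → ℂ) × ℂ) hr)
        exact this.mono fun t ht => mem_ball_zero_iff.1 ht
      have hev2 : ∀ᶠ t in 𝓝 (0 : ℂ), ‖γ t‖ < r := by
        have := hγt.eventually (Metric.ball_mem_nhds (0 : (Fin n → ℂ) × ℂ) hr)
        exact this.mono fun t ht => mem_ball_zero_iff.1 ht
      filter_upwards [hev1, hev2] with t h1 h2
      have := hquad (γ t - ε t) (γ t) h1 h2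
      have heq : (γ t - ε t) - γ t = -ε t := by abel
      rw [heq] at this
      calc ‖R t‖ ≤ C * max ‖γ t - ε t‖ ‖γ t‖ * ‖-ε t‖ := by
            rw [hRdef]; simp only [heq]; exact this
        _ = C * ‖max ‖γ t - ε t‖ ‖γ t‖ * ‖ε t‖‖ := by
            rw [norm_neg]
            rw [Real.norm_eq_abs, _root_.abs_of_nonneg (by positivity)]
            ring
    -- the Ψ-curve is analytic as well
    have hΨca : AnalyticAt ℂ (fun t => Ψ (γ t)) 0 := by
      have hΨγ : AnalyticAt ℂ Ψ (γ 0) := by rw [hγ0]; exact hΨa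
      have := hΨγ.comp hγa
      simpa [Function.comp_def] using this
    have heqneg : ∀ t : ℂ, (γ t - ε t) - γ t = -ε t := fun t => by abel
    -- the difference bound, O(t^(k-1))
    have hLε : (fun t => L (-ε t)) =O[𝓝 0] fun t : ℂ => t ^ (k - 1) :=
      (L.isBigO_comp (fun t => -ε t) (𝓝 0)).trans hεO.neg_left
    have hIdent : ∀ᶠ t in 𝓝 (0 : ℂ), ψ (γ t) - Ψ (γ t) = R t + L (-ε t) := by
      filter_upwards [hmain] with t ht
      rw [ht, hRdef]
      simp only
      rw [heqneg t]
      abel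
    have hdiffO : (fun t => ψ (γ t) - Ψ (γ t)) =O[𝓝 0] fun t : ℂ => t ^ (k - 1) := by
      have hsum : (fun t => R t + L (-ε t)) =O[𝓝 0] fun t : ℂ => t ^ (k - 1) :=
        (hRO.trans (pow_isBigO_pow hk1k)).add hLε
      exact Filter.EventuallyEq.trans_isBigO hIdent hsum
    -- the g-component bound, O(t^k)
    have hR2 : (fun t => (R t).2) =O[𝓝 0] fun t : ℂ => t ^ k :=
      (isBigO_of_le (𝓝 0) fun t => norm_snd_le (R t)).trans hRO
    have hL2 : (fun t => (L (-ε t)).2) =O[𝓝 0] fun t : ℂ => t ^ k := by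
      have hpt : ∀ t : ℂ, (L (-ε t)).2
          = fderiv ℂ (fun p => (Ψ p).2) 0 (0, 1) * (-(ε t).2) := by
        intro t
        rw [hΨgL, hΨdec]
        simp only [Prod.snd_neg]
        ring
      have hbig := (hεg.neg_left).const_mul_left (fderiv ℂ (fun p => (Ψ p).2) 0 (0, 1))
      exact hbig.congr_left fun t => (hpt t).symm
    have hgO : (fun t => (ψ (γ t)).2 - (Ψ (γ t)).2) =O[𝓝 0] fun t : ℂ => t ^ k := by
      have hsum := hR2.add hL2
      refine EventuallyEq.trans_isBigO ?_ hsum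
      filter_upwards [hIdent] with t ht
      calc (ψ (γ t)).2 - (Ψ (γ t)).2 = (ψ (γ t) - Ψ (γ t)).2 := rfl
        _ = (R t + L (-ε t)).2 := by rw [ht]
        _ = (R t).2 + (L (-ε t)).2 := rfl
    -- analyticity of the target curves
    set d : ℂ → (Fin n → ℂ) × ℂ := fun t => Ψ (γ t) with hddef
    have hda : AnalyticAt ℂ d 0 := hΨca
    have htfa : ∀ α : Fin n, AnalyticAt ℂ
        (fun t : ℂ => (c t).1 α - (d t).1 α) 0 := by
      intro α
      have h1 := (((ContinuousLinearMap.proj α).comp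
        (ContinuousLinearMap.fst ℂ (Fin n → ℂ) ℂ)).analyticAt (c 0)).comp hca
      have h2 := (((ContinuousLinearMap.proj α).comp
        (ContinuousLinearMap.fst ℂ (Fin n → ℂ) ℂ)).analyticAt (d 0)).comp hda
      exact ((by simpa [Function.comp_def] using h1 : AnalyticAt ℂ
        (fun t : ℂ => (c t).1 α) 0)).sub
        ((by simpa [Function.comp_def] using h2 : AnalyticAt ℂ
        (fun t : ℂ => (d t).1 α) 0))
    have htga : AnalyticAt ℂ (fun t : ℂ => (c t).2 - (d t).2) 0 := by
      have h1 := ((ContinuousLinearMap.snd ℂ (Fin n → ℂ) ℂ).analyticAt (c 0)).comp hca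
      have h2 := ((ContinuousLinearMap.snd ℂ (Fin n → ℂ) ℂ).analyticAt (d 0)).comp hda
      exact ((by simpa [Function.comp_def] using h1 : AnalyticAt ℂ
        (fun t : ℂ => (c t).2) 0)).sub
        ((by simpa [Function.comp_def] using h2 : AnalyticAt ℂ
        (fun t : ℂ => (d t).2) 0))
    refine ⟨?_, ?_, ?_, ?_⟩
    · simpa only [hγdef] using hdiffO
    · simpa only [hγdef] using hgO
    · intro α
      simpa only [hcdef, hddef, hγdef] using htfa α
    · simpa only [hcdef, hddef, hγdef] using htga
  constructor
  · intro α z w j hj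
    have hb : (fun t : ℂ => (ψ (t • z, t ^ 2 * w)).1 α - (Ψ (t • z, t ^ 2 * w)).1 α)
        =O[𝓝 0] fun t : ℂ => t ^ (k - 1) := by
      refine IsBigO.trans ?_ (key z w).1
      apply isBigO_of_le (𝓝 0)
      intro t
      show ‖(ψ (t • z, t ^ 2 * w) - Ψ (t • z, t ^ 2 * w)).1 α‖
        ≤ ‖ψ (t • z, t ^ 2 * w) - Ψ (t • z, t ^ 2 * w)‖
      exact (norm_le_pi_norm _ α).trans (norm_fst_le _)
    exact vord_of_isBigO ((key z w).2.2.1 α) (k - 1) hb j hj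
  · intro z w j hj
    exact vord_of_isBigO (key z w).2.2.2 k (key z w).2.1 j hj
end Aux
end

section
/- Let k ≥ 3. Let F(z,z̄,u) be a real-valued real-analytic function near the origin of ℂ^n × ℝ with F(0) = 0 and dF(0) = 0, and let M = {(z,w) ∈ ℂ^n × ℂ : Im w = F(z,z̄,Re w)} near the origin. Let φ₁ = (f,g) and φ₂ = (f′,g′) be biholomorphic map germs at the origin fixing the origin with f(0,0) = 0, g(0,0) = 0, (∂g/∂z^α)(0,0) = 0 and f′(0,0) = 0, g′(0,0) = 0, (∂g′/∂z^α)(0,0) = 0 for all α, and suppose φ₁ = φ₂ + O_×(k+1). Suppose that near the origin φ₁(M) = {Im w = G(z,z̄,Re w)} and φ₂(M) = {Im w = G′(z,z̄,Re w)} for real-analytic G, G′ vanishing to second order at 0. Then G = G′ + O(k+1), i.e. every Taylor coefficient of G − G′ at the origin on a monomial of weight ≤ k vanishes, where each z^α and z̄^α has weight 1 and u = Re w has weight 2. -/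
open Complex

open Filter Asymptotics Metric Set
open scoped Topology Nat

section Helpers
private lemma fact_smul_eq_zero' {E : Type*} [AddCommGroup E] [Module ℝ E] {n : ℕ} {c : E}
    (h : n ! • c = 0) : c = 0 := by
  have h2 : ((n !) : ℝ) • c = 0 := by rw [Nat.cast_smul_eq_nsmul]; exact h
  have := congrArg (fun x => ((n !) : ℝ)⁻¹ • x) h2
  simpa [smul_smul, inv_mul_cancel₀ (show ((n !) : ℝ) ≠ 0 by exact_mod_cast n.factorial_ne_zero)]
    using this

private lemma dict {𝕜 : Type*} [NontriviallyNormedField 𝕜] {E : Type*} [NormedAddCommGroup E]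
    [NormedSpace 𝕜 E] [CompleteSpace E] {f : 𝕜 → E} {p : FormalMultilinearSeries 𝕜 𝕜 E}
    (hp : HasFPowerSeriesAt f p 0) (n : ℕ) :
    iteratedDeriv n f 0 = n ! • p.coeff n := by
  obtain ⟨r, hr⟩ := hp
  have h := hr.factorial_smul (1 : 𝕜) n
  rw [iteratedDeriv_eq_iteratedFDeriv, ← h]
  rfl

/-- (a') : analytic + vanishing derivatives gives big-O. -/

private lemma isBigO_of_derivs {E : Type*} [NormedAddCommGroup E] [NormedSpace ℝ E]
    [CompleteSpace E] {𝕜 : Type*} [RCLike 𝕜] [NormedSpace 𝕜 E] {f : 𝕜 → E}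
    (hf : AnalyticAt 𝕜 f 0) (m : ℕ) (hd : ∀ j < m, iteratedDeriv j f 0 = 0) :
    f =O[𝓝 0] fun t => ‖t‖ ^ m := by
  obtain ⟨p, hp⟩ := hf
  have hc : ∀ j < m, p.coeff j = 0 := by
    intro j hj
    have h1 := (dict hp j).symm.trans (hd j hj)
    exact fact_smul_eq_zero' h1
  have h2 := hp.isBigO_sub_partialSum_pow m
  have h3 : ∀ y : 𝕜, p.partialSum m y = 0 := by
    intro y
    rw [FormalMultilinearSeries.partialSum]
    refine Finset.sum_eq_zero fun k hk => ?_
    rw [FormalMultilinearSeries.apply_eq_pow_smul_coeff, hc k (Finset.mem_range.1 hk), smul_zero]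
  simp only [h3, zero_add, sub_zero] at h2
  exact h2

/-- (a) : analytic + big-O gives vanishing derivatives. -/

private lemma derivs_of_isBigO {E : Type*} [NormedAddCommGroup E] [NormedSpace ℝ E]
    [CompleteSpace E] {f : ℝ → E}
    (hf : AnalyticAt ℝ f 0) (m : ℕ) (hO : f =O[𝓝 0] fun t => ‖t‖ ^ m) :
    ∀ j < m, iteratedDeriv j f 0 = 0 := by
  obtain ⟨p, hp⟩ := hf
  have key : ∀ j, j < m → p.coeff j = 0 := by
    intro j
    induction j using Nat.strong_induction_on with
    | _ j ih =>
      intro hjm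
      have hps : ∀ y : ℝ, p.partialSum (j + 1) y = y ^ j • p.coeff j := by
        intro y
        rw [FormalMultilinearSeries.partialSum, Finset.sum_range_succ,
          Finset.sum_eq_zero fun k hk => ?_, zero_add,
          FormalMultilinearSeries.apply_eq_pow_smul_coeff]
        rw [FormalMultilinearSeries.apply_eq_pow_smul_coeff,
          ih k (Finset.mem_range.1 hk) ((Finset.mem_range.1 hk).trans hjm), smul_zero]
      have h1 := hp.isBigO_sub_partialSum_pow (j + 1)
      simp only [hps, zero_add] at h1
      have hmono : (fun t : ℝ => ‖t‖ ^ m) =O[𝓝 0] fun t => ‖t‖ ^ (j + 1) := by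
        rw [isBigO_iff]
        refine ⟨1, ?_⟩
        filter_upwards [Metric.ball_mem_nhds (0 : ℝ) one_pos] with t ht
        rw [mem_ball, dist_zero_right] at ht
        simp only [one_mul, Real.norm_eq_abs, _root_.abs_pow, _root_.abs_abs]
        exact pow_le_pow_of_le_one (abs_nonneg t) (by simpa [Real.norm_eq_abs] using ht.le) hjm
      have h2 : f =O[𝓝 0] fun y : ℝ => ‖y‖ ^ (j + 1) := hO.trans hmono
      have h3 : (fun y : ℝ => y ^ j • p.coeff j) =O[𝓝 0] fun y => ‖y‖ ^ (j + 1) := by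
        have := h2.sub h1
        simpa using this
      rw [isBigO_iff] at h3
      obtain ⟨C, hC⟩ := h3
      have hev : ∀ᶠ y in 𝓝[>] (0 : ℝ), ‖p.coeff j‖ ≤ C * y := by
        filter_upwards [nhdsWithin_le_nhds hC, self_mem_nhdsWithin] with y hy hy0
        rw [mem_Ioi] at hy0
        simp only [norm_smul, norm_pow, Real.norm_eq_abs, _root_.abs_pow, _root_.abs_abs,
          abs_of_pos hy0] at hy
        have hyj : (0 : ℝ) < y ^ j := pow_pos hy0 j
        have h5 : ‖p.coeff j‖ * y ^ j ≤ (C * y) * y ^ j := by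
          rw [pow_succ] at hy; nlinarith [hy]
        exact le_of_mul_le_mul_right h5 hyj
      have hlim : Filter.Tendsto (fun y : ℝ => C * y) (𝓝[>] (0 : ℝ)) (𝓝 0) := by
        have : Filter.Tendsto (fun y : ℝ => C * y) (𝓝 (0 : ℝ)) (𝓝 (C * 0)) :=
          (continuous_const.mul continuous_id).tendsto 0
        simpa using this.mono_left nhdsWithin_le_nhds
      have : ‖p.coeff j‖ ≤ 0 := ge_of_tendsto hlim hev
      simpa using le_antisymm this (norm_nonneg _)
  intro j hj
  rw [dict hp j, key j hj, smul_zero]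

private lemma schwarz_pow : ∀ (m : ℕ) (f : ℂ → ℂ) (M r : ℝ), 0 < r →
    DifferentiableOn ℂ f (ball 0 r) → (∀ τ ∈ ball (0 : ℂ) r, ‖f τ‖ ≤ M) →
    (∀ j < m, iteratedDeriv j f 0 = 0) →
    ∀ τ ∈ ball (0 : ℂ) r, ‖f τ‖ ≤ M / r ^ m * ‖τ‖ ^ m := by
  intro m
  induction m with
  | zero => intro f M r hr hd hM _ τ hτ; simpa using hM τ hτ
  | succ m ih =>
    intro f M r hr hd hM hder τ hτ
    have h0 : f 0 = 0 := by simpa using hder 0 m.succ_pos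
    set g := dslope f 0 with hg
    have hgd : DifferentiableOn ℂ g (ball 0 r) :=
      (differentiableOn_dslope (ball_mem_nhds _ hr)).mpr hd
    have hM0 : 0 ≤ M := le_trans (norm_nonneg _) (hM 0 (mem_ball_self hr))
    have hgM : ∀ σ ∈ ball (0 : ℂ) r, ‖g σ‖ ≤ M / r := by
      intro σ hσ
      have key : ∀ ε : ℝ, 0 < ε → ‖g σ‖ ≤ (M + ε) / r := by
        intro ε hε
        have maps : MapsTo f (ball 0 r) (ball (f 0) (M + ε)) := fun x hx => by
          rw [mem_ball, dist_eq_norm, h0, sub_zero]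
          exact lt_of_le_of_lt (hM x hx) (by linarith)
        exact Complex.norm_dslope_le_div_of_mapsTo_ball hd (maps.mono_right ball_subset_closedBall) hσ
      have hlim : Filter.Tendsto (fun ε : ℝ => (M + ε) / r) (𝓝[>] (0 : ℝ)) (𝓝 (M / r)) := by
        have : Filter.Tendsto (fun ε : ℝ => (M + ε) / r) (𝓝 (0 : ℝ)) (𝓝 ((M + 0) / r)) := by
          exact ((continuous_const.add continuous_id).div_const r).tendsto 0
        simpa using this.mono_left nhdsWithin_le_nhds
      exact ge_of_tendsto hlim (eventually_nhdsWithin_of_forall fun ε hε => key ε hε)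
    have hfa : AnalyticAt ℂ f 0 := hd.analyticAt (ball_mem_nhds _ hr)
    obtain ⟨p, hp⟩ := hfa
    have hq : HasFPowerSeriesAt g p.fslope 0 := hp.has_fpower_series_dslope_fslope
    have hgder : ∀ j < m, iteratedDeriv j g 0 = 0 := by
      intro j hj
      rw [dict hq j, FormalMultilinearSeries.coeff_fslope]
      have h1 : iteratedDeriv (j + 1) f 0 = 0 := hder _ (Nat.succ_lt_succ hj)
      rw [dict hp (j + 1)] at h1
      rw [fact_smul_eq_zero' h1, smul_zero]
    have hb := ih g (M / r) r hr hgd hgM hgder τ hτ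
    have hfg : f τ = τ • g τ := by
      have h2 := sub_smul_dslope f 0 τ
      simp only [sub_zero, h0] at h2
      rw [← h2, hg]
    calc ‖f τ‖ = ‖τ‖ * ‖g τ‖ := by rw [hfg, norm_smul]
      _ ≤ ‖τ‖ * (M / r / r ^ m * ‖τ‖ ^ m) := by
          exact mul_le_mul_of_nonneg_left hb (norm_nonneg τ)
      _ = M / r ^ (m + 1) * ‖τ‖ ^ (m + 1) := by
          rw [div_div, ← pow_succ']
          ring

private lemma lemA {n m : ℕ} (hm : 0 < m) {h : (Fin n → ℂ) × ℂ → ℂ} (hh : AnalyticAt ℂ h 0)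
    (hyp : ∀ (z : Fin n → ℂ) (w : ℂ) (j : ℕ), j < m →
      iteratedDeriv j (fun t : ℂ => h (t • z, t ^ 2 * w)) 0 = 0)
    {p : ℝ → (Fin n → ℂ) × ℂ}
    (hp1 : (fun t => (p t).1) =O[𝓝 0] fun t : ℝ => ‖t‖)
    (hp2 : (fun t => (p t).2) =O[𝓝 0] fun t : ℝ => ‖t‖ ^ 2) :
    (fun t => h (p t)) =O[𝓝 0] fun t : ℝ => ‖t‖ ^ m := by
  -- a ball where h is analytic and bounded
  have h1 : ∀ᶠ x in 𝓝 (0 : (Fin n → ℂ) × ℂ), AnalyticAt ℂ h x := hh.eventually_analyticAt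
  have h2 : ∀ᶠ x in 𝓝 (0 : (Fin n → ℂ) × ℂ), h x ∈ closedBall (h 0) 1 :=
    hh.continuousAt (Metric.closedBall_mem_nhds _ one_pos)
  set M : ℝ := ‖h 0‖ + 1 with hM
  have h3 : ∀ᶠ x in 𝓝 (0 : (Fin n → ℂ) × ℂ), AnalyticAt ℂ h x ∧ ‖h x‖ ≤ M := by
    filter_upwards [h1, h2] with x hx1 hx2
    refine ⟨hx1, ?_⟩
    rw [mem_closedBall, dist_eq_norm] at hx2
    calc ‖h x‖ = ‖h x - h 0 + h 0‖ := by ring_nf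
      _ ≤ ‖h x - h 0‖ + ‖h 0‖ := norm_add_le _ _
      _ ≤ 1 + ‖h 0‖ := by linarith
      _ = M := by rw [hM]; ring
  rw [Metric.eventually_nhds_iff] at h3
  obtain ⟨ρ, hρ, hball⟩ := h3
  -- eventual bounds on the curve
  rw [isBigO_iff] at hp1 hp2
  obtain ⟨C₁, ev1⟩ := hp1
  obtain ⟨C₂, ev2⟩ := hp2
  have ev12 := ev1.and ev2
  rw [Metric.eventually_nhds_iff] at ev12
  obtain ⟨r₀, hr₀, hcurve⟩ := ev12
  set C : ℝ := max (max C₁ C₂) 1 with hC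
  have hC1 : (1 : ℝ) ≤ C := le_max_right _ _
  have hC0 : (0 : ℝ) < C := lt_of_lt_of_le one_pos hC1
  have hcb : ∀ t : ℝ, |t| < r₀ → ‖(p t).1‖ ≤ C * |t| ∧ ‖(p t).2‖ ≤ C * |t| ^ 2 := by
    intro t ht
    rcases hcurve (show dist t 0 < r₀ by rwa [Real.dist_eq, sub_zero]) with ⟨e1, e2⟩
    simp only [Real.norm_eq_abs, _root_.abs_abs, _root_.abs_pow] at e1 e2
    constructor
    · calc ‖(p t).1‖ ≤ C₁ * |t| := e1
        _ ≤ C * |t| := mul_le_mul_of_nonneg_right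
            (le_trans (le_max_left _ _) (le_max_left _ _)) (abs_nonneg t)
    · calc ‖(p t).2‖ ≤ C₂ * |t| ^ 2 := e2
        _ ≤ C * |t| ^ 2 := mul_le_mul_of_nonneg_right
            (le_trans (le_max_right _ _) (le_max_left _ _)) (pow_nonneg (abs_nonneg t) 2)
  set r : ℝ := min 1 (ρ / (2 * C)) with hrdef
  have hr : 0 < r := lt_min one_pos (div_pos hρ (by linarith))
  have hrle1 : r ≤ 1 := min_le_left _ _
  have hrρ : r * C ≤ ρ / 2 := by
    have h4 : r ≤ ρ / (2 * C) := min_le_right _ _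
    calc r * C ≤ (ρ / (2 * C)) * C := mul_le_mul_of_nonneg_right h4 hC0.le
      _ = ρ / 2 := by field_simp
  -- the membership estimate
  have hmem : ∀ (z : Fin n → ℂ) (w : ℂ), ‖z‖ ≤ C → ‖w‖ ≤ C → ∀ τ : ℂ, ‖τ‖ < r →
      dist ((τ • z, τ ^ 2 * w) : (Fin n → ℂ) × ℂ) 0 < ρ := by
    intro z w hz hw τ hτ
    have hτ1 : ‖τ‖ ≤ 1 := le_of_lt (lt_of_lt_of_le hτ hrle1)
    have b1 : ‖τ • z‖ ≤ r * C := by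
      rw [norm_smul]
      exact mul_le_mul hτ.le hz (norm_nonneg z) hr.le
    have b2 : ‖τ ^ 2 * w‖ ≤ r * C := by
      rw [norm_mul, norm_pow]
      have h5 : ‖τ‖ ^ 2 * ‖w‖ ≤ ‖τ‖ * ‖w‖ := by
        have h6 := mul_le_of_le_one_left (norm_nonneg τ) hτ1
        nlinarith [norm_nonneg w, norm_nonneg τ]
      exact h5.trans (mul_le_mul hτ.le hw (norm_nonneg w) hr.le)
    rw [Prod.dist_eq, max_lt_iff]
    constructor
    · show dist (τ • z) 0 < ρ
      rw [dist_zero_right]; exact lt_of_le_of_lt b1 (by linarith)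
    · show dist (τ ^ 2 * w) 0 < ρ
      rw [dist_zero_right]; exact lt_of_le_of_lt b2 (by linarith)
  -- the eventual bound
  rw [isBigO_iff]
  refine ⟨M / r ^ m, ?_⟩
  have hsmall : ∀ᶠ t : ℝ in 𝓝 0, |t| < min r r₀ := by
    have := Metric.ball_mem_nhds (0 : ℝ) (lt_min hr hr₀)
    filter_upwards [this] with t ht
    rwa [mem_ball, Real.dist_eq, sub_zero] at ht
  filter_upwards [hsmall] with t ht
  rw [lt_min_iff] at ht
  obtain ⟨htr, htr₀⟩ := ht
  have hMpos : 0 < M := by positivity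
  have hRHS : M / r ^ m * ‖‖t‖ ^ m‖ = M / r ^ m * |t| ^ m := by
    rw [Real.norm_eq_abs, Real.norm_eq_abs, _root_.abs_pow, _root_.abs_abs]
  rcases eq_or_ne t 0 with rfl | htne
  · -- t = 0 : p 0 = 0 and h 0 = 0
    have hb := hcb 0 (by simpa using hr₀)
    have hp10 : (p 0).1 = 0 := norm_le_zero_iff.mp (by simpa using hb.1)
    have hp20 : (p 0).2 = 0 := norm_le_zero_iff.mp (by simpa using hb.2)
    have hp0 : p 0 = 0 := Prod.ext hp10 hp20
    have h00 : h 0 = 0 := by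
      have := hyp 0 0 0 hm
      simpa [Prod.mk_zero_zero] using this
    rw [hp0, h00]
    simp [norm_zero]
    positivity
  · -- t ≠ 0
    set z : Fin n → ℂ := ((t : ℂ))⁻¹ • (p t).1 with hzdef
    set w : ℂ := ((t : ℂ) ^ 2)⁻¹ * (p t).2 with hwdef
    have htC : ((t : ℂ)) ≠ 0 := by exact_mod_cast htne
    have hz : ‖z‖ ≤ C := by
      rw [hzdef, norm_smul, norm_inv, Complex.norm_real, Real.norm_eq_abs]
      have := (hcb t htr₀).1
      rw [inv_mul_le_iff₀ (by positivity), mul_comm]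
      exact this
    have hw : ‖w‖ ≤ C := by
      rw [hwdef, norm_mul, norm_inv, norm_pow, Complex.norm_real, Real.norm_eq_abs]
      have := (hcb t htr₀).2
      rw [inv_mul_le_iff₀ (by positivity), mul_comm]
      exact this
    set ff : ℂ → ℂ := fun τ => h (τ • z, τ ^ 2 * w) with hφdef
    have hφd : DifferentiableOn ℂ ff (ball 0 r) := by
      intro τ hτ
      rw [mem_ball, dist_zero_right] at hτ
      have hana := (hball (hmem z w hz hw τ hτ)).1
      have hinner : DifferentiableAt ℂ (fun τ : ℂ => ((τ • z, τ ^ 2 * w) : (Fin n → ℂ) × ℂ)) τ :=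
        ((differentiableAt_id (𝕜 := ℂ) (x := τ)).smul_const z).prodMk (((differentiableAt_id (𝕜 := ℂ) (x := τ)).pow 2).mul_const w)
      exact (hana.differentiableAt.comp τ hinner).differentiableWithinAt
    have hφM : ∀ τ ∈ ball (0 : ℂ) r, ‖ff τ‖ ≤ M := by
      intro τ hτ
      rw [mem_ball, dist_zero_right] at hτ
      exact (hball (hmem z w hz hw τ hτ)).2
    have hres := schwarz_pow m ff M r hr hφd hφM (hyp z w) (t : ℂ)
      (by rw [mem_ball, dist_zero_right, Complex.norm_real, Real.norm_eq_abs]; exact htr)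
    have hval : ff (t : ℂ) = h (p t) := by
      have e1 : ((t : ℂ)) • z = (p t).1 := by
        rw [hzdef, smul_smul, mul_inv_cancel₀ htC, one_smul]
      have e2 : ((t : ℂ)) ^ 2 * w = (p t).2 := by
        rw [hwdef, ← mul_assoc, mul_inv_cancel₀ (pow_ne_zero 2 htC), one_mul]
      show h (((t : ℂ)) • z, ((t : ℂ)) ^ 2 * w) = h (p t)
      rw [e1, e2]
    rw [hval] at hres
    rw [hRHS]
    calc ‖h (p t)‖ ≤ M / r ^ m * ‖(t : ℂ)‖ ^ m := hres
      _ = M / r ^ m * |t| ^ m := by rw [Complex.norm_real, Real.norm_eq_abs]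

private lemma normpow_mono {a b : ℕ} (hba : b ≤ a) :
    (fun t : ℝ => ‖t‖ ^ a) =O[𝓝 0] fun t : ℝ => ‖t‖ ^ b := by
  rw [isBigO_iff]
  refine ⟨1, ?_⟩
  filter_upwards [Metric.ball_mem_nhds (0 : ℝ) one_pos] with t ht
  rw [mem_ball, Real.dist_eq, sub_zero] at ht
  simp only [one_mul, Real.norm_eq_abs, _root_.abs_pow, _root_.abs_abs]
  exact pow_le_pow_of_le_one (abs_nonneg t) ht.le hba

/-- difference bound through a function with vanishing differential at 0. -/

private lemma lemB {E : Type*} [NormedAddCommGroup E] [NormedSpace ℝ E] [CompleteSpace E]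
    {G : E → ℝ} (hG : AnalyticAt ℝ G 0) (hdG : fderiv ℝ G 0 = 0) {P Q : ℝ → E} {k : ℕ}
    (hP : P =O[𝓝 0] fun t : ℝ => ‖t‖) (hQ : Q =O[𝓝 0] fun t : ℝ => ‖t‖)
    (hPQ : (fun t => P t - Q t) =O[𝓝 0] fun t : ℝ => ‖t‖ ^ k) :
    (fun t => G (P t) - G (Q t)) =O[𝓝 0] fun t : ℝ => ‖t‖ ^ (k + 1) := by
  -- the gradient is O(q) near 0
  have hfd : AnalyticAt ℝ (fderiv ℝ G) 0 := hG.fderiv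
  have hOgrad : (fun q : E => fderiv ℝ G q) =O[𝓝 0] fun q : E => q := by
    have h1 := hfd.differentiableAt.hasFDerivAt.isBigO_sub
    simpa [hdG] using h1
  rw [isBigO_iff] at hOgrad
  obtain ⟨L₀, hL₀⟩ := hOgrad
  set L : ℝ := max L₀ 1 with hLdef
  have hL1 : (1 : ℝ) ≤ L := le_max_right _ _
  have hLpos : (0 : ℝ) < L := lt_of_lt_of_le one_pos hL1
  have hLev : ∀ᶠ q : E in 𝓝 0, ‖fderiv ℝ G q‖ ≤ L * ‖q‖ := by
    filter_upwards [hL₀] with q hq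
    exact hq.trans (mul_le_mul_of_nonneg_right (le_max_left _ _) (norm_nonneg q))
  have hdiffev : ∀ᶠ q : E in 𝓝 0, DifferentiableAt ℝ G q := by
    filter_upwards [hG.eventually_analyticAt] with q hq using hq.differentiableAt
  have hcomb := hdiffev.and hLev
  rw [Metric.eventually_nhds_iff] at hcomb
  obtain ⟨ρ, hρ, hballE⟩ := hcomb
  -- eventual bounds for the curves
  rw [isBigO_iff] at hP hQ hPQ
  obtain ⟨C₁, e1⟩ := hP
  obtain ⟨C₂, e2⟩ := hQ
  obtain ⟨C₃, e3⟩ := hPQ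
  set C : ℝ := max (max C₁ C₂) 1 with hCdef
  have hC1 : (1 : ℝ) ≤ C := le_max_right _ _
  have hCpos : (0 : ℝ) < C := lt_of_lt_of_le one_pos hC1
  set C₄ : ℝ := max C₃ 0 with hC4def
  have hC₄ : (0:ℝ) ≤ C₄ := le_max_right _ _
  rw [isBigO_iff]
  refine ⟨L * C * C₄, ?_⟩
  have hsm : ∀ᶠ t : ℝ in 𝓝 0, |t| < min 1 (ρ / (2 * C)) := by
    have hpos : (0 : ℝ) < min 1 (ρ / (2 * C)) := lt_min one_pos (div_pos hρ (by linarith))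
    filter_upwards [Metric.ball_mem_nhds (0 : ℝ) hpos] with t ht
    rwa [mem_ball, Real.dist_eq, sub_zero] at ht
  filter_upwards [e1, e2, e3, hsm] with t h1 h2 h3 hts
  rw [lt_min_iff] at hts
  obtain ⟨ht1, htρ⟩ := hts
  simp only [Real.norm_eq_abs, _root_.abs_abs, _root_.abs_pow] at h1 h2 h3 ⊢
  -- bounds
  have hb1 : ‖P t‖ ≤ C * |t| := h1.trans (mul_le_mul_of_nonneg_right
    ((le_max_left _ _).trans (le_max_left _ _)) (abs_nonneg t))
  have hb2 : ‖Q t‖ ≤ C * |t| := h2.trans (mul_le_mul_of_nonneg_right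
    ((le_max_right _ _).trans (le_max_left _ _)) (abs_nonneg t))
  have hb3 : ‖P t - Q t‖ ≤ C₄ * |t| ^ k := h3.trans (mul_le_mul_of_nonneg_right
    (le_max_left _ _) (pow_nonneg (abs_nonneg t) k))
  have hballmem : ∀ x : E, x ∈ closedBall (0 : E) (C * |t|) → DifferentiableAt ℝ G x ∧
      ‖fderiv ℝ G x‖ ≤ L * (C * |t|) := by
    intro x hx
    rw [mem_closedBall, dist_zero_right] at hx
    have hxρ : dist x 0 < ρ := by
      rw [dist_zero_right]
      have : C * |t| < ρ := by
        have h6 : |t| < ρ / (2 * C) := htρ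
        calc C * |t| < C * (ρ / (2 * C)) := by
              exact mul_lt_mul_of_pos_left h6 hCpos
          _ = ρ / 2 := by field_simp
          _ < ρ := by linarith
      linarith
    refine ⟨(hballE hxρ).1, ?_⟩
    exact (hballE hxρ).2.trans (mul_le_mul_of_nonneg_left hx hLpos.le)
  have hPmem : P t ∈ closedBall (0 : E) (C * |t|) := by
    rw [mem_closedBall, dist_zero_right]; exact hb1
  have hQmem : Q t ∈ closedBall (0 : E) (C * |t|) := by
    rw [mem_closedBall, dist_zero_right]; exact hb2
  have hmvt := (convex_closedBall (0 : E) (C * |t|)).norm_image_sub_le_of_norm_fderiv_le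
    (fun x hx => (hballmem x hx).1) (fun x hx => (hballmem x hx).2) hQmem hPmem
  calc ‖G (P t) - G (Q t)‖ ≤ L * (C * |t|) * ‖P t - Q t‖ := hmvt
    _ ≤ L * (C * |t|) * (C₄ * |t| ^ k) := by
        exact mul_le_mul_of_nonneg_left hb3 (by positivity)
    _ = L * C * C₄ * (|t| * |t| ^ k) := by ring
    _ = L * C * C₄ * |t| ^ (k + 1) := by rw [pow_succ']

private lemma isBigO_norm_id_of_hasDerivAt {E : Type*} [NormedAddCommGroup E]
    [NormedSpace ℝ E] {f : ℝ → E} {v : E} (hf : HasDerivAt f v 0) (h0 : f 0 = 0) :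
    f =O[𝓝 0] fun t : ℝ => ‖t‖ := by
  have h1 := hf.hasFDerivAt.isBigO_sub
  simp only [h0, sub_zero] at h1
  exact h1.norm_right

end Helpers

/-- A real-analytic-germ `G(z, z̄, u)` is `O(m)` in the weighted sense
(`z^α, z̄^α` of weight 1, `u` of weight 2) if all Taylor coefficients at the origin
on monomials of weight `< m` vanish; equivalently, for every `(z,u)` the
one-variable function `t ↦ G(tz, t²u)` has vanishing derivatives at `0` up to
order `m − 1`. -/
def wBigOR (n m : ℕ) (G : (Fin n → ℂ) → ℝ → ℝ) : Prop :=
  ∀ (z : Fin n → ℂ) (u : ℝ) (j : ℕ), j < m →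
    iteratedDeriv j (fun t : ℝ => G (t • z) (t ^ 2 * u)) 0 = 0

/-- Let `M = {Im w = F(z, z̄, Re w)}` with `F(0) = 0`, `dF(0) = 0`.
If two biholomorphic normalizing-type germs `φ₁, φ₂` (fixing `0`, with the usual
first-order conditions on the `ℂ`-component) agree up to `O_×(k+1)` and map `M` to
`{Im w = G}` resp. `{Im w = G′}` near the origin, then `G = G′ + O(k+1)`. -/
theorem stmt7 (n k : ℕ) (hk : 3 ≤ k)
    (F G G' : (Fin n → ℂ) → ℝ → ℝ)
    (hFa : AnalyticAt ℝ (fun q : (Fin n → ℂ) × ℝ => F q.1 q.2) 0)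
    (hF0 : F 0 0 = 0)
    (hdF : fderiv ℝ (fun q : (Fin n → ℂ) × ℝ => F q.1 q.2) 0 = 0)
    (hGa : AnalyticAt ℝ (fun q : (Fin n → ℂ) × ℝ => G q.1 q.2) 0)
    (hG0 : G 0 0 = 0)
    (hdG : fderiv ℝ (fun q : (Fin n → ℂ) × ℝ => G q.1 q.2) 0 = 0)
    (hG'a : AnalyticAt ℝ (fun q : (Fin n → ℂ) × ℝ => G' q.1 q.2) 0)
    (hG'0 : G' 0 0 = 0)
    (hdG' : fderiv ℝ (fun q : (Fin n → ℂ) × ℝ => G' q.1 q.2) 0 = 0)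
    (φ₁ φ₂ ψ₁ ψ₂ : (Fin n → ℂ) × ℂ → (Fin n → ℂ) × ℂ)
    (hφ₁a : AnalyticAt ℂ φ₁ 0) (hφ₂a : AnalyticAt ℂ φ₂ 0)
    (hψ₁a : AnalyticAt ℂ ψ₁ 0) (hψ₂a : AnalyticAt ℂ ψ₂ 0)
    (hφ₁0 : φ₁ 0 = 0) (hφ₂0 : φ₂ 0 = 0) (hψ₁0 : ψ₁ 0 = 0) (hψ₂0 : ψ₂ 0 = 0)
    (hφ₁g : ∀ α : Fin n,
      fderiv ℂ (fun p => (φ₁ p).2) 0 ((Pi.single α 1 : Fin n → ℂ), 0) = 0)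
    (hφ₂g : ∀ α : Fin n,
      fderiv ℂ (fun p => (φ₂ p).2) 0 ((Pi.single α 1 : Fin n → ℂ), 0) = 0)
    (hinv₁ : ∀ᶠ p in nhds (0 : (Fin n → ℂ) × ℂ), ψ₁ (φ₁ p) = p ∧ φ₁ (ψ₁ p) = p)
    (hinv₂ : ∀ᶠ p in nhds (0 : (Fin n → ℂ) × ℂ), ψ₂ (φ₂ p) = p ∧ φ₂ (ψ₂ p) = p)
    (h12 : wBigOx n (k + 1) φ₁ φ₂)
    -- near the origin, `φ₁(M) = {Im w = G}`:
    (hMG : ∀ᶠ p in nhds (0 : (Fin n → ℂ) × ℂ),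
      p.2.im = F p.1 p.2.re → (φ₁ p).2.im = G (φ₁ p).1 (φ₁ p).2.re)
    (hGM : ∀ᶠ p in nhds (0 : (Fin n → ℂ) × ℂ),
      p.2.im = G p.1 p.2.re → (ψ₁ p).2.im = F (ψ₁ p).1 (ψ₁ p).2.re)
    -- near the origin, `φ₂(M) = {Im w = G′}`:
    (hMG' : ∀ᶠ p in nhds (0 : (Fin n → ℂ) × ℂ),
      p.2.im = F p.1 p.2.re → (φ₂ p).2.im = G' (φ₂ p).1 (φ₂ p).2.re)
    (hG'M : ∀ᶠ p in nhds (0 : (Fin n → ℂ) × ℂ),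
      p.2.im = G' p.1 p.2.re → (ψ₂ p).2.im = F (ψ₂ p).1 (ψ₂ p).2.re) :
    wBigOR n (k + 1) (fun z u => G z u - G' z u) := by
  intro z u
  -- the weighted scaling curve in `ℂⁿ × ℝ`
  have hγa : AnalyticAt ℝ (fun t : ℝ => ((t • z, t ^ 2 * u) : (Fin n → ℂ) × ℝ)) 0 := by
    apply AnalyticAt.prod
    · exact (analyticAt_id).smul analyticAt_const
    · exact ((analyticAt_id).pow 2).mul analyticAt_const
  have hγd : HasDerivAt (fun t : ℝ => ((t • z, t ^ 2 * u) : (Fin n → ℂ) × ℝ))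
      ((z, 0) : (Fin n → ℂ) × ℝ) 0 := by
    apply HasDerivAt.prodMk
    · simpa using (hasDerivAt_id (0 : ℝ)).smul_const z
    · simpa using (hasDerivAt_pow 2 (0 : ℝ)).mul_const u
  have hγ0 : (fun t : ℝ => ((t • z, t ^ 2 * u) : (Fin n → ℂ) × ℝ)) 0 = 0 := by
    simp
  -- `Gt` : the weighted restriction of `G`
  have hGta : AnalyticAt ℝ (fun t : ℝ => G (t • z) (t ^ 2 * u)) 0 := by
    have h2 : AnalyticAt ℝ (fun q : (Fin n → ℂ) × ℝ => G q.1 q.2)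
        ((fun t : ℝ => ((t • z, t ^ 2 * u) : (Fin n → ℂ) × ℝ)) 0) := by rwa [hγ0]
    exact AnalyticAt.comp (g := fun q : (Fin n → ℂ) × ℝ => G q.1 q.2)
      (f := fun t : ℝ => ((t • z, t ^ 2 * u) : (Fin n → ℂ) × ℝ)) h2 hγa
  have hG'ta : AnalyticAt ℝ (fun t : ℝ => G' (t • z) (t ^ 2 * u)) 0 := by
    have h2 : AnalyticAt ℝ (fun q : (Fin n → ℂ) × ℝ => G' q.1 q.2)
        ((fun t : ℝ => ((t • z, t ^ 2 * u) : (Fin n → ℂ) × ℝ)) 0) := by rwa [hγ0]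
    exact AnalyticAt.comp (g := fun q : (Fin n → ℂ) × ℝ => G' q.1 q.2)
      (f := fun t : ℝ => ((t • z, t ^ 2 * u) : (Fin n → ℂ) × ℝ)) h2 hγa
  have hGt0 : G ((0 : ℝ) • z) (0 ^ 2 * u) = 0 := by
    rw [zero_smul]
    simpa using hG0
  have hGtd : HasDerivAt (fun t : ℝ => G (t • z) (t ^ 2 * u)) 0 0 := by
    have h1 : HasFDerivAt (fun q : (Fin n → ℂ) × ℝ => G q.1 q.2)
        (0 : ((Fin n → ℂ) × ℝ) →L[ℝ] ℝ)
        ((fun t : ℝ => ((t • z, t ^ 2 * u) : (Fin n → ℂ) × ℝ)) 0) := by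
      rw [hγ0, ← hdG]
      exact hGa.differentiableAt.hasFDerivAt
    simpa [Function.comp_def] using h1.comp_hasDerivAt 0 hγd
  -- the curve `qc` inside the target hypersurface `{Im w = G}`
  set qc : ℝ → (Fin n → ℂ) × ℂ :=
    fun t => (t • z, ((t ^ 2 * u : ℝ) : ℂ) + ((G (t • z) (t ^ 2 * u) : ℝ) : ℂ) * I) with hqcdef
  have hqc0 : qc 0 = 0 := by
    rw [hqcdef]
    simp only [zero_smul]
    rw [Prod.mk_eq_zero]
    constructor
    · rfl
    · rw [show (0:ℝ) ^ 2 * u = 0 by ring]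
      rw [show G (0 : Fin n → ℂ) 0 = 0 from hG0]
      simp
  have hqca : AnalyticAt ℝ qc 0 := by
    rw [hqcdef]
    apply AnalyticAt.prod
    · exact (analyticAt_id).smul analyticAt_const
    · apply AnalyticAt.add
      · exact AnalyticAt.comp (g := fun x : ℝ => (x : ℂ))
          (f := fun t : ℝ => t ^ 2 * u) (Complex.ofRealCLM.analyticAt _)
          (((analyticAt_id).pow 2).mul analyticAt_const)
      · exact (AnalyticAt.comp (g := fun x : ℝ => (x : ℂ))
          (f := fun t : ℝ => G (t • z) (t ^ 2 * u)) (Complex.ofRealCLM.analyticAt _)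
          hGta).mul analyticAt_const
  have hqcd : HasDerivAt qc ((z, 0) : (Fin n → ℂ) × ℂ) 0 := by
    rw [hqcdef]
    apply HasDerivAt.prodMk
    · simpa using (hasDerivAt_id (0 : ℝ)).smul_const z
    · have h1 : HasDerivAt (fun t : ℝ => ((t ^ 2 * u : ℝ) : ℂ)) 0 0 := by
        have := ((hasDerivAt_pow 2 (0 : ℝ)).mul_const u).ofReal_comp
        simpa using this
      have h2 : HasDerivAt (fun t : ℝ => ((G (t • z) (t ^ 2 * u) : ℝ) : ℂ) * I) 0 0 := by
        have := (hGtd.ofReal_comp).mul_const I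
        simpa using this
      simpa [Pi.add_def] using h1.add h2
  -- the source curve `pc` on `M`
  set pc : ℝ → (Fin n → ℂ) × ℂ := fun t => ψ₁ (qc t) with hpcdef
  have hψ₁aR : AnalyticAt ℝ ψ₁ 0 := hψ₁a.restrictScalars
  have hpc0 : pc 0 = 0 := by rw [hpcdef]; simp only [hqc0]; exact hψ₁0
  have hpca : AnalyticAt ℝ pc 0 := by
    have h2 : AnalyticAt ℝ ψ₁ (qc 0) := by rwa [hqc0]
    exact AnalyticAt.comp (g := ψ₁) (f := qc) h2 hqca
  -- derivative of `pc`
  have hψ₁dd : DifferentiableAt ℂ ψ₁ 0 := hψ₁a.differentiableAt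
  set B := fderiv ℂ ψ₁ 0 with hBdef
  have hpcd : HasDerivAt pc (B ((z, 0) : (Fin n → ℂ) × ℂ)) 0 := by
    have h1 : HasFDerivAt ψ₁ (B.restrictScalars ℝ) (qc 0) := by
      rw [hqc0]; exact hψ₁dd.hasFDerivAt.restrictScalars ℝ
    simpa [Function.comp_def] using h1.comp_hasDerivAt 0 hqcd
  -- linear algebra : the second component of `B (z, 0)` vanishes
  have hφ₁dd : DifferentiableAt ℂ φ₁ 0 := hφ₁a.differentiableAt
  set A := fderiv ℂ φ₁ 0 with hAdef
  have hBA : ∀ v : (Fin n → ℂ) × ℂ, B (A v) = v := by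
    have hev : (fun x => ψ₁ (φ₁ x)) =ᶠ[𝓝 (0 : (Fin n → ℂ) × ℂ)] id := by
      filter_upwards [hinv₁] with x hx using hx.1
    have h1 : fderiv ℂ (fun x => ψ₁ (φ₁ x)) 0 = ContinuousLinearMap.id ℂ _ := by
      rw [hev.fderiv_eq, fderiv_id]
    have h2 : fderiv ℂ (fun x => ψ₁ (φ₁ x)) 0 = B.comp A := by
      have h3 : DifferentiableAt ℂ ψ₁ (φ₁ 0) := by rwa [hφ₁0]
      have h4 := fderiv_comp (𝕜 := ℂ) 0 h3 hφ₁dd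
      rw [show (ψ₁ ∘ φ₁) = fun x => ψ₁ (φ₁ x) from rfl] at h4
      rw [h4, hφ₁0]
    intro v
    have h5 := congrArg (fun L : ((Fin n → ℂ) × ℂ) →L[ℂ] ((Fin n → ℂ) × ℂ) => L v)
      (h2.symm.trans h1)
    simpa using h5
  have hA2 : ∀ v : Fin n → ℂ, (A ((v, 0) : (Fin n → ℂ) × ℂ)).2 = 0 := by
    have hsnd : fderiv ℂ (fun p => (φ₁ p).2) 0 =
        (ContinuousLinearMap.snd ℂ (Fin n → ℂ) ℂ).comp A := by
      have h4 := fderiv_comp (𝕜 := ℂ) 0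
        ((ContinuousLinearMap.snd ℂ (Fin n → ℂ) ℂ).differentiableAt) hφ₁dd
      rw [ContinuousLinearMap.fderiv] at h4
      exact h4
    intro v
    have hv : ((v, 0) : (Fin n → ℂ) × ℂ) =
        ∑ α : Fin n, v α • (((Pi.single α 1 : Fin n → ℂ), 0) : (Fin n → ℂ) × ℂ) := by
      rw [Prod.ext_iff]
      constructor
      · rw [Prod.fst_sum]
        funext j
        rw [Finset.sum_apply]
        simp [Pi.single_apply]
      · rw [Prod.snd_sum]
        simp
    have h6 : (A ((v, 0) : (Fin n → ℂ) × ℂ)).2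
        = fderiv ℂ (fun p => (φ₁ p).2) 0 ((v, 0) : (Fin n → ℂ) × ℂ) := by
      rw [hsnd]; rfl
    rw [h6, hv, map_sum]
    refine Finset.sum_eq_zero fun α _ => ?_
    rw [map_smul, hφ₁g α, smul_zero]
  have hAinj : Function.Injective A := by
    intro a b hab
    have h7 := congrArg B hab
    rwa [hBA, hBA] at h7
  have hB2 : (B ((z, 0) : (Fin n → ℂ) × ℂ)).2 = 0 := by
    set Tc : (Fin n → ℂ) →L[ℂ] (Fin n → ℂ) :=
      (ContinuousLinearMap.fst ℂ (Fin n → ℂ) ℂ).comp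
        (A.comp (ContinuousLinearMap.inl ℂ (Fin n → ℂ) ℂ)) with hTc
    have hTapp : ∀ v : Fin n → ℂ, Tc v = (A ((v, 0) : (Fin n → ℂ) × ℂ)).1 := fun v => rfl
    have hTinj : Function.Injective Tc := by
      intro a b hab
      rw [hTapp, hTapp] at hab
      have h5 : A ((a, 0) : (Fin n → ℂ) × ℂ) = A ((b, 0) : (Fin n → ℂ) × ℂ) :=
        Prod.ext hab (by rw [hA2, hA2])
      have h8 := hAinj h5
      have h9 := congrArg Prod.fst h8
      simpa using h9
    have hTsurj : Function.Surjective Tc :=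
      (LinearMap.injective_iff_surjective
        (f := (Tc : (Fin n → ℂ) →ₗ[ℂ] (Fin n → ℂ)))).mp hTinj
    obtain ⟨v, hv⟩ := hTsurj z
    rw [hTapp] at hv
    have hAv : A ((v, 0) : (Fin n → ℂ) × ℂ) = ((z, 0) : (Fin n → ℂ) × ℂ) :=
      Prod.ext hv (hA2 v)
    rw [← hAv, hBA]
  -- the curve has weighted valuation (1,2)
  have hp1 : (fun t => (pc t).1) =O[𝓝 (0 : ℝ)] fun t : ℝ => ‖t‖ := by
    have hfst := (ContinuousLinearMap.fst ℝ (Fin n → ℂ) ℂ).hasFDerivAt.comp_hasDerivAt 0 hpcd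
    refine isBigO_norm_id_of_hasDerivAt hfst ?_
    show (pc 0).1 = 0
    rw [hpc0]; rfl
  have hp2 : (fun t => (pc t).2) =O[𝓝 (0 : ℝ)] fun t : ℝ => ‖t‖ ^ 2 := by
    have hpc2a : AnalyticAt ℝ (fun t => (pc t).2) 0 :=
      AnalyticAt.comp (g := fun x : (Fin n → ℂ) × ℂ => x.2) (f := pc)
        ((ContinuousLinearMap.snd ℝ (Fin n → ℂ) ℂ).analyticAt _) hpca
    refine isBigO_of_derivs hpc2a 2 ?_
    intro j hj
    interval_cases j
    · rw [iteratedDeriv_zero]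
      show (pc 0).2 = 0
      rw [hpc0]; rfl
    · rw [iteratedDeriv_one]
      have hsnd := (ContinuousLinearMap.snd ℝ (Fin n → ℂ) ℂ).hasFDerivAt.comp_hasDerivAt 0 hpcd
      have h10 : deriv (fun t => (pc t).2) 0
          = (ContinuousLinearMap.snd ℝ (Fin n → ℂ) ℂ) (B ((z, 0) : (Fin n → ℂ) × ℂ)) :=
        hsnd.deriv
      rw [h10]
      exact hB2
  -- the difference functions along the curve
  have hk0 : 0 < k := lt_of_lt_of_le (by norm_num) hk
  have hd1O : (fun t => ((φ₁ (pc t)).1 - (φ₂ (pc t)).1 : Fin n → ℂ)) =O[𝓝 (0 : ℝ)]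
      fun t : ℝ => ‖t‖ ^ k := by
    rw [isBigO_pi]
    intro α
    have hha : AnalyticAt ℂ (fun q : (Fin n → ℂ) × ℂ => (φ₁ q).1 α - (φ₂ q).1 α) 0 := by
      apply AnalyticAt.sub
      · exact AnalyticAt.comp (g := fun x : (Fin n → ℂ) × ℂ => x.1 α) (f := φ₁)
          ((((ContinuousLinearMap.proj α : (Fin n → ℂ) →L[ℂ] ℂ)).comp
            (ContinuousLinearMap.fst ℂ (Fin n → ℂ) ℂ)).analyticAt _) hφ₁a
      · exact AnalyticAt.comp (g := fun x : (Fin n → ℂ) × ℂ => x.1 α) (f := φ₂)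
          ((((ContinuousLinearMap.proj α : (Fin n → ℂ) →L[ℂ] ℂ)).comp
            (ContinuousLinearMap.fst ℂ (Fin n → ℂ) ℂ)).analyticAt _) hφ₂a
    have hyp := h12.1 α
    have hkk : k + 1 - 1 = k := rfl
    rw [hkk] at hyp
    have h11 := lemA hk0 hha hyp hp1 hp2
    simpa using h11
  have hd2O : (fun t => (φ₁ (pc t)).2 - (φ₂ (pc t)).2) =O[𝓝 (0 : ℝ)]
      fun t : ℝ => ‖t‖ ^ (k + 1) := by
    have hha : AnalyticAt ℂ (fun q : (Fin n → ℂ) × ℂ => (φ₁ q).2 - (φ₂ q).2) 0 := by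
      apply AnalyticAt.sub
      · exact AnalyticAt.comp (g := fun x : (Fin n → ℂ) × ℂ => x.2) (f := φ₁)
          ((ContinuousLinearMap.snd ℂ (Fin n → ℂ) ℂ).analyticAt _) hφ₁a
      · exact AnalyticAt.comp (g := fun x : (Fin n → ℂ) × ℂ => x.2) (f := φ₂)
          ((ContinuousLinearMap.snd ℂ (Fin n → ℂ) ℂ).analyticAt _) hφ₂a
    exact lemA (Nat.succ_pos k) hha h12.2 hp1 hp2
  -- the eventual identity coming from `φ₁(M) = {Im w = G}` and `φ₂(M) = {Im w = G'}`
  have hqccont : Filter.Tendsto qc (𝓝 0) (𝓝 0) := by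
    have h1 := hqca.continuousAt
    rwa [ContinuousAt, hqc0] at h1
  have hpccont : Filter.Tendsto pc (𝓝 0) (𝓝 0) := by
    have h1 := hpca.continuousAt
    rwa [ContinuousAt, hpc0] at h1
  have evM : ∀ᶠ t : ℝ in 𝓝 0, (pc t).2.im = F (pc t).1 (pc t).2.re := by
    filter_upwards [hqccont.eventually hGM] with t hGMt
    apply hGMt
    show (((t ^ 2 * u : ℝ) : ℂ) + ((G (t • z) (t ^ 2 * u) : ℝ) : ℂ) * I).im
      = G (t • z) ((((t ^ 2 * u : ℝ) : ℂ) + ((G (t • z) (t ^ 2 * u) : ℝ) : ℂ) * I).re)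
    simp only [Complex.add_im, Complex.add_re, Complex.mul_I_im, Complex.mul_I_re,
      Complex.ofReal_im, Complex.ofReal_re, neg_zero, add_zero, zero_add, sub_zero]
  have eviden : ∀ᶠ t : ℝ in 𝓝 0,
      G (t • z) (t ^ 2 * u) - ((φ₁ (pc t)).2 - (φ₂ (pc t)).2).im
        = G' (t • z - ((φ₁ (pc t)).1 - (φ₂ (pc t)).1))
            (t ^ 2 * u - ((φ₁ (pc t)).2 - (φ₂ (pc t)).2).re) := by
    filter_upwards [hpccont.eventually hMG', evM, hqccont.eventually hinv₁] with t h1 h2 h3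
    have h4 := h1 h2
    have h5 : φ₁ (pc t) = qc t := h3.2
    have e1 : (φ₂ (pc t)).1 = t • z - ((φ₁ (pc t)).1 - (φ₂ (pc t)).1) := by
      have : (φ₁ (pc t)).1 = t • z := by rw [h5]
      rw [← this]; abel
    have e2 : (φ₂ (pc t)).2
        = (((t ^ 2 * u : ℝ) : ℂ) + ((G (t • z) (t ^ 2 * u) : ℝ) : ℂ) * I)
          - ((φ₁ (pc t)).2 - (φ₂ (pc t)).2) := by
      have : (φ₁ (pc t)).2 = ((t ^ 2 * u : ℝ) : ℂ) + ((G (t • z) (t ^ 2 * u) : ℝ) : ℂ) * I := by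
        rw [h5]
      rw [← this]; abel
    rw [e1, e2] at h4
    have e3 : ((((t ^ 2 * u : ℝ) : ℂ) + ((G (t • z) (t ^ 2 * u) : ℝ) : ℂ) * I)
        - ((φ₁ (pc t)).2 - (φ₂ (pc t)).2)).im
        = G (t • z) (t ^ 2 * u) - ((φ₁ (pc t)).2 - (φ₂ (pc t)).2).im := by
      simp only [Complex.sub_im, Complex.add_im, Complex.mul_I_im, Complex.ofReal_im,
        Complex.ofReal_re, zero_add]
    have e4 : ((((t ^ 2 * u : ℝ) : ℂ) + ((G (t • z) (t ^ 2 * u) : ℝ) : ℂ) * I)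
        - ((φ₁ (pc t)).2 - (φ₂ (pc t)).2)).re
        = t ^ 2 * u - ((φ₁ (pc t)).2 - (φ₂ (pc t)).2).re := by
      simp only [Complex.sub_re, Complex.add_re, Complex.mul_I_re, Complex.ofReal_im,
        Complex.ofReal_re, neg_zero, add_zero]
    rw [e3, e4] at h4
    exact h4
  -- assembling the pieces
  have piece1 : (fun t : ℝ => ((φ₁ (pc t)).2 - (φ₂ (pc t)).2).im) =O[𝓝 (0 : ℝ)]
      fun t : ℝ => ‖t‖ ^ (k + 1) := by
    refine IsBigO.trans ?_ hd2O
    refine isBigO_of_le _ fun t => ?_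
    rw [Real.norm_eq_abs]
    exact Complex.abs_im_le_norm _
  have hQO : (fun t : ℝ => ((t • z, t ^ 2 * u) : (Fin n → ℂ) × ℝ)) =O[𝓝 (0 : ℝ)]
      fun t : ℝ => ‖t‖ := isBigO_norm_id_of_hasDerivAt hγd hγ0
  have hreO : (fun t : ℝ => ((φ₁ (pc t)).2 - (φ₂ (pc t)).2).re) =O[𝓝 (0 : ℝ)]
      fun t : ℝ => ‖t‖ ^ k := by
    refine IsBigO.trans ?_ (hd2O.trans (normpow_mono (Nat.le_succ k)))
    refine isBigO_of_le _ fun t => ?_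
    rw [Real.norm_eq_abs]
    exact Complex.abs_re_le_norm _
  have hPQO : (fun t : ℝ => (((t • z - ((φ₁ (pc t)).1 - (φ₂ (pc t)).1),
      t ^ 2 * u - ((φ₁ (pc t)).2 - (φ₂ (pc t)).2).re) : (Fin n → ℂ) × ℝ)
      - ((t • z, t ^ 2 * u) : (Fin n → ℂ) × ℝ))) =O[𝓝 (0 : ℝ)] fun t : ℝ => ‖t‖ ^ k := by
    have h1 := (hd1O.neg_left).prod_left (hreO.neg_left)
    have heqf : (fun t : ℝ => (((t • z - ((φ₁ (pc t)).1 - (φ₂ (pc t)).1),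
        t ^ 2 * u - ((φ₁ (pc t)).2 - (φ₂ (pc t)).2).re) : (Fin n → ℂ) × ℝ)
        - ((t • z, t ^ 2 * u) : (Fin n → ℂ) × ℝ)))
        = fun t : ℝ => ((-((φ₁ (pc t)).1 - (φ₂ (pc t)).1),
            -((φ₁ (pc t)).2 - (φ₂ (pc t)).2).re) : (Fin n → ℂ) × ℝ) := by
      funext t
      rw [Prod.mk_sub_mk]
      refine Prod.ext ?_ ?_
      · show t • z - ((φ₁ (pc t)).1 - (φ₂ (pc t)).1) - t • z = -((φ₁ (pc t)).1 - (φ₂ (pc t)).1)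
        abel
      · show t ^ 2 * u - ((φ₁ (pc t)).2 - (φ₂ (pc t)).2).re - t ^ 2 * u
          = -((φ₁ (pc t)).2 - (φ₂ (pc t)).2).re
        abel
    rw [heqf]
    exact h1
  have hPO : (fun t : ℝ => (((t • z - ((φ₁ (pc t)).1 - (φ₂ (pc t)).1),
      t ^ 2 * u - ((φ₁ (pc t)).2 - (φ₂ (pc t)).2).re) : (Fin n → ℂ) × ℝ))) =O[𝓝 (0 : ℝ)]
      fun t : ℝ => ‖t‖ := by
    have hkO : (fun t : ℝ => ‖t‖ ^ k) =O[𝓝 (0 : ℝ)] fun t : ℝ => ‖t‖ := by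
      have := normpow_mono (a := k) (b := 1) hk0
      simpa using this
    have h2 := hQO.add (hPQO.trans hkO)
    have heqf : (fun t : ℝ => (((t • z, t ^ 2 * u) : (Fin n → ℂ) × ℝ))
        + ((((t • z - ((φ₁ (pc t)).1 - (φ₂ (pc t)).1),
          t ^ 2 * u - ((φ₁ (pc t)).2 - (φ₂ (pc t)).2).re) : (Fin n → ℂ) × ℝ))
          - ((t • z, t ^ 2 * u) : (Fin n → ℂ) × ℝ)))
        = fun t : ℝ => (((t • z - ((φ₁ (pc t)).1 - (φ₂ (pc t)).1),
          t ^ 2 * u - ((φ₁ (pc t)).2 - (φ₂ (pc t)).2).re) : (Fin n → ℂ) × ℝ)) := by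
      funext t
      abel
    rw [heqf] at h2
    exact h2
  have piece2 := lemB hG'a hdG' hPO hQO hPQO
  have hmain : (fun t : ℝ => G (t • z) (t ^ 2 * u) - G' (t • z) (t ^ 2 * u)) =O[𝓝 (0 : ℝ)]
      fun t : ℝ => ‖t‖ ^ (k + 1) := by
    have heq : (fun t : ℝ => G (t • z) (t ^ 2 * u) - G' (t • z) (t ^ 2 * u)) =ᶠ[𝓝 (0 : ℝ)]
        fun t : ℝ => ((φ₁ (pc t)).2 - (φ₂ (pc t)).2).im
          + (G' (t • z - ((φ₁ (pc t)).1 - (φ₂ (pc t)).1))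
              (t ^ 2 * u - ((φ₁ (pc t)).2 - (φ₂ (pc t)).2).re) - G' (t • z) (t ^ 2 * u)) := by
      filter_upwards [eviden] with t ht
      linarith [ht]
    exact heq.trans_isBigO (piece1.add piece2)
  have hDa : AnalyticAt ℝ (fun t : ℝ => G (t • z) (t ^ 2 * u) - G' (t • z) (t ^ 2 * u)) 0 :=
    hGta.sub hG'ta
  intro j hj
  exact derivs_of_isBigO hDa (k + 1) hmain j hj
end

section
/- Let n ≥ 2 and let C be a complex array C_{αβγδ̄η̄} indexed by α,β,γ,δ,η ∈ {1,…,n}, symmetric under all permutations of the three unbarred indices (α,β,γ) and under the transposition of the two barred indices (δ,η). Define T_{βγη̄} = Σ_{ρ=1}^{n} ε_ρ C_{ρβγρ̄η̄}. If for all indices (n+2)·C_{αβγδ̄η̄} = ε_α δ_{αδ} T_{βγη̄} + ε_β δ_{βδ} T_{αγη̄} + ε_α δ_{αη} T_{βγδ̄} + ε_β δ_{βη} T_{αγδ̄} (where δ_{αδ} is the Kronecker delta), then C_{αβγδ̄η̄} = 0 for all indices. -/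
open Complex

/-- `ε_α = 1` for `α < e`, `ε_α = −1` for `α ≥ e` (as a complex number). -/
noncomputable def epsC (n e : ℕ) (α : Fin n) : ℂ :=
  if (α : ℕ) < e then 1 else -1

/-- The contraction `T_{βγη̄} = Σ_ρ ε_ρ C_{ρβγρ̄η̄}`. -/
noncomputable def traceT (n e : ℕ)
    (C : Fin n → Fin n → Fin n → Fin n → Fin n → ℂ)
    (β γ η : Fin n) : ℂ :=
  ∑ ρ : Fin n, epsC n e ρ * C ρ β γ ρ η

/-- If a tensor `C_{αβγδ̄η̄}` (symmetric in the unbarred indices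
`α,β,γ` and in the barred indices `δ,η`) satisfies
`(n+2)·C_{αβγδ̄η̄} = ε_α δ_{αδ} T_{βγη̄} + ε_β δ_{βδ} T_{αγη̄}
  + ε_α δ_{αη} T_{βγδ̄} + ε_β δ_{βη} T_{αγδ̄}`,
where `T_{βγη̄} = Σ_ρ ε_ρ C_{ρβγρ̄η̄}`, then `C = 0`. -/
theorem stmt10 (n e : ℕ) (hn : 2 ≤ n) (he1 : n ≤ 2 * e) (he2 : e ≤ n)
    (C : Fin n → Fin n → Fin n → Fin n → Fin n → ℂ)
    (hsym1 : ∀ α β γ δ η, C α β γ δ η = C β α γ δ η)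
    (hsym2 : ∀ α β γ δ η, C α β γ δ η = C α γ β δ η)
    (hsym3 : ∀ α β γ δ η, C α β γ δ η = C α β γ η δ)
    (heq : ∀ α β γ δ η,
      ((n : ℂ) + 2) * C α β γ δ η
        = epsC n e α * (if α = δ then 1 else 0) * traceT n e C β γ η
          + epsC n e β * (if β = δ then 1 else 0) * traceT n e C α γ η
          + epsC n e α * (if α = η then 1 else 0) * traceT n e C β γ δ
          + epsC n e β * (if β = η then 1 else 0) * traceT n e C α γ δ) :
    ∀ α β γ δ η, C α β γ δ η = 0 := by
  have hε : ∀ a : Fin n, epsC n e a ≠ 0 := by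
    intro a; unfold epsC; split <;> norm_num
  have Tsym : ∀ β γ η, traceT n e C β γ η = traceT n e C γ β η := by
    intro β γ η; unfold traceT
    exact Finset.sum_congr rfl fun ρ _ => by rw [hsym2]
  have hA : ∀ a c b : Fin n, c ≠ b → traceT n e C a c b = 0 := by
    intro α γ β hne
    have h1 := heq α β γ β β
    have h2 := heq α γ β β β
    rw [hsym2 α β γ β β] at h1
    rw [Tsym β γ β] at h1
    simp only [eq_self_iff_true, if_true, if_neg hne, mul_one, mul_zero, zero_mul] at h1 h2
    have h3 : 2 * epsC n e β * traceT n e C α γ β = 0 := by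
      linear_combination h2 - h1
    rcases mul_eq_zero.mp h3 with h | h
    · rcases mul_eq_zero.mp h with h' | h'
      · norm_num at h'
      · exact absurd h' (hε β)
    · exact h
  have hB : ∀ γ : Fin n, traceT n e C γ γ γ = 0 := by
    intro γ
    obtain ⟨β, hβ⟩ := Fintype.exists_ne_of_one_lt_card (by simpa using (show 1 < n by omega)) γ
    have h1 := heq γ β γ β γ
    have h2 := heq γ γ β β γ
    rw [hsym2 γ β γ β γ] at h1
    have e1 : traceT n e C β γ β = 0 := hA β γ β hβ.symm
    have e2 : traceT n e C γ β β = 0 := by rw [Tsym]; exact e1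
    have e3 : traceT n e C γ β γ = 0 := hA γ β γ hβ
    have e4 : traceT n e C β γ γ = 0 := by rw [Tsym]; exact e3
    simp only [eq_self_iff_true, if_true, if_neg hβ, if_neg hβ.symm, e1, e2, e3, e4,
      mul_one, mul_zero, zero_mul, add_zero, zero_add] at h1 h2
    have h3 : epsC n e β * traceT n e C γ γ γ = 0 := by
      linear_combination h2 - h1
    rcases mul_eq_zero.mp h3 with h | h
    · exact absurd h (hε β)
    · exact h
  have hT : ∀ β γ η, traceT n e C β γ η = 0 := by
    intro β γ η
    by_cases h1 : γ = η
    · by_cases h2 : β = η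
      · subst h1; subst h2; exact hB _
      · rw [Tsym]; exact hA γ β η h2
    · exact hA β γ η h1
  intro α β γ δ η
  have h := heq α β γ δ η
  simp only [hT, mul_zero, add_zero] at h
  have hne : ((n : ℂ) + 2) ≠ 0 := by
    have : ((n : ℂ) + 2) = ((n + 2 : ℕ) : ℂ) := by push_cast; ring
    rw [this]
    exact_mod_cast Nat.succ_ne_zero (n + 1)
  exact (mul_eq_zero.mp h).resolve_left hne
end

section
/- Let n ≥ 2 and let A be a complex array A_{αβγδη̄ξ̄} indexed by α,β,γ,δ,η,ξ ∈ {1,…,n}, symmetric under all permutations of the four unbarred indices (α,β,γ,δ) and under the transposition of the two barred indices (η,ξ). Define B_{γδ} = Σ_{α,β=1}^{n} ε_α ε_β A_{αβγδᾱβ̄}. Suppose that for all z, a ∈ ℂ^n: Σ A_{αβγδη̄ξ̄} z^α z^β z^γ a^δ conj(z^η) conj(z^ξ) = (6/((n+1)(n+2)))·⟨z,z⟩²·Σ_{γ,δ} B_{γδ} z^γ a^δ. Then A_{αβγδη̄ξ̄} = 0 for all indices. -/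
open Complex

/-- The Hermitian form `⟨z,z⟩ = Σ_α ε_α z^α conj(z^α)` of signature `(e, n-e)`. -/
noncomputable def hermSelf (n e : ℕ) (z : Fin n → ℂ) : ℂ :=
  ∑ α : Fin n, epsC n e α * z α * (starRingEnd ℂ) (z α)

/-- The contraction `B_{γδ} = Σ_{α,β} ε_α ε_β A_{αβγδᾱβ̄}`. -/
noncomputable def traceB (n e : ℕ)
    (A : Fin n → Fin n → Fin n → Fin n → Fin n → Fin n → ℂ)
    (γ δ : Fin n) : ℂ :=
  ∑ α : Fin n, ∑ β : Fin n, epsC n e α * epsC n e β * A α β γ δ α β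

section StmtAux


noncomputable def Qf {n : ℕ} (C : Fin n → Fin n → Fin n → Fin n → Fin n → ℂ)
    (u1 u2 u3 v1 v2 : Fin n → ℂ) : ℂ :=
  ∑ α : Fin n, ∑ β : Fin n, ∑ γ : Fin n, ∑ η : Fin n, ∑ ξ : Fin n,
    C α β γ η ξ * u1 α * u2 β * u3 γ * (starRingEnd ℂ) (v1 η) * (starRingEnd ℂ) (v2 ξ)

variable {n : ℕ} {C : Fin n → Fin n → Fin n → Fin n → Fin n → ℂ}

lemma Qf1 (z w u2 u3 v1 v2 : Fin n → ℂ) (s : ℂ) :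
    Qf C (z + s • w) u2 u3 v1 v2 = Qf C z u2 u3 v1 v2 + s * Qf C w u2 u3 v1 v2 := by
  simp only [Qf, Pi.add_apply, Pi.smul_apply, smul_eq_mul, Finset.mul_sum,
    ← Finset.sum_add_distrib]
  exact Finset.sum_congr rfl fun _ _ => Finset.sum_congr rfl fun _ _ =>
    Finset.sum_congr rfl fun _ _ => Finset.sum_congr rfl fun _ _ =>
    Finset.sum_congr rfl fun _ _ => by ring

lemma Qf2 (u1 z w u3 v1 v2 : Fin n → ℂ) (s : ℂ) :
    Qf C u1 (z + s • w) u3 v1 v2 = Qf C u1 z u3 v1 v2 + s * Qf C u1 w u3 v1 v2 := by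
  simp only [Qf, Pi.add_apply, Pi.smul_apply, smul_eq_mul, Finset.mul_sum,
    ← Finset.sum_add_distrib]
  exact Finset.sum_congr rfl fun _ _ => Finset.sum_congr rfl fun _ _ =>
    Finset.sum_congr rfl fun _ _ => Finset.sum_congr rfl fun _ _ =>
    Finset.sum_congr rfl fun _ _ => by ring

lemma Qf3 (u1 u2 z w v1 v2 : Fin n → ℂ) (s : ℂ) :
    Qf C u1 u2 (z + s • w) v1 v2 = Qf C u1 u2 z v1 v2 + s * Qf C u1 u2 w v1 v2 := by
  simp only [Qf, Pi.add_apply, Pi.smul_apply, smul_eq_mul, Finset.mul_sum,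
    ← Finset.sum_add_distrib]
  exact Finset.sum_congr rfl fun _ _ => Finset.sum_congr rfl fun _ _ =>
    Finset.sum_congr rfl fun _ _ => Finset.sum_congr rfl fun _ _ =>
    Finset.sum_congr rfl fun _ _ => by ring

lemma Qf4 (u1 u2 u3 z w v2 : Fin n → ℂ) (s : ℂ) :
    Qf C u1 u2 u3 (z + s • w) v2
      = Qf C u1 u2 u3 z v2 + (starRingEnd ℂ) s * Qf C u1 u2 u3 w v2 := by
  simp only [Qf, Pi.add_apply, Pi.smul_apply, smul_eq_mul, map_add, map_mul, Finset.mul_sum,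
    ← Finset.sum_add_distrib]
  exact Finset.sum_congr rfl fun _ _ => Finset.sum_congr rfl fun _ _ =>
    Finset.sum_congr rfl fun _ _ => Finset.sum_congr rfl fun _ _ =>
    Finset.sum_congr rfl fun _ _ => by ring

lemma Qf5 (u1 u2 u3 v1 z w : Fin n → ℂ) (s : ℂ) :
    Qf C u1 u2 u3 v1 (z + s • w)
      = Qf C u1 u2 u3 v1 z + (starRingEnd ℂ) s * Qf C u1 u2 u3 v1 w := by
  simp only [Qf, Pi.add_apply, Pi.smul_apply, smul_eq_mul, map_add, map_mul, Finset.mul_sum,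
    ← Finset.sum_add_distrib]
  exact Finset.sum_congr rfl fun _ _ => Finset.sum_congr rfl fun _ _ =>
    Finset.sum_congr rfl fun _ _ => Finset.sum_congr rfl fun _ _ =>
    Finset.sum_congr rfl fun _ _ => by ring

lemma Qswap12 (h : ∀ a b c d e', C a b c d e' = C b a c d e') (u1 u2 u3 v1 v2 : Fin n → ℂ) :
    Qf C u1 u2 u3 v1 v2 = Qf C u2 u1 u3 v1 v2 := by
  unfold Qf
  rw [Finset.sum_comm]
  exact Finset.sum_congr rfl fun a _ => Finset.sum_congr rfl fun b _ =>
    Finset.sum_congr rfl fun _ _ => Finset.sum_congr rfl fun _ _ =>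
    Finset.sum_congr rfl fun _ _ => by rw [h]; ring

lemma Qswap23 (h : ∀ a b c d e', C a b c d e' = C a c b d e') (u1 u2 u3 v1 v2 : Fin n → ℂ) :
    Qf C u1 u2 u3 v1 v2 = Qf C u1 u3 u2 v1 v2 := by
  unfold Qf
  refine Finset.sum_congr rfl fun α _ => ?_
  rw [Finset.sum_comm]
  exact Finset.sum_congr rfl fun b _ => Finset.sum_congr rfl fun c _ =>
    Finset.sum_congr rfl fun _ _ => Finset.sum_congr rfl fun _ _ => by rw [h]; ring

lemma Qswap45 (h : ∀ a b c d e', C a b c d e' = C a b c e' d) (u1 u2 u3 v1 v2 : Fin n → ℂ) :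
    Qf C u1 u2 u3 v1 v2 = Qf C u1 u2 u3 v2 v1 := by
  unfold Qf
  refine Finset.sum_congr rfl fun α _ => Finset.sum_congr rfl fun β _ =>
    Finset.sum_congr rfl fun γ _ => ?_
  rw [Finset.sum_comm]
  exact Finset.sum_congr rfl fun d _ => Finset.sum_congr rfl fun e' _ => by rw [h]; ring

lemma L1 (c00 c01 c02 c10 c11 c12 c20 c21 c22 c30 c31 c32 : ℂ)
    (h : ∀ s : ℂ, c00 + c01 * (starRingEnd ℂ) s + c02 * (starRingEnd ℂ) s ^ 2
      + c10 * s + c11 * s * (starRingEnd ℂ) s + c12 * s * (starRingEnd ℂ) s ^ 2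
      + c20 * s ^ 2 + c21 * s ^ 2 * (starRingEnd ℂ) s + c22 * s ^ 2 * (starRingEnd ℂ) s ^ 2
      + c30 * s ^ 3 + c31 * s ^ 3 * (starRingEnd ℂ) s + c32 * s ^ 3 * (starRingEnd ℂ) s ^ 2 = 0) :
    c00 = 0 ∧ c01 = 0 ∧ c02 = 0 ∧ c10 = 0 ∧ c11 = 0 ∧ c12 = 0 ∧
    c20 = 0 ∧ c21 = 0 ∧ c22 = 0 ∧ c30 = 0 ∧ c31 = 0 ∧ c32 = 0 := by
  have h0 := h (-1:ℂ)
  have h1 := h (-2+2*Complex.I:ℂ)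
  have h2 := h (2*Complex.I:ℂ)
  have h3 := h (-1-Complex.I:ℂ)
  have h4 := h (3-Complex.I:ℂ)
  have h5 := h (2-2*Complex.I:ℂ)
  have h6 := h (0:ℂ)
  have h7 := h (Complex.I:ℂ)
  have h8 := h (1:ℂ)
  have h9 := h (-2*Complex.I:ℂ)
  have h10 := h (2-Complex.I:ℂ)
  have h11 := h (-1-2*Complex.I:ℂ)
  simp only [map_neg, map_add, map_sub, map_mul, map_one, map_zero, map_ofNat, Complex.conj_I] at h0 h1 h2 h3 h4 h5 h6 h7 h8 h9 h10 h11
  have ec00 : c00 = 0 := by linear_combination ((1) + (0)*Complex.I) * h6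
  have ec01 : c01 = 0 := by linear_combination (((-184):ℂ)/445 + ((-63):ℂ)/445*Complex.I) * h0 + (((223):ℂ)/14240 + ((161):ℂ)/14240*Complex.I) * h1 + (((-143):ℂ)/5340 + ((-164):ℂ)/1335*Complex.I) * h2 + (((289):ℂ)/1335 + ((53):ℂ)/1335*Complex.I) * h3 + (((-29):ℂ)/1068 + ((7):ℂ)/1068*Complex.I) * h4 + (((1139):ℂ)/14240 + ((679):ℂ)/42720*Complex.I) * h5 + (((-137):ℂ)/1424 + ((-415):ℂ)/1424*Complex.I) * h6 + (((37):ℂ)/534 + ((172):ℂ)/267*Complex.I) * h7 + (((164):ℂ)/445 + ((-143):ℂ)/1780*Complex.I) * h8 + (((-469):ℂ)/5340 + ((-152):ℂ)/1335*Complex.I) * h9 + (((-94):ℂ)/1335 + ((-8):ℂ)/1335*Complex.I) * h10 + (((-5):ℂ)/178 + ((41):ℂ)/1068*Complex.I) * h11 + ((((1):ℂ)/2)*c01 + (((-1):ℂ)/2)*c10 + (((67):ℂ)/356 + ((-53):ℂ)/178*Complex.I + ((-67):ℂ)/356*Complex.I^2)*c12 + (((67):ℂ)/356 + ((67):ℂ)/356*Complex.I^2)*c21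 + (((2941):ℂ)/1780 + ((-1293):ℂ)/1780*Complex.I + ((201):ℂ)/356*Complex.I^2 + ((731):ℂ)/356*Complex.I^3)*c22 + (((67):ℂ)/356 + ((53):ℂ)/178*Complex.I + ((-67):ℂ)/356*Complex.I^2)*c30 + (((2941):ℂ)/1780 + ((-1031):ℂ)/1780*Complex.I + ((-1347):ℂ)/1780*Complex.I^2 + ((-731):ℂ)/356*Complex.I^3)*c31 + (((2207):ℂ)/356 + ((-1174):ℂ)/445*Complex.I + ((-745):ℂ)/178*Complex.I^2 + ((-109):ℂ)/445*Complex.I^3 + ((377):ℂ)/356*Complex.I^4)*c32)*Complex.I_sq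
  have ec02 : c02 = 0 := by linear_combination (((-36):ℂ)/445 + ((-533):ℂ)/1780*Complex.I) * h0 + (((23):ℂ)/3560 + ((63):ℂ)/28480*Complex.I) * h1 + (((-673):ℂ)/21360 + ((-881):ℂ)/21360*Complex.I) * h2 + (((4871):ℂ)/21360 + ((5177):ℂ)/21360*Complex.I) * h3 + (((-73):ℂ)/4272 + ((79):ℂ)/4272*Complex.I) * h4 + (((1529):ℂ)/21360 + ((-2443):ℂ)/85440*Complex.I) * h5 + (((-199):ℂ)/1424 + ((93):ℂ)/2848*Complex.I) * h6 + (((29):ℂ)/712 + ((53):ℂ)/267*Complex.I) * h7 + (((881):ℂ)/7120 + ((-673):ℂ)/7120*Complex.I) * h8 + (((-993):ℂ)/7120 + ((-1153):ℂ)/21360*Complex.I) * h9 + (((-209):ℂ)/5340 + ((239):ℂ)/10680*Complex.I) * h10 + (((-97):ℂ)/4272 + ((5):ℂ)/4272*Complex.I) * h11 + ((((3):ℂ)/4)*c02 + (((-1):ℂ)/4)*c11 + (((181):ℂ)/712 + ((-70):ℂ)/89*Complex.I + ((-181):ℂ)/712*Complex.I^2)*c12 + (((-1):ℂ)/4)*c20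 + (((181):ℂ)/712 + ((181):ℂ)/712*Complex.I^2)*c21 + (((457):ℂ)/890 + ((-4569):ℂ)/3560*Complex.I + ((583):ℂ)/356*Complex.I^2 + ((1029):ℂ)/712*Complex.I^3)*c22 + (((181):ℂ)/712 + ((70):ℂ)/89*Complex.I + ((-181):ℂ)/712*Complex.I^2)*c30 + (((457):ℂ)/890 + ((-2493):ℂ)/3560*Complex.I + ((-873):ℂ)/1780*Complex.I^2 + ((-1029):ℂ)/712*Complex.I^3)*c31 + (((2365):ℂ)/712 + ((-3497):ℂ)/890*Complex.I + ((49):ℂ)/356*Complex.I^2 + ((-1459):ℂ)/1780*Complex.I^3 + ((-905):ℂ)/712*Complex.I^4)*c32)*Complex.I_sq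
  have ec10 : c10 = 0 := by linear_combination (((37):ℂ)/89 + ((-12):ℂ)/89*Complex.I) * h0 + (((-55):ℂ)/2848 + ((1):ℂ)/2848*Complex.I) * h1 + (((127):ℂ)/1335 + ((439):ℂ)/5340*Complex.I) * h2 + (((-236):ℂ)/445 + ((192):ℂ)/445*Complex.I) * h3 + (((19):ℂ)/1068 + ((-23):ℂ)/1068*Complex.I) * h4 + (((419):ℂ)/42720 + ((1689):ℂ)/14240*Complex.I) * h5 + (((-2123):ℂ)/7120 + ((181):ℂ)/7120*Complex.I) * h6 + (((-118):ℂ)/267 + ((-253):ℂ)/534*Complex.I) * h7 + (((1341):ℂ)/1780 + ((127):ℂ)/445*Complex.I) * h8 + (((37):ℂ)/267 + ((41):ℂ)/1068*Complex.I) * h9 + (((-92):ℂ)/445 + ((-76):ℂ)/445*Complex.I) * h10 + (((353):ℂ)/5340 + ((-161):ℂ)/890*Complex.I) * h11 + ((((-1):ℂ)/2)*c01 + (((1):ℂ)/2)*c10 + (((247):ℂ)/1780 + ((1481):ℂ)/890*Complex.I + ((-247):ℂ)/1780*Complex.I^2)*c12 + (((247):ℂ)/1780 + ((247):ℂ)/1780*Complex.I^2)*c21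 + (((2339):ℂ)/1780 + ((3867):ℂ)/1780*Complex.I + ((-6201):ℂ)/1780*Complex.I^2 + ((-1253):ℂ)/1780*Complex.I^3)*c22 + (((247):ℂ)/1780 + ((-1481):ℂ)/890*Complex.I + ((-247):ℂ)/1780*Complex.I^2)*c30 + (((2339):ℂ)/1780 + ((113):ℂ)/356*Complex.I + ((-549):ℂ)/356*Complex.I^2 + ((1253):ℂ)/1780*Complex.I^3)*c31 + (((199):ℂ)/356 + ((2408):ℂ)/445*Complex.I + ((-1009):ℂ)/890*Complex.I^2 + ((-748):ℂ)/445*Complex.I^3 + ((-959):ℂ)/356*Complex.I^4)*c32)*Complex.I_sq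
  have ec11 : c11 = 0 := by linear_combination (((539):ℂ)/1780 + ((-437):ℂ)/1780*Complex.I) * h0 + (((-219):ℂ)/28480 + ((237):ℂ)/28480*Complex.I) * h1 + (((757):ℂ)/21360 + ((-551):ℂ)/21360*Complex.I) * h2 + (((166):ℂ)/1335 + ((2641):ℂ)/10680*Complex.I) * h3 + (((-25):ℂ)/2136 + ((-5):ℂ)/267*Complex.I) * h4 + (((497):ℂ)/28480 + ((1169):ℂ)/28480*Complex.I) * h5 + (((-2739):ℂ)/2848 + ((121):ℂ)/2848*Complex.I) * h6 + (((251):ℂ)/2136 + ((277):ℂ)/2136*Complex.I) * h7 + (((347):ℂ)/890 + ((-289):ℂ)/3560*Complex.I) * h8 + (((2779):ℂ)/21360 + ((-1837):ℂ)/21360*Complex.I) * h9 + (((-407):ℂ)/10680 + ((221):ℂ)/10680*Complex.I) * h10 + (((-35):ℂ)/356 + ((-23):ℂ)/712*Complex.I) * h11 + ((((-1):ℂ)/2)*c02 + (((1):ℂ)/2)*c11 + (((1277):ℂ)/3560 + ((459):ℂ)/1780*Complex.I + ((-1277):ℂ)/3560*Complex.I^2)*c12 + (((-1):ℂ)/2)*c20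 + (((1277):ℂ)/3560 + ((1277):ℂ)/3560*Complex.I^2)*c21 + (((2431):ℂ)/3560 + ((1807):ℂ)/3560*Complex.I + ((-5069):ℂ)/3560*Complex.I^2 + ((4047):ℂ)/3560*Complex.I^3)*c22 + (((1277):ℂ)/3560 + ((-459):ℂ)/1780*Complex.I + ((-1277):ℂ)/3560*Complex.I^2)*c30 + (((2431):ℂ)/3560 + ((-987):ℂ)/3560*Complex.I + ((-529):ℂ)/3560*Complex.I^2 + ((-4047):ℂ)/3560*Complex.I^3)*c31 + (((2277):ℂ)/712 + ((1839):ℂ)/890*Complex.I + ((-4003):ℂ)/1780*Complex.I^2 + ((-117):ℂ)/178*Complex.I^3 + ((-1277):ℂ)/712*Complex.I^4)*c32)*Complex.I_sq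
  have ec12 : c12 = 0 := by linear_combination (((-103):ℂ)/1780 + ((209):ℂ)/1780*Complex.I) * h0 + (((-429):ℂ)/56960 + ((-47):ℂ)/14240*Complex.I) * h1 + (((1):ℂ)/2848 + ((629):ℂ)/10680*Complex.I) * h2 + (((769):ℂ)/21360 + ((-913):ℂ)/7120*Complex.I) * h3 + (((17):ℂ)/1424 + ((23):ℂ)/2136*Complex.I) * h4 + (((-1733):ℂ)/56960 + ((-311):ℂ)/7120*Complex.I) * h5 + (((2377):ℂ)/28480 + ((1243):ℂ)/14240*Complex.I) * h6 + (((29):ℂ)/534 + ((-16):ℂ)/89*Complex.I) * h7 + (((-2071):ℂ)/14240 + ((3):ℂ)/2848*Complex.I) * h8 + (((689):ℂ)/42720 + ((169):ℂ)/3560*Complex.I) * h9 + (((1229):ℂ)/21360 + ((163):ℂ)/7120*Complex.I) * h10 + (((-263):ℂ)/14240 + ((131):ℂ)/14240*Complex.I) * h11 + ((((45):ℂ)/89 + ((-1093):ℂ)/3560*Complex.I + ((-91):ℂ)/356*Complex.I^2)*c12 + (((-44):ℂ)/89 + ((91):ℂ)/356*Complex.I^2)*c21 + (((-7793):ℂ)/7120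 + ((-1731):ℂ)/3560*Complex.I + ((3413):ℂ)/7120*Complex.I^2 + ((-293):ℂ)/356*Complex.I^3)*c22 + (((-44):ℂ)/89 + ((1093):ℂ)/3560*Complex.I + ((-91):ℂ)/356*Complex.I^2)*c30 + (((-7793):ℂ)/7120 + ((-119):ℂ)/890*Complex.I + ((5401):ℂ)/7120*Complex.I^2 + ((293):ℂ)/356*Complex.I^3)*c31 + (((-695):ℂ)/178 + ((-403):ℂ)/445*Complex.I + ((1743):ℂ)/445*Complex.I^2 + ((1657):ℂ)/3560*Complex.I^3 + ((-455):ℂ)/356*Complex.I^4)*c32)*Complex.I_sq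
  have ec20 : c20 = 0 := by linear_combination (((135):ℂ)/356 + ((54):ℂ)/89*Complex.I) * h0 + (((-39):ℂ)/5696 + ((-49):ℂ)/2848*Complex.I) * h1 + (((7):ℂ)/1335 + ((1033):ℂ)/10680*Complex.I) * h2 + (((-8743):ℂ)/21360 + ((-11479):ℂ)/21360*Complex.I) * h3 + (((103):ℂ)/4272 + ((-31):ℂ)/4272*Complex.I) * h4 + (((-2859):ℂ)/28480 + ((9):ℂ)/14240*Complex.I) * h5 + (((239):ℂ)/14240 + ((-207):ℂ)/3560*Complex.I) * h6 + (((-95):ℂ)/534 + ((-875):ℂ)/2136*Complex.I) * h7 + (((159):ℂ)/7120 + ((1447):ℂ)/7120*Complex.I) * h8 + (((23):ℂ)/534 + ((127):ℂ)/1068*Complex.I) * h9 + (((947):ℂ)/10680 + ((-257):ℂ)/5340*Complex.I) * h10 + (((819):ℂ)/7120 + ((367):ℂ)/7120*Complex.I) * h11 + ((((-1):ℂ)/4)*c02 + (((-1):ℂ)/4)*c11 + (((-489):ℂ)/890 + ((1267):ℂ)/1780*Complex.I + ((489):ℂ)/890*Complex.I^2)*c12 + (((3):ℂ)/4)*c20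 + (((-489):ℂ)/890 + ((-489):ℂ)/890*Complex.I^2)*c21 + (((-6277):ℂ)/3560 + ((578):ℂ)/445*Complex.I + ((-1507):ℂ)/3560*Complex.I^2 + ((-5353):ℂ)/1780*Complex.I^3)*c22 + (((-489):ℂ)/890 + ((-1267):ℂ)/1780*Complex.I + ((489):ℂ)/890*Complex.I^2)*c30 + (((-6277):ℂ)/3560 + ((337):ℂ)/356*Complex.I + ((669):ℂ)/712*Complex.I^2 + ((5353):ℂ)/1780*Complex.I^3)*c31 + (((-502):ℂ)/89 + ((1268):ℂ)/445*Complex.I + ((468):ℂ)/445*Complex.I^2 + ((2873):ℂ)/1780*Complex.I^3 + ((489):ℂ)/178*Complex.I^4)*c32)*Complex.I_sq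
  have ec21 : c21 = 0 := by linear_combination (((-939):ℂ)/1780 + ((121):ℂ)/890*Complex.I) * h0 + (((6):ℂ)/445 + ((-31):ℂ)/14240*Complex.I) * h1 + (((-799):ℂ)/10680 + ((-171):ℂ)/3560*Complex.I) * h2 + (((673):ℂ)/1780 + ((-1807):ℂ)/5340*Complex.I) * h3 + (((-11):ℂ)/1068 + ((3):ℂ)/178*Complex.I) * h4 + (((-63):ℂ)/1780 + ((-1643):ℂ)/14240*Complex.I) * h5 + (((109):ℂ)/356 + ((217):ℂ)/1424*Complex.I) * h6 + (((127):ℂ)/356 + ((169):ℂ)/2136*Complex.I) * h7 + (((-214):ℂ)/445 + ((-799):ℂ)/3560*Complex.I) * h8 + (((-359):ℂ)/3560 + ((751):ℂ)/10680*Complex.I) * h9 + (((377):ℂ)/1780 + ((1679):ℂ)/10680*Complex.I) * h10 + (((-13):ℂ)/356 + ((83):ℂ)/712*Complex.I) * h11 + ((((-65):ℂ)/89 + ((-119):ℂ)/89*Complex.I + ((65):ℂ)/89*Complex.I^2)*c12 + (((24):ℂ)/89 + ((-65):ℂ)/89*Complex.I^2)*c21 + (((-684):ℂ)/445 + ((-3007):ℂ)/1780*Complex.I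 + ((250):ℂ)/89*Complex.I^2 + ((-91):ℂ)/356*Complex.I^3)*c22 + (((-65):ℂ)/89 + ((119):ℂ)/89*Complex.I + ((65):ℂ)/89*Complex.I^2)*c30 + (((-684):ℂ)/445 + ((-299):ℂ)/1780*Complex.I + ((628):ℂ)/445*Complex.I^2 + ((91):ℂ)/356*Complex.I^3)*c31 + (((-215):ℂ)/89 + ((-1811):ℂ)/445*Complex.I + ((161):ℂ)/89*Complex.I^2 + ((1283):ℂ)/890*Complex.I^3 + ((325):ℂ)/89*Complex.I^4)*c32)*Complex.I_sq
  have ec22 : c22 = 0 := by linear_combination (((-91):ℂ)/1780 + ((17):ℂ)/445*Complex.I) * h0 + (((141):ℂ)/28480 + ((3):ℂ)/7120*Complex.I) * h1 + (((71):ℂ)/21360 + ((-5):ℂ)/1068*Complex.I) * h2 + (((-13):ℂ)/1335 + ((-469):ℂ)/10680*Complex.I) * h3 + (((5):ℂ)/1068 + ((2):ℂ)/267*Complex.I) * h4 + (((-3):ℂ)/28480 + ((-27):ℂ)/1780*Complex.I) * h5 + (((1651):ℂ)/14240 + ((-121):ℂ)/7120*Complex.I) * h6 + (((-47):ℂ)/2136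 + ((-1):ℂ)/534*Complex.I) * h7 + (((-69):ℂ)/1424 + ((71):ℂ)/7120*Complex.I) * h8 + (((-631):ℂ)/21360 + ((157):ℂ)/5340*Complex.I) * h9 + (((7):ℂ)/1335 + ((-7):ℂ)/2136*Complex.I) * h10 + (((191):ℂ)/7120 + ((3):ℂ)/7120*Complex.I) * h11 + ((((-101):ℂ)/890 + ((-237):ℂ)/1780*Complex.I + ((101):ℂ)/890*Complex.I^2)*c12 + (((-101):ℂ)/890 + ((-101):ℂ)/890*Complex.I^2)*c21 + (((1929):ℂ)/3560 + ((-115):ℂ)/356*Complex.I + ((-233):ℂ)/3560*Complex.I^2 + ((-111):ℂ)/890*Complex.I^3)*c22 + (((-101):ℂ)/890 + ((237):ℂ)/1780*Complex.I + ((101):ℂ)/890*Complex.I^2)*c30 + (((-1631):ℂ)/3560 + ((36):ℂ)/445*Complex.I + ((1511):ℂ)/3560*Complex.I^2 + ((111):ℂ)/890*Complex.I^3)*c31 + (((-201):ℂ)/178 + ((-789):ℂ)/890*Complex.I + ((427):ℂ)/445*Complex.I^2 + ((201):ℂ)/1780*Complex.I^3 + ((101):ℂ)/178*Complex.I^4)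*c32)*Complex.I_sq
  have ec30 : c30 = 0 := by linear_combination (((5):ℂ)/356 + ((2):ℂ)/89*Complex.I) * h0 + (((7):ℂ)/11392 + ((-15):ℂ)/2848*Complex.I) * h1 + (((-173):ℂ)/42720 + ((269):ℂ)/10680*Complex.I) * h2 + (((-1049):ℂ)/21360 + ((-557):ℂ)/21360*Complex.I) * h3 + (((17):ℂ)/4272 + ((-11):ℂ)/1068*Complex.I) * h4 + (((-1349):ℂ)/56960 + ((223):ℂ)/21360*Complex.I) * h5 + (((1089):ℂ)/28480 + ((711):ℂ)/14240*Complex.I) * h6 + (((3):ℂ)/712 + ((-16):ℂ)/267*Complex.I) * h7 + (((-631):ℂ)/14240 + ((-173):ℂ)/14240*Complex.I) * h8 + (((43):ℂ)/2848 + ((-73):ℂ)/2136*Complex.I) * h9 + (((647):ℂ)/21360 + ((341):ℂ)/21360*Complex.I) * h10 + (((209):ℂ)/14240 + ((1021):ℂ)/42720*Complex.I) * h11 + ((((-117):ℂ)/890 + ((407):ℂ)/3560*Complex.I + ((-211):ℂ)/1780*Complex.I^2)*c12 + (((-117):ℂ)/890 + ((211):ℂ)/1780*Complex.I^2)*c21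 + (((-2657):ℂ)/7120 + ((1737):ℂ)/3560*Complex.I + ((-227):ℂ)/7120*Complex.I^2 + ((-429):ℂ)/1780*Complex.I^3)*c22 + (((773):ℂ)/890 + ((-407):ℂ)/3560*Complex.I + ((-211):ℂ)/1780*Complex.I^2)*c30 + (((-2657):ℂ)/7120 + ((87):ℂ)/178*Complex.I + ((277):ℂ)/1424*Complex.I^2 + ((429):ℂ)/1780*Complex.I^3)*c31 + (((-101):ℂ)/89 + ((1363):ℂ)/890*Complex.I + ((183):ℂ)/890*Complex.I^2 + ((493):ℂ)/3560*Complex.I^3 + ((-211):ℂ)/356*Complex.I^4)*c32)*Complex.I_sq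
  have ec31 : c31 = 0 := by linear_combination (((-1):ℂ)/20 + ((-1):ℂ)/10*Complex.I) * h0 + (((1):ℂ)/320 + ((1):ℂ)/160*Complex.I) * h1 + (((-1):ℂ)/80 + ((-1):ℂ)/40*Complex.I) * h2 + (((1):ℂ)/15 + ((11):ℂ)/120*Complex.I) * h3 + (((11):ℂ)/960 + ((1):ℂ)/480*Complex.I) * h5 + (((-1):ℂ)/32 + (0)*Complex.I) * h6 + (((1):ℂ)/24 + ((1):ℂ)/12*Complex.I) * h7 + (((1):ℂ)/80 + ((-3):ℂ)/80*Complex.I) * h8 + (((-1):ℂ)/240 + ((-1):ℂ)/120*Complex.I) * h9 + (((-1):ℂ)/60 + ((1):ℂ)/120*Complex.I) * h10 + (((-1):ℂ)/48 + ((-1):ℂ)/48*Complex.I) * h11 + ((((1):ℂ)/20 + ((-1):ℂ)/20*Complex.I + ((-1):ℂ)/20*Complex.I^2)*c12 + (((1):ℂ)/20 + ((1):ℂ)/20*Complex.I^2)*c21 + (((1):ℂ)/40 + ((-1):ℂ)/5*Complex.I + ((11):ℂ)/40*Complex.I^2 + ((11):ℂ)/20*Complex.I^3)*c22 + (((1):ℂ)/20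 + ((1):ℂ)/20*Complex.I + ((-1):ℂ)/20*Complex.I^2)*c30 + (((41):ℂ)/40 + ((-1):ℂ)/20*Complex.I + ((-29):ℂ)/40*Complex.I^2 + ((-11):ℂ)/20*Complex.I^3)*c31 + (((1):ℂ)/4 + ((-1):ℂ)/10*Complex.I + ((1):ℂ)/10*Complex.I^2 + ((-1):ℂ)/4*Complex.I^3 + ((-1):ℂ)/4*Complex.I^4)*c32)*Complex.I_sq
  have ec32 : c32 = 0 := by linear_combination (((123):ℂ)/1780 + ((1):ℂ)/1780*Complex.I) * h0 + (((-83):ℂ)/28480 + ((-13):ℂ)/14240*Complex.I) * h1 + (((217):ℂ)/21360 + ((49):ℂ)/10680*Complex.I) * h2 + (((-91):ℂ)/1780 + ((23):ℂ)/1068*Complex.I) * h3 + (((1):ℂ)/267 + ((-5):ℂ)/2136*Complex.I) * h4 + (((-5):ℂ)/17088 + ((201):ℂ)/14240*Complex.I) * h5 + (((-477):ℂ)/14240 + ((-21):ℂ)/890*Complex.I) * h6 + (((-91):ℂ)/2136 + ((-7):ℂ)/712*Complex.I) * h7 + (((347):ℂ)/7120 + ((217):ℂ)/7120*Complex.I)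 * h8 + (((403):ℂ)/21360 + ((-29):ℂ)/3560*Complex.I) * h9 + (((-2):ℂ)/89 + ((-103):ℂ)/5340*Complex.I) * h10 + (((49):ℂ)/21360 + ((-51):ℂ)/7120*Complex.I) * h11 + ((((13):ℂ)/445 + ((291):ℂ)/1780*Complex.I + ((-13):ℂ)/445*Complex.I^2)*c12 + (((13):ℂ)/445 + ((13):ℂ)/445*Complex.I^2)*c21 + (((137):ℂ)/3560 + ((43):ℂ)/178*Complex.I + ((-1201):ℂ)/3560*Complex.I^2 + ((-53):ℂ)/1780*Complex.I^3)*c22 + (((13):ℂ)/445 + ((-291):ℂ)/1780*Complex.I + ((-13):ℂ)/445*Complex.I^2)*c30 + (((137):ℂ)/3560 + ((133):ℂ)/1780*Complex.I + ((-233):ℂ)/3560*Complex.I^2 + ((53):ℂ)/1780*Complex.I^3)*c31 + (((62):ℂ)/89 + ((597):ℂ)/890*Complex.I + ((-109):ℂ)/178*Complex.I^2 + ((-213):ℂ)/1780*Complex.I^3 + ((-13):ℂ)/89*Complex.I^4)*c32)*Complex.I_sq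
  exact ⟨ec00, ec01, ec02, ec10, ec11, ec12, ec20, ec21, ec22, ec30, ec31, ec32⟩

lemma polar (h12 : ∀ a b c d e', C a b c d e' = C b a c d e')
    (h23 : ∀ a b c d e', C a b c d e' = C a c b d e')
    (h45 : ∀ a b c d e', C a b c d e' = C a b c e' d)
    (H : ∀ z, Qf C z z z z z = 0) :
    ∀ u1 u2 u3 v1 v2, Qf C u1 u2 u3 v1 v2 = 0 := by
  have three : (3:ℂ) ≠ 0 := by norm_num
  have two : (2:ℂ) ≠ 0 := by norm_num
  -- Stage 1
  have H2 : ∀ w z, Qf C w z z z z = 0 := by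
    intro w z
    have key := L1 (Qf C z z z z z)
      (Qf C z z z w z + Qf C z z z z w)
      (Qf C z z z w w)
      (Qf C w z z z z + Qf C z w z z z + Qf C z z w z z)
      (Qf C w z z w z + Qf C w z z z w + Qf C z w z w z + Qf C z w z z w
        + Qf C z z w w z + Qf C z z w z w)
      (Qf C w z z w w + Qf C z w z w w + Qf C z z w w w)
      (Qf C w w z z z + Qf C w z w z z + Qf C z w w z z)
      (Qf C w w z w z + Qf C w w z z w + Qf C w z w w z + Qf C w z w z w
        + Qf C z w w w z + Qf C z w w z w)
      (Qf C w w z w w + Qf C w z w w w + Qf C z w w w w)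
      (Qf C w w w z z)
      (Qf C w w w w z + Qf C w w w z w)
      (Qf C w w w w w)
      (by
        intro s
        have h0 := H (z + s • w)
        simp only [Qf1, Qf2, Qf3, Qf4, Qf5] at h0
        linear_combination h0)
    have e := key.2.2.2.1
    have eq1 : Qf C z w z z z = Qf C w z z z z := Qswap12 h12 z w z z z
    have eq2 : Qf C z z w z z = Qf C z w z z z := Qswap23 h23 z z w z z
    have h3Q : (3:ℂ) * Qf C w z z z z = 0 := by linear_combination e - 2 * eq1 - eq2
    exact (mul_eq_zero.mp h3Q).resolve_left three
  -- Stage 2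
  have H3 : ∀ w u z, Qf C w u z z z = 0 := by
    intro w u z
    have key := L1 (Qf C w z z z z)
      (Qf C w z z u z + Qf C w z z z u)
      (Qf C w z z u u)
      (Qf C w u z z z + Qf C w z u z z)
      (Qf C w u z u z + Qf C w u z z u + Qf C w z u u z + Qf C w z u z u)
      (Qf C w u z u u + Qf C w z u u u)
      (Qf C w u u z z)
      (Qf C w u u u z + Qf C w u u z u)
      (Qf C w u u u u)
      0 0 0
      (by
        intro s
        have h0 := H2 w (z + s • u)
        simp only [Qf2, Qf3, Qf4, Qf5] at h0
        linear_combination h0)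
    have e := key.2.2.2.1
    have eq1 : Qf C w z u z z = Qf C w u z z z := Qswap23 h23 w z u z z
    have h2Q : (2:ℂ) * Qf C w u z z z = 0 := by linear_combination e - eq1
    exact (mul_eq_zero.mp h2Q).resolve_left two
  -- Stage 3
  have H4 : ∀ w u v z, Qf C w u v z z = 0 := by
    intro w u v z
    have key := L1 (Qf C w u z z z)
      (Qf C w u z v z + Qf C w u z z v)
      (Qf C w u z v v)
      (Qf C w u v z z)
      (Qf C w u v v z + Qf C w u v z v)
      (Qf C w u v v v)
      0 0 0 0 0 0
      (by
        intro s
        have h0 := H3 w u (z + s • v)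
        simp only [Qf3, Qf4, Qf5] at h0
        linear_combination h0)
    exact key.2.2.2.1
  -- Stage 4
  intro u1 u2 u3 v1 v2
  have key := L1 (Qf C u1 u2 u3 v2 v2)
    (Qf C u1 u2 u3 v1 v2 + Qf C u1 u2 u3 v2 v1)
    (Qf C u1 u2 u3 v1 v1)
    0 0 0 0 0 0 0 0 0
    (by
      intro s
      have h0 := H4 u1 u2 u3 (v2 + s • v1)
      simp only [Qf4, Qf5] at h0
      linear_combination h0)
  have e := key.2.1
  have eq1 : Qf C u1 u2 u3 v2 v1 = Qf C u1 u2 u3 v1 v2 := Qswap45 h45 u1 u2 u3 v2 v1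
  have h2Q : (2:ℂ) * Qf C u1 u2 u3 v1 v2 = 0 := by linear_combination e - eq1
  exact (mul_eq_zero.mp h2Q).resolve_left two

noncomputable def bas (n : ℕ) (i : Fin n) : Fin n → ℂ := fun j => if j = i then 1 else 0

lemma conj_bas (n : ℕ) (i j : Fin n) : (starRingEnd ℂ) (bas n i j) = bas n i j := by
  unfold bas; split <;> simp

lemma Qf_basis (α β γ η ξ : Fin n) :
    Qf C (bas n α) (bas n β) (bas n γ) (bas n η) (bas n ξ) = C α β γ η ξ := by
  simp only [Qf, bas, apply_ite (starRingEnd ℂ), map_one, map_zero, mul_ite, ite_mul, mul_one, mul_zero, zero_mul, one_mul,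
    Finset.sum_ite_irrel, Finset.sum_const_zero, Finset.sum_ite_eq', Finset.mem_univ, if_true]

noncomputable def kronC (n : ℕ) (a b : Fin n) : ℂ := if a = b then 1 else 0

noncomputable def Sf (n e : ℕ) (x y η ξ : Fin n) : ℂ :=
  epsC n e x * epsC n e y * (kronC n x η * kronC n y ξ + kronC n x ξ * kronC n y η)

noncomputable def Rt (n e : ℕ) (B : Fin n → Fin n → ℂ) (δ : Fin n)
    (α β γ η ξ : Fin n) : ℂ :=
  B α δ * Sf n e β γ η ξ + B β δ * Sf n e α γ η ξ + B γ δ * Sf n e α β η ξ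

lemma sum3prod (F G H : Fin n → ℂ) :
    ∑ α : Fin n, ∑ β : Fin n, ∑ γ : Fin n, F α * G β * H γ
      = (∑ α : Fin n, F α) * (∑ β : Fin n, G β) * (∑ γ : Fin n, H γ) := by
  rw [Finset.sum_mul_sum, Finset.sum_mul]
  refine Finset.sum_congr rfl fun α _ => ?_
  rw [Finset.sum_mul]
  refine Finset.sum_congr rfl fun β _ => ?_
  rw [Finset.mul_sum]

lemma Rt_eval (n e : ℕ) (B : Fin n → Fin n → ℂ) (δ : Fin n) (z : Fin n → ℂ) :
    Qf (Rt n e B δ) z z z z z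
      = 6 * (hermSelf n e z) ^ 2 * ∑ γ : Fin n, B γ δ * z γ := by
  have inner : ∀ α β γ : Fin n,
      (∑ η : Fin n, ∑ ξ : Fin n, Rt n e B δ α β γ η ξ * z α * z β * z γ
          * (starRingEnd ℂ) (z η) * (starRingEnd ℂ) (z ξ))
      = (B α δ * z α) * (epsC n e β * z β * (starRingEnd ℂ) (z β))
          * (epsC n e γ * z γ * (starRingEnd ℂ) (z γ)) * 2
      + (epsC n e α * z α * (starRingEnd ℂ) (z α)) * (B β δ * z β)
          * (epsC n e γ * z γ * (starRingEnd ℂ) (z γ)) * 2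
      + (epsC n e α * z α * (starRingEnd ℂ) (z α))
          * (epsC n e β * z β * (starRingEnd ℂ) (z β)) * (B γ δ * z γ) * 2 := by
    intro α β γ
    simp only [Rt, Sf, kronC, add_mul, mul_add, mul_ite, ite_mul, mul_one, one_mul,
      mul_zero, zero_mul, Finset.sum_add_distrib, Finset.sum_ite_irrel,
      Finset.sum_const_zero, Finset.sum_ite_eq, Finset.sum_ite_eq', Finset.mem_univ,
      if_true]
    ring
  calc Qf (Rt n e B δ) z z z z z
      = ∑ α : Fin n, ∑ β : Fin n, ∑ γ : Fin n,
          ((B α δ * z α) * (epsC n e β * z β * (starRingEnd ℂ) (z β))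
            * (epsC n e γ * z γ * (starRingEnd ℂ) (z γ)) * 2
          + (epsC n e α * z α * (starRingEnd ℂ) (z α)) * (B β δ * z β)
            * (epsC n e γ * z γ * (starRingEnd ℂ) (z γ)) * 2
          + (epsC n e α * z α * (starRingEnd ℂ) (z α))
            * (epsC n e β * z β * (starRingEnd ℂ) (z β)) * (B γ δ * z γ) * 2) := by
        unfold Qf
        exact Finset.sum_congr rfl fun α _ => Finset.sum_congr rfl fun β _ =>
          Finset.sum_congr rfl fun γ _ => inner α β γ
    _ = (∑ α : Fin n, (B α δ * z α) * 2) * (∑ β : Fin n, epsC n e β * z β * (starRingEnd ℂ) (z β))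
          * (∑ γ : Fin n, epsC n e γ * z γ * (starRingEnd ℂ) (z γ))
        + (∑ α : Fin n, (epsC n e α * z α * (starRingEnd ℂ) (z α)) * 2)
          * (∑ β : Fin n, B β δ * z β)
          * (∑ γ : Fin n, epsC n e γ * z γ * (starRingEnd ℂ) (z γ))
        + (∑ α : Fin n, (epsC n e α * z α * (starRingEnd ℂ) (z α)) * 2)
          * (∑ β : Fin n, epsC n e β * z β * (starRingEnd ℂ) (z β))
          * (∑ γ : Fin n, B γ δ * z γ) := by
        rw [← sum3prod, ← sum3prod, ← sum3prod, ← Finset.sum_add_distrib]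
        simp only [← Finset.sum_add_distrib]
        exact Finset.sum_congr rfl fun α _ => Finset.sum_congr rfl fun β _ =>
          Finset.sum_congr rfl fun γ _ => by ring
    _ = 6 * (hermSelf n e z) ^ 2 * ∑ γ : Fin n, B γ δ * z γ := by
        unfold hermSelf
        repeat rw [← Finset.sum_mul]
        ring

lemma Qf_sub {C1 C2 : Fin n → Fin n → Fin n → Fin n → Fin n → ℂ} (k : ℂ)
    (u1 u2 u3 v1 v2 : Fin n → ℂ) :
    Qf (fun a b c d e' => C1 a b c d e' - k * C2 a b c d e') u1 u2 u3 v1 v2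
      = Qf C1 u1 u2 u3 v1 v2 - k * Qf C2 u1 u2 u3 v1 v2 := by
  simp only [Qf, Finset.mul_sum, ← Finset.sum_sub_distrib]
  exact Finset.sum_congr rfl fun _ _ => Finset.sum_congr rfl fun _ _ =>
    Finset.sum_congr rfl fun _ _ => Finset.sum_congr rfl fun _ _ =>
    Finset.sum_congr rfl fun _ _ => by ring

lemma eps_sq (n e : ℕ) (μ : Fin n) : epsC n e μ * epsC n e μ = 1 := by
  unfold epsC; split <;> norm_num

lemma eps_ne (n e : ℕ) (μ : Fin n) : epsC n e μ ≠ 0 := by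
  unfold epsC; split <;> norm_num

lemma Sf_all (n e : ℕ) (μ : Fin n) : Sf n e μ μ μ μ = 2 := by
  unfold Sf kronC; simp; linear_combination 2 * eps_sq n e μ

lemma Sf_y (n e : ℕ) {μ ν : Fin n} (h : μ ≠ ν) : Sf n e μ ν μ μ = 0 := by
  unfold Sf kronC; simp [Ne.symm h]

lemma Sf_xi (n e : ℕ) {μ ν : Fin n} (h : μ ≠ ν) : Sf n e μ μ μ ν = 0 := by
  unfold Sf kronC; simp [h]

lemma Sf_pair (n e : ℕ) {μ ν : Fin n} (h : μ ≠ ν) :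
    Sf n e μ ν μ ν = epsC n e μ * epsC n e ν := by
  unfold Sf kronC; simp [h, Ne.symm h]

end StmtAux

/-- Let `A_{αβγδη̄ξ̄}` be symmetric in the four unbarred indices and
in the two barred indices. If for all `z, a ∈ ℂ^n`
`Σ A_{αβγδη̄ξ̄} z^α z^β z^γ a^δ conj(z^η) conj(z^ξ)
  = (6/((n+1)(n+2)))·⟨z,z⟩²·Σ B_{γδ} z^γ a^δ`
where `B_{γδ} = Σ_{α,β} ε_α ε_β A_{αβγδᾱβ̄}`, then `A = 0`. -/
theorem stmt11 (n e : ℕ) (hn : 2 ≤ n) (he1 : n ≤ 2 * e) (he2 : e ≤ n)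
    (A : Fin n → Fin n → Fin n → Fin n → Fin n → Fin n → ℂ)
    (hsym1 : ∀ α β γ δ η ξ, A α β γ δ η ξ = A β α γ δ η ξ)
    (hsym2 : ∀ α β γ δ η ξ, A α β γ δ η ξ = A α γ β δ η ξ)
    (hsym3 : ∀ α β γ δ η ξ, A α β γ δ η ξ = A α β δ γ η ξ)
    (hsym4 : ∀ α β γ δ η ξ, A α β γ δ η ξ = A α β γ δ ξ η)
    (heq : ∀ z a : Fin n → ℂ,
      (∑ α : Fin n, ∑ β : Fin n, ∑ γ : Fin n, ∑ δ : Fin n, ∑ η : Fin n, ∑ ξ : Fin n,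
          A α β γ δ η ξ * z α * z β * z γ * a δ
            * (starRingEnd ℂ) (z η) * (starRingEnd ℂ) (z ξ))
        = (6 / (((n : ℂ) + 1) * ((n : ℂ) + 2))) * (hermSelf n e z) ^ 2
            * ∑ γ : Fin n, ∑ δ : Fin n, traceB n e A γ δ * z γ * a δ) :
    ∀ α β γ δ η ξ, A α β γ δ η ξ = 0 := by

  set cc : ℂ := 6 / (((n : ℂ) + 1) * ((n : ℂ) + 2)) with hcc
  set B : Fin n → Fin n → ℂ := traceB n e A with hB
  have hn1 : ((n : ℂ) + 1) ≠ 0 := by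
    have : ((n + 1 : ℕ) : ℂ) ≠ 0 := Nat.cast_ne_zero.mpr (by omega)
    push_cast at this; exact this
  have hn2 : ((n : ℂ) + 2) ≠ 0 := by
    have : ((n + 2 : ℕ) : ℂ) ≠ 0 := Nat.cast_ne_zero.mpr (by omega)
    push_cast at this; exact this
  have hccne : cc ≠ 0 := div_ne_zero (by norm_num) (mul_ne_zero hn1 hn2)
  have hc6 : cc / 6 ≠ 0 := div_ne_zero hccne (by norm_num)
  -- Step A : collapse a = basis δ
  have hQA : ∀ (δ : Fin n) (z : Fin n → ℂ),
      Qf (fun α β γ η ξ => A α β γ δ η ξ) z z z z z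
        = cc * (hermSelf n e z) ^ 2 * ∑ γ : Fin n, B γ δ * z γ := by
    intro δ z
    have h := heq z (bas n δ)
    simp only [bas, mul_ite, ite_mul, mul_one, mul_zero, zero_mul,
      Finset.sum_ite_irrel, Finset.sum_const_zero, Finset.sum_ite_eq',
      Finset.mem_univ, if_true] at h
    exact h
  -- Step B+C+D : polarization gives the formula for A
  have hF : ∀ δ α β γ η ξ, A α β γ δ η ξ = cc / 6 * Rt n e B δ α β γ η ξ := by
    intro δ
    have hzero : ∀ z, Qf (fun α β γ η ξ =>
        A α β γ δ η ξ - cc / 6 * Rt n e B δ α β γ η ξ) z z z z z = 0 := by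
      intro z
      rw [Qf_sub]
      rw [hQA δ z, Rt_eval n e B δ z]
      ring
    have h12 : ∀ a b c d e', (fun α β γ η ξ =>
        A α β γ δ η ξ - cc / 6 * Rt n e B δ α β γ η ξ) a b c d e'
        = (fun α β γ η ξ => A α β γ δ η ξ - cc / 6 * Rt n e B δ α β γ η ξ) b a c d e' := by
      intro a b c d e'
      simp only
      rw [hsym1]; unfold Rt Sf; ring
    have h23 : ∀ a b c d e', (fun α β γ η ξ =>
        A α β γ δ η ξ - cc / 6 * Rt n e B δ α β γ η ξ) a b c d e'
        = (fun α β γ η ξ => A α β γ δ η ξ - cc / 6 * Rt n e B δ α β γ η ξ) a c b d e' := by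
      intro a b c d e'
      simp only
      rw [hsym2]; unfold Rt Sf; ring
    have h45 : ∀ a b c d e', (fun α β γ η ξ =>
        A α β γ δ η ξ - cc / 6 * Rt n e B δ α β γ η ξ) a b c d e'
        = (fun α β γ η ξ => A α β γ δ η ξ - cc / 6 * Rt n e B δ α β γ η ξ) a b c e' d := by
      intro a b c d e'
      simp only
      rw [hsym4]; unfold Rt Sf; ring
    have hall := polar h12 h23 h45 hzero
    intro α β γ η ξ
    have := hall (bas n α) (bas n β) (bas n γ) (bas n η) (bas n ξ)
    rw [Qf_basis] at this
    simpa [sub_eq_zero] using this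
  -- Step F : off-diagonal B vanishes
  have step : ∀ μ ν : Fin n, μ ≠ ν → 3 * B μ ν = B ν μ := by
    intro μ ν hμν
    have h1 := hF ν μ μ μ μ μ
    have h2 := hF μ μ μ ν μ μ
    have h3 := hsym3 μ μ μ ν μ μ
    simp only [Rt] at h1 h2
    rw [Sf_all] at h1 h2
    rw [Sf_y n e hμν] at h2
    have key := (h1.symm.trans h3).trans h2
    have key2 : cc / 6 * (6 * B μ ν) = cc / 6 * (2 * B ν μ) := by linear_combination key
    have := mul_left_cancel₀ hc6 key2
    linear_combination this / 2
  have Boff : ∀ μ ν : Fin n, μ ≠ ν → B μ ν = 0 := by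
    intro μ ν hμν
    have s1 := step μ ν hμν
    have s2 := step ν μ hμν.symm
    linear_combination (3 / 8 : ℂ) * s1 + (1 / 8 : ℂ) * s2
  -- Step G : diagonal B vanishes
  have Bdiag : ∀ μ : Fin n, B μ μ = 0 := by
    intro μ
    have : Nontrivial (Fin n) := Fin.nontrivial_iff_two_le.mpr hn
    obtain ⟨ν, hνμ⟩ := exists_ne μ
    have hμν : μ ≠ ν := hνμ.symm
    have h1 := hF ν μ μ μ μ ν
    have h2 := hF μ μ μ ν μ ν
    have h3 := hsym3 μ μ μ ν μ ν
    simp only [Rt] at h1 h2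
    rw [Sf_xi n e hμν] at h1 h2
    rw [Sf_pair n e hμν] at h2
    have key := (h1.symm.trans h3).trans h2
    have key2 : cc / 6 * (2 * (epsC n e μ * epsC n e ν) * B μ μ)
        = cc / 6 * (2 * (epsC n e μ * epsC n e ν) * 0) := by
      linear_combination -key
    have k3 := mul_left_cancel₀ hc6 key2
    have hne : (2 : ℂ) * (epsC n e μ * epsC n e ν) ≠ 0 :=
      mul_ne_zero (by norm_num) (mul_ne_zero (eps_ne n e μ) (eps_ne n e ν))
    have k4 := mul_left_cancel₀ hne k3
    simpa using k4
  have hBzero : ∀ γ' δ' : Fin n, B γ' δ' = 0 := by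
    intro γ' δ'
    by_cases h : γ' = δ'
    · subst h; exact Bdiag γ'
    · exact Boff γ' δ' h
  intro α β γ δ η ξ
  rw [hF δ α β γ η ξ]
  simp only [Rt, hBzero]
  ring
end

section
/- Work in the polynomial ring ℂ[z¹,…,zⁿ, z̄¹,…, z̄ⁿ] in 2n independent variables and let Δ = Σ_{α=1}^{n} ε_α ∂²/∂z^α∂z̄^α. Let N_{αβγ̄δ̄} (α,β,γ,δ ∈ {1,…,n}) be complex numbers symmetric in (α,β) and in (γ,δ), and set F₂₂ = Σ N_{αβγ̄δ̄} z^α z^β z̄^γ z̄^δ. If ΔF₂₂ = 0, then Δ⁴(F₂₂²) is the constant polynomial 3·2⁵·Σ_{α,β,γ,δ=1}^{n} ε_α ε_β ε_γ ε_δ N_{αβγ̄δ̄} N_{γδᾱβ̄}. -/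
open MvPolynomial

/-- The operator `Δ = Σ_α ε_α ∂²/∂z^α∂z̄^α` on `ℂ[z¹,…,zⁿ,z̄¹,…,z̄ⁿ]`, where the
variables indexed by `Sum.inl α` are the `z^α` and those indexed by `Sum.inr α`
are the `z̄^α`. -/
noncomputable def DeltaOp (n e : ℕ)
    (P : MvPolynomial (Fin n ⊕ Fin n) ℂ) : MvPolynomial (Fin n ⊕ Fin n) ℂ :=
  ∑ α : Fin n,
    MvPolynomial.C (epsC n e α) * pderiv (Sum.inl α) (pderiv (Sum.inr α) P)

/-- `F₂₂ = Σ N_{αβγ̄δ̄} z^α z^β z̄^γ z̄^δ`. -/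
noncomputable def F22poly (n : ℕ) (N : Fin n → Fin n → Fin n → Fin n → ℂ) :
    MvPolynomial (Fin n ⊕ Fin n) ℂ :=
  ∑ α : Fin n, ∑ β : Fin n, ∑ γ : Fin n, ∑ δ : Fin n,
    MvPolynomial.C (N α β γ δ) * X (Sum.inl α) * X (Sum.inl β)
      * X (Sum.inr γ) * X (Sum.inr δ)

set_option linter.unusedSectionVars false
namespace Stmt12Aux

lemma sum_ite_const {α β : Type*} [Fintype α] [AddCommMonoid β] (c : Prop) [Decidable c]
    (f : α → β) : ∑ x : α, (if c then f x else 0) = if c then ∑ x : α, f x else 0 := by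
  split <;> simp

variable {n : ℕ}

noncomputable def Pz (N : Fin n → Fin n → Fin n → Fin n → ℂ) (a : Fin n) :
    MvPolynomial (Fin n ⊕ Fin n) ℂ :=
  ∑ b : Fin n, ∑ c : Fin n, ∑ d : Fin n,
    C (N a b c d) * X (Sum.inl b) * X (Sum.inr c) * X (Sum.inr d)

noncomputable def Qw (N : Fin n → Fin n → Fin n → Fin n → ℂ) (a : Fin n) :
    MvPolynomial (Fin n ⊕ Fin n) ℂ :=
  ∑ b : Fin n, ∑ c : Fin n, ∑ d : Fin n,
    C (N b c a d) * X (Sum.inl b) * X (Sum.inl c) * X (Sum.inr d)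

noncomputable def Rm (N : Fin n → Fin n → Fin n → Fin n → ℂ) (a b : Fin n) :
    MvPolynomial (Fin n ⊕ Fin n) ℂ :=
  ∑ c : Fin n, ∑ d : Fin n, C (N a c b d) * X (Sum.inl c) * X (Sum.inr d)

noncomputable def Wm (N : Fin n → Fin n → Fin n → Fin n → ℂ) (a b : Fin n) :
    MvPolynomial (Fin n ⊕ Fin n) ℂ :=
  ∑ c : Fin n, ∑ d : Fin n, C (N a b c d) * X (Sum.inr c) * X (Sum.inr d)

noncomputable def Vm (N : Fin n → Fin n → Fin n → Fin n → ℂ) (a b : Fin n) :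
    MvPolynomial (Fin n ⊕ Fin n) ℂ :=
  ∑ c : Fin n, ∑ d : Fin n, C (N c d a b) * X (Sum.inl c) * X (Sum.inl d)

noncomputable def zl (f : Fin n → ℂ) : MvPolynomial (Fin n ⊕ Fin n) ℂ :=
  ∑ c : Fin n, C (f c) * X (Sum.inl c)

noncomputable def wl (f : Fin n → ℂ) : MvPolynomial (Fin n ⊕ Fin n) ℂ :=
  ∑ c : Fin n, C (f c) * X (Sum.inr c)

section Derivs
variable (N : Fin n → Fin n → Fin n → Fin n → ℂ)
variable (hsym1 : ∀ α β γ δ, N α β γ δ = N β α γ δ)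
variable (hsym2 : ∀ α β γ δ, N α β γ δ = N α β δ γ)

include hsym1 in
lemma dzF (a : Fin n) : pderiv (Sum.inl a) (F22poly n N) = C 2 * Pz N a := by
  simp only [F22poly, Pz, map_sum, pderiv_mul, pderiv_C, pderiv_X, Pi.single_apply,
    Sum.inr.injEq, Sum.inl.injEq, reduceCtorEq, if_false, zero_mul, mul_zero, add_zero,
    zero_add, mul_ite, ite_mul, mul_one, one_mul, add_mul, Finset.sum_add_distrib, sum_ite_const]
  simp only [Finset.sum_ite_eq', Finset.mem_univ, if_true, Finset.mul_sum]
  rw [← Finset.sum_add_distrib]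
  refine Finset.sum_congr rfl fun b _ => ?_
  rw [← Finset.sum_add_distrib]
  refine Finset.sum_congr rfl fun c _ => ?_
  rw [← Finset.sum_add_distrib]
  refine Finset.sum_congr rfl fun d _ => ?_
  rw [hsym1 b a c d, map_ofNat]
  ring

include hsym2 in
lemma dwF (a : Fin n) : pderiv (Sum.inr a) (F22poly n N) = C 2 * Qw N a := by
  simp only [F22poly, Qw, map_sum, pderiv_mul, pderiv_C, pderiv_X, Pi.single_apply,
    Sum.inr.injEq, Sum.inl.injEq, reduceCtorEq, if_false, zero_mul, mul_zero, add_zero,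
    zero_add, mul_ite, ite_mul, mul_one, one_mul, add_mul, Finset.sum_add_distrib, sum_ite_const]
  simp only [Finset.sum_ite_eq', Finset.mem_univ, if_true, Finset.mul_sum]
  rw [← Finset.sum_add_distrib]
  refine Finset.sum_congr rfl fun b _ => ?_
  rw [← Finset.sum_add_distrib]
  refine Finset.sum_congr rfl fun c _ => ?_
  rw [← Finset.sum_add_distrib]
  refine Finset.sum_congr rfl fun d _ => ?_
  rw [hsym2 b c d a, map_ofNat]
  ring

include hsym2 in
lemma dwP (a b : Fin n) : pderiv (Sum.inr b) (Pz N a) = C 2 * Rm N a b := by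
  simp only [Pz, Rm, map_sum, pderiv_mul, pderiv_C, pderiv_X, Pi.single_apply,
    Sum.inr.injEq, Sum.inl.injEq, reduceCtorEq, if_false, zero_mul, mul_zero, add_zero,
    zero_add, mul_ite, ite_mul, mul_one, one_mul, add_mul, Finset.sum_add_distrib, sum_ite_const]
  simp only [Finset.sum_ite_eq', Finset.mem_univ, if_true, Finset.mul_sum]
  rw [← Finset.sum_add_distrib]
  refine Finset.sum_congr rfl fun c _ => ?_
  rw [← Finset.sum_add_distrib]
  refine Finset.sum_congr rfl fun d _ => ?_
  rw [hsym2 a c d b, map_ofNat]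
  ring

lemma dzP (a b : Fin n) : pderiv (Sum.inl b) (Pz N a) = Wm N a b := by
  simp only [Pz, Wm, map_sum, pderiv_mul, pderiv_C, pderiv_X, Pi.single_apply,
    Sum.inr.injEq, Sum.inl.injEq, reduceCtorEq, if_false, zero_mul, mul_zero, add_zero,
    zero_add, mul_ite, ite_mul, mul_one, one_mul, add_mul, Finset.sum_add_distrib, sum_ite_const]
  simp only [Finset.sum_ite_eq', Finset.mem_univ, if_true]

include hsym1 in
lemma dzQ (a b : Fin n) : pderiv (Sum.inl b) (Qw N a) = C 2 * Rm N b a := by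
  simp only [Qw, Rm, map_sum, pderiv_mul, pderiv_C, pderiv_X, Pi.single_apply,
    Sum.inr.injEq, Sum.inl.injEq, reduceCtorEq, if_false, zero_mul, mul_zero, add_zero,
    zero_add, mul_ite, ite_mul, mul_one, one_mul, add_mul, Finset.sum_add_distrib, sum_ite_const]
  simp only [Finset.sum_ite_eq', Finset.mem_univ, if_true, Finset.mul_sum]
  rw [← Finset.sum_add_distrib]
  refine Finset.sum_congr rfl fun c _ => ?_
  rw [← Finset.sum_add_distrib]
  refine Finset.sum_congr rfl fun d _ => ?_
  rw [hsym1 c b a d, map_ofNat]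
  ring

lemma dwQ (a b : Fin n) : pderiv (Sum.inr b) (Qw N a) = Vm N a b := by
  simp only [Qw, Vm, map_sum, pderiv_mul, pderiv_C, pderiv_X, Pi.single_apply,
    Sum.inr.injEq, Sum.inl.injEq, reduceCtorEq, if_false, zero_mul, mul_zero, add_zero,
    zero_add, mul_ite, ite_mul, mul_one, one_mul, add_mul, Finset.sum_add_distrib, sum_ite_const]
  simp only [Finset.sum_ite_eq', Finset.mem_univ, if_true]

lemma dwR (a b c : Fin n) : pderiv (Sum.inr c) (Rm N a b) = zl (fun x => N a x b c) := by
  simp only [Rm, zl, map_sum, pderiv_mul, pderiv_C, pderiv_X, Pi.single_apply,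
    Sum.inr.injEq, Sum.inl.injEq, reduceCtorEq, if_false, zero_mul, mul_zero, add_zero,
    zero_add, mul_ite, ite_mul, mul_one, one_mul, add_mul, Finset.sum_add_distrib, sum_ite_const]
  simp only [Finset.sum_ite_eq', Finset.mem_univ, if_true]

lemma dzR (a b c : Fin n) : pderiv (Sum.inl c) (Rm N a b) = wl (fun d => N a c b d) := by
  simp only [Rm, wl, map_sum, pderiv_mul, pderiv_C, pderiv_X, Pi.single_apply,
    Sum.inr.injEq, Sum.inl.injEq, reduceCtorEq, if_false, zero_mul, mul_zero, add_zero,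
    zero_add, mul_ite, ite_mul, mul_one, one_mul, add_mul, Finset.sum_add_distrib, sum_ite_const]
  simp only [Finset.sum_ite_eq', Finset.mem_univ, if_true]

lemma dzW (a b c : Fin n) : pderiv (Sum.inl c) (Wm N a b) = 0 := by
  simp only [Wm, map_sum, pderiv_mul, pderiv_C, pderiv_X, Pi.single_apply,
    Sum.inr.injEq, Sum.inl.injEq, reduceCtorEq, if_false, zero_mul, mul_zero, add_zero,
    zero_add, Finset.sum_const_zero]

include hsym2 in
lemma dwW (a b c : Fin n) : pderiv (Sum.inr c) (Wm N a b) = C 2 * wl (fun d => N a b c d) := by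
  simp only [Wm, wl, map_sum, pderiv_mul, pderiv_C, pderiv_X, Pi.single_apply,
    Sum.inr.injEq, Sum.inl.injEq, reduceCtorEq, if_false, zero_mul, mul_zero, add_zero,
    zero_add, mul_ite, ite_mul, mul_one, one_mul, add_mul, Finset.sum_add_distrib, sum_ite_const]
  simp only [Finset.sum_ite_eq', Finset.mem_univ, if_true, Finset.mul_sum]
  rw [← Finset.sum_add_distrib]
  refine Finset.sum_congr rfl fun d _ => ?_
  rw [hsym2 a b d c, map_ofNat]
  ring

lemma dwV (a b c : Fin n) : pderiv (Sum.inr c) (Vm N a b) = 0 := by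
  simp only [Vm, map_sum, pderiv_mul, pderiv_C, pderiv_X, Pi.single_apply,
    Sum.inr.injEq, Sum.inl.injEq, reduceCtorEq, if_false, zero_mul, mul_zero, add_zero,
    zero_add, Finset.sum_const_zero]

include hsym1 in
lemma dzV (a b c : Fin n) : pderiv (Sum.inl c) (Vm N a b) = C 2 * zl (fun d => N c d a b) := by
  simp only [Vm, zl, map_sum, pderiv_mul, pderiv_C, pderiv_X, Pi.single_apply,
    Sum.inr.injEq, Sum.inl.injEq, reduceCtorEq, if_false, zero_mul, mul_zero, add_zero,
    zero_add, mul_ite, ite_mul, mul_one, one_mul, add_mul, Finset.sum_add_distrib, sum_ite_const]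
  simp only [Finset.sum_ite_eq', Finset.mem_univ, if_true, Finset.mul_sum]
  rw [← Finset.sum_add_distrib]
  refine Finset.sum_congr rfl fun d _ => ?_
  rw [hsym1 d c a b, map_ofNat]
  ring

lemma dzzl (f : Fin n → ℂ) (d : Fin n) : pderiv (Sum.inl d) (zl f) = C (f d) := by
  simp only [zl, map_sum, pderiv_mul, pderiv_C, pderiv_X, Pi.single_apply,
    Sum.inl.injEq, reduceCtorEq, if_false, zero_mul, mul_zero, add_zero, zero_add,
    mul_ite, mul_one, sum_ite_const, Finset.sum_ite_eq', Finset.mem_univ, if_true]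

lemma dwzl (f : Fin n → ℂ) (d : Fin n) : pderiv (Sum.inr d) (zl f) = 0 := by
  simp only [zl, map_sum, pderiv_mul, pderiv_C, pderiv_X, Pi.single_apply,
    reduceCtorEq, if_false, zero_mul, mul_zero, add_zero, zero_add, Finset.sum_const_zero]

lemma dwwl (f : Fin n → ℂ) (d : Fin n) : pderiv (Sum.inr d) (wl f) = C (f d) := by
  simp only [wl, map_sum, pderiv_mul, pderiv_C, pderiv_X, Pi.single_apply,
    Sum.inr.injEq, reduceCtorEq, if_false, zero_mul, mul_zero, add_zero, zero_add,
    mul_ite, mul_one, sum_ite_const, Finset.sum_ite_eq', Finset.mem_univ, if_true]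

lemma dzwl (f : Fin n → ℂ) (d : Fin n) : pderiv (Sum.inl d) (wl f) = 0 := by
  simp only [wl, map_sum, pderiv_mul, pderiv_C, pderiv_X, Pi.single_apply,
    reduceCtorEq, if_false, zero_mul, mul_zero, add_zero, zero_add, Finset.sum_const_zero]

end Derivs
end Stmt12Aux


section
variable {n : ℕ}

lemma Delta_mul (e : ℕ) (P Q : MvPolynomial (Fin n ⊕ Fin n) ℂ) :
    DeltaOp n e (P * Q) = DeltaOp n e P * Q + P * DeltaOp n e Q
      + ∑ a : Fin n, C (epsC n e a) *
        (pderiv (Sum.inl a) P * pderiv (Sum.inr a) Q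
          + pderiv (Sum.inr a) P * pderiv (Sum.inl a) Q) := by
  simp only [DeltaOp, pderiv_mul, map_add]
  rw [Finset.sum_mul, Finset.mul_sum, ← Finset.sum_add_distrib, ← Finset.sum_add_distrib]
  refine Finset.sum_congr rfl fun a _ => ?_
  ring

lemma Delta_sum {ι : Type*} (e : ℕ) (s : Finset ι)
    (f : ι → MvPolynomial (Fin n ⊕ Fin n) ℂ) :
    DeltaOp n e (∑ i ∈ s, f i) = ∑ i ∈ s, DeltaOp n e (f i) := by
  simp only [DeltaOp, map_sum, Finset.mul_sum]
  exact Finset.sum_comm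

lemma Delta_add (e : ℕ) (P Q : MvPolynomial (Fin n ⊕ Fin n) ℂ) :
    DeltaOp n e (P + Q) = DeltaOp n e P + DeltaOp n e Q := by
  simp only [DeltaOp, map_add, mul_add, Finset.sum_add_distrib]

lemma Delta_C_mul (e : ℕ) (r : ℂ) (P : MvPolynomial (Fin n ⊕ Fin n) ℂ) :
    DeltaOp n e (C r * P) = C r * DeltaOp n e P := by
  simp only [DeltaOp, pderiv_C_mul, Finset.mul_sum]
  refine Finset.sum_congr rfl fun a _ => ?_
  ring
end

namespace Stmt12Aux
section
variable {n : ℕ} (e : ℕ) (N : Fin n → Fin n → Fin n → Fin n → ℂ)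
variable (hsym1 : ∀ α β γ δ, N α β γ δ = N β α γ δ)
variable (hsym2 : ∀ α β γ δ, N α β γ δ = N α β δ γ)
include hsym1 hsym2

lemma DeltaF_eq : DeltaOp n e (F22poly n N)
    = ∑ c : Fin n, ∑ d : Fin n,
        C (4 * ∑ a : Fin n, epsC n e a * N a c a d) * X (Sum.inl c) * X (Sum.inr d) := by
  have step : DeltaOp n e (F22poly n N)
      = ∑ a : Fin n, C (epsC n e a) * (C 2 * (C 2 * Rm N a a)) := by
    simp only [DeltaOp]
    refine Finset.sum_congr rfl fun a _ => ?_
    rw [dwF N hsym2, pderiv_C_mul, dzQ N hsym1]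
  rw [step]
  simp only [Rm, Finset.mul_sum]
  rw [Finset.sum_comm]
  refine Finset.sum_congr rfl fun c _ => ?_
  rw [Finset.sum_comm]
  refine Finset.sum_congr rfl fun d _ => ?_
  rw [map_sum, Finset.sum_mul, Finset.sum_mul]
  refine Finset.sum_congr rfl fun a _ => ?_
  rw [C_mul, C_mul, map_ofNat, map_ofNat]
  ring

lemma trace0 (htrace : DeltaOp n e (F22poly n N) = 0) (c d : Fin n) :
    ∑ a : Fin n, epsC n e a * N a c a d = 0 := by
  have h := DeltaF_eq e N hsym1 hsym2
  rw [htrace] at h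
  have h2 := congrArg
    (eval (fun i : Fin n ⊕ Fin n =>
      if i = Sum.inl c then (1:ℂ) else if i = Sum.inr d then 1 else 0)) h
  simp only [map_zero, map_sum, map_mul, eval_C, eval_X, Sum.inl.injEq, Sum.inr.injEq,
    reduceCtorEq, if_false, mul_ite, ite_mul, mul_one, one_mul, mul_zero, zero_mul,
    sum_ite_const, Finset.sum_ite_eq', Finset.mem_univ, if_true] at h2
  have h4 : (4:ℂ) ≠ 0 := by norm_num
  field_simp at h2
  exact (mul_eq_zero.mp h2.symm).resolve_left h4

end
end Stmt12Aux

namespace Stmt12Aux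
section
variable {n : ℕ} (e : ℕ) (N : Fin n → Fin n → Fin n → Fin n → ℂ)
variable (hsym1 : ∀ α β γ δ, N α β γ δ = N β α γ δ)
variable (hsym2 : ∀ α β γ δ, N α β γ δ = N α β δ γ)
variable (htrace : DeltaOp n e (F22poly n N) = 0)
include hsym1 hsym2

omit hsym1 hsym2 in
lemma Dzl0 (f : Fin n → ℂ) : DeltaOp n e (zl f) = 0 := by
  simp only [DeltaOp, dwzl, map_zero, mul_zero, Finset.sum_const_zero]

omit hsym1 hsym2 in
lemma Dwl0 (f : Fin n → ℂ) : DeltaOp n e (wl f) = 0 := by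
  simp only [DeltaOp, dwwl, pderiv_C, mul_zero, Finset.sum_const_zero]

lemma DW0 (a b : Fin n) : DeltaOp n e (Wm N a b) = 0 := by
  simp only [DeltaOp, dwW N hsym2, pderiv_C_mul, dzwl, mul_zero,
    Finset.sum_const_zero]

lemma DV0 (a b : Fin n) : DeltaOp n e (Vm N a b) = 0 := by
  simp only [DeltaOp, dwV N, map_zero, mul_zero, Finset.sum_const_zero]

include htrace

lemma DP0 (a : Fin n) : DeltaOp n e (Pz N a) = 0 := by
  have key : ∀ d, ∑ b : Fin n, epsC n e b * N a b b d = 0 := by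
    intro d
    calc ∑ b : Fin n, epsC n e b * N a b b d
        = ∑ b : Fin n, epsC n e b * N b a b d :=
          Finset.sum_congr rfl fun b _ => by rw [hsym1 a b b d]
      _ = 0 := trace0 e N hsym1 hsym2 htrace a d
  simp only [DeltaOp, dwP N hsym2, pderiv_C_mul, dzR, wl, Finset.mul_sum]
  rw [Finset.sum_comm]
  refine Finset.sum_eq_zero fun d _ => ?_
  calc ∑ b : Fin n, C (epsC n e b) * (C 2 * (C (N a b b d) * X (Sum.inr d)))
      = (∑ b : Fin n, C (2 * (epsC n e b * N a b b d))) * X (Sum.inr d) := by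
        rw [Finset.sum_mul]
        refine Finset.sum_congr rfl fun b _ => ?_
        rw [C_mul, C_mul, map_ofNat]; ring
    _ = 0 := by rw [← map_sum, ← Finset.mul_sum, key d]; simp

lemma DQ0 (a : Fin n) : DeltaOp n e (Qw N a) = 0 := by
  have key : ∀ c, ∑ b : Fin n, epsC n e b * N c b a b = 0 := by
    intro c
    calc ∑ b : Fin n, epsC n e b * N c b a b
        = ∑ b : Fin n, epsC n e b * N b c b a :=
          Finset.sum_congr rfl fun b _ => by rw [hsym1 c b a b, hsym2 b c a b]
      _ = 0 := trace0 e N hsym1 hsym2 htrace c a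
  simp only [DeltaOp, dwQ N, Vm]
  have expand : ∀ b : Fin n, pderiv (Sum.inl b)
      ((∑ c : Fin n, ∑ d : Fin n, C (N c d a b) * X (Sum.inl c) * X (Sum.inl d) : MvPolynomial (Fin n ⊕ Fin n) ℂ))
      = ∑ c : Fin n, (C (N b c a b) + C (N c b a b)) * X (Sum.inl c) := by
    intro b
    simp only [map_sum, pderiv_mul, pderiv_C, pderiv_X, Pi.single_apply, Sum.inl.injEq,
      reduceCtorEq, if_false, zero_mul, mul_zero, add_zero, zero_add, mul_ite, ite_mul,
      mul_one, one_mul, add_mul, Finset.sum_add_distrib, sum_ite_const]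
    simp only [Finset.sum_ite_eq', Finset.mem_univ, if_true]
  simp only [expand, Finset.mul_sum]
  rw [Finset.sum_comm]
  refine Finset.sum_eq_zero fun c _ => ?_
  calc ∑ b : Fin n, C (epsC n e b) * ((C (N b c a b) + C (N c b a b)) * X (Sum.inl c))
      = (∑ b : Fin n, C (epsC n e b * N b c a b + epsC n e b * N c b a b)) * X (Sum.inl c) := by
        rw [Finset.sum_mul]
        refine Finset.sum_congr rfl fun b _ => ?_
        rw [map_add, C_mul, C_mul]; ring
    _ = 0 := by
        rw [← map_sum, Finset.sum_add_distrib]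
        have k2 : ∑ b : Fin n, epsC n e b * N b c a b = 0 := by
          calc ∑ b : Fin n, epsC n e b * N b c a b
              = ∑ b : Fin n, epsC n e b * N b c b a :=
                Finset.sum_congr rfl fun b _ => by rw [hsym2 b c a b]
            _ = 0 := trace0 e N hsym1 hsym2 htrace c a
        rw [k2, key c]; simp

lemma DR0 (a b : Fin n) : DeltaOp n e (Rm N a b) = 0 := by
  have key : ∑ c : Fin n, epsC n e c * N a c b c = 0 := by
    calc ∑ c : Fin n, epsC n e c * N a c b c
        = ∑ c : Fin n, epsC n e c * N c a c b :=
          Finset.sum_congr rfl fun c _ => by rw [hsym1 a c b c, hsym2 c a b c]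
      _ = 0 := trace0 e N hsym1 hsym2 htrace a b
  simp only [DeltaOp, dwR, zl]
  have expand : ∀ c : Fin n, pderiv (Sum.inl c)
      ((∑ x : Fin n, C (N a x b c) * X (Sum.inl x) : MvPolynomial (Fin n ⊕ Fin n) ℂ)) = C (N a c b c) := by
    intro c
    simp only [map_sum, pderiv_mul, pderiv_C, pderiv_X, Pi.single_apply, Sum.inl.injEq,
      reduceCtorEq, if_false, zero_mul, mul_zero, add_zero, zero_add, mul_ite, mul_one,
      sum_ite_const, Finset.sum_ite_eq', Finset.mem_univ, if_true]
  simp only [expand]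
  calc ∑ c : Fin n, C (epsC n e c) * C (N a c b c)
      = ∑ c : Fin n, C (epsC n e c * N a c b c) :=
        Finset.sum_congr rfl fun c _ => by rw [C_mul]
    _ = 0 := by rw [← map_sum, key]; simp

end
end Stmt12Aux

namespace Stmt12Aux
section
variable {n : ℕ} (e : ℕ) (N : Fin n → Fin n → Fin n → Fin n → ℂ)
variable (hsym1 : ∀ α β γ δ, N α β γ δ = N β α γ δ)
variable (hsym2 : ∀ α β γ δ, N α β γ δ = N α β δ γ)
variable (htrace : DeltaOp n e (F22poly n N) = 0)
include hsym1 hsym2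

omit hsym1 hsym2 in
lemma stage4 (f g : Fin n → ℂ) :
    DeltaOp n e (zl f * wl g) = C (∑ d : Fin n, epsC n e d * (f d * g d)) := by
  rw [Delta_mul, Dzl0, Dwl0]
  simp only [zero_mul, mul_zero, zero_add, dzzl, dwwl, dwzl, dzwl, add_zero]
  rw [map_sum]
  refine Finset.sum_congr rfl fun d _ => ?_
  rw [C_mul, C_mul]

omit hsym1 hsym2 in
lemma stage4' (f g : Fin n → ℂ) :
    DeltaOp n e (wl f * zl g) = C (∑ d : Fin n, epsC n e d * (g d * f d)) := by
  rw [mul_comm, stage4]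

include htrace in
lemma stage1 : DeltaOp n e (F22poly n N * F22poly n N)
    = C 8 * ∑ a : Fin n, C (epsC n e a) * (Pz N a * Qw N a) := by
  rw [Delta_mul, htrace]
  simp only [zero_mul, mul_zero, zero_add, dzF N hsym1, dwF N hsym2]
  rw [Finset.mul_sum]
  refine Finset.sum_congr rfl fun a _ => ?_
  rw [map_ofNat, map_ofNat]
  ring

include htrace in
lemma stage2 (a : Fin n) : DeltaOp n e (Pz N a * Qw N a)
    = ∑ b : Fin n, C (epsC n e b) *
        (C 4 * (Rm N a b * Rm N b a) + Wm N a b * Vm N a b) := by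
  rw [Delta_mul, DP0 e N hsym1 hsym2 htrace, DQ0 e N hsym1 hsym2 htrace]
  simp only [zero_mul, mul_zero, zero_add, dzP, dwQ N, dwP N hsym2, dzQ N hsym1]
  refine Finset.sum_congr rfl fun b _ => ?_
  rw [map_ofNat, map_ofNat]
  ring

include htrace in
lemma stage3a (a b : Fin n) : DeltaOp n e (Rm N a b * Rm N b a)
    = ∑ c : Fin n, C (epsC n e c) *
        (wl (fun d => N a c b d) * zl (fun x => N b x a c)
          + zl (fun x => N a x b c) * wl (fun d => N b c a d)) := by
  rw [Delta_mul, DR0 e N hsym1 hsym2 htrace, DR0 e N hsym1 hsym2 htrace]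
  simp only [zero_mul, mul_zero, zero_add, dzR, dwR]

lemma stage3b (a b : Fin n) : DeltaOp n e (Wm N a b * Vm N a b)
    = ∑ c : Fin n, C (epsC n e c) *
        (C 4 * (wl (fun d => N a b c d) * zl (fun d => N c d a b))) := by
  rw [Delta_mul, DW0 e N hsym1 hsym2, DV0 e N hsym1 hsym2]
  simp only [zero_mul, mul_zero, zero_add, dzW, dwV, dwW N hsym2, dzV N hsym1, add_zero]
  refine Finset.sum_congr rfl fun c _ => ?_
  rw [map_ofNat, map_ofNat]
  ring

end
end Stmt12Aux

namespace Stmt12Aux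
section
variable {n : ℕ}

lemma p12 (g : Fin n → Fin n → Fin n → Fin n → ℂ) :
    ∑ a : Fin n, ∑ b : Fin n, ∑ c : Fin n, ∑ d : Fin n, g a b c d
      = ∑ a : Fin n, ∑ b : Fin n, ∑ c : Fin n, ∑ d : Fin n, g b a c d :=
  Finset.sum_comm

lemma p23 (g : Fin n → Fin n → Fin n → Fin n → ℂ) :
    ∑ a : Fin n, ∑ b : Fin n, ∑ c : Fin n, ∑ d : Fin n, g a b c d
      = ∑ a : Fin n, ∑ b : Fin n, ∑ c : Fin n, ∑ d : Fin n, g a c b d :=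
  Finset.sum_congr rfl fun _ _ => Finset.sum_comm

lemma p34 (g : Fin n → Fin n → Fin n → Fin n → ℂ) :
    ∑ a : Fin n, ∑ b : Fin n, ∑ c : Fin n, ∑ d : Fin n, g a b c d
      = ∑ a : Fin n, ∑ b : Fin n, ∑ c : Fin n, ∑ d : Fin n, g a b d c :=
  Finset.sum_congr rfl fun _ _ => Finset.sum_congr rfl fun _ _ => Finset.sum_comm

lemma q2 (g : Fin n → Fin n → Fin n → Fin n → ℂ) :
    ∑ a : Fin n, ∑ b : Fin n, ∑ c : Fin n, ∑ d : Fin n, g a d b c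
      = ∑ a : Fin n, ∑ b : Fin n, ∑ c : Fin n, ∑ d : Fin n, g a b c d := by
  calc ∑ a : Fin n, ∑ b : Fin n, ∑ c : Fin n, ∑ d : Fin n, g a d b c
      = ∑ a : Fin n, ∑ b : Fin n, ∑ c : Fin n, ∑ d : Fin n, g a d c b :=
        p23 (fun a b c d => g a d b c)
    _ = ∑ a : Fin n, ∑ b : Fin n, ∑ c : Fin n, ∑ d : Fin n, g a c d b :=
        p34 (fun a b c d => g a d c b)
    _ = ∑ a : Fin n, ∑ b : Fin n, ∑ c : Fin n, ∑ d : Fin n, g a b d c :=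
        p23 (fun a b c d => g a c d b)
    _ = ∑ a : Fin n, ∑ b : Fin n, ∑ c : Fin n, ∑ d : Fin n, g a b c d :=
        p34 (fun a b c d => g a b d c)

lemma q1 (g : Fin n → Fin n → Fin n → Fin n → ℂ) :
    ∑ a : Fin n, ∑ b : Fin n, ∑ c : Fin n, ∑ d : Fin n, g b d a c
      = ∑ a : Fin n, ∑ b : Fin n, ∑ c : Fin n, ∑ d : Fin n, g a b c d := by
  calc ∑ a : Fin n, ∑ b : Fin n, ∑ c : Fin n, ∑ d : Fin n, g b d a c
      = ∑ a : Fin n, ∑ b : Fin n, ∑ c : Fin n, ∑ d : Fin n, g a d b c :=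
        p12 (fun a b c d => g b d a c)
    _ = ∑ a : Fin n, ∑ b : Fin n, ∑ c : Fin n, ∑ d : Fin n, g a b c d :=
        q2 g

lemma q3 (g : Fin n → Fin n → Fin n → Fin n → ℂ) :
    ∑ a : Fin n, ∑ b : Fin n, ∑ c : Fin n, ∑ d : Fin n, g c d a b
      = ∑ a : Fin n, ∑ b : Fin n, ∑ c : Fin n, ∑ d : Fin n, g a b c d := by
  calc ∑ a : Fin n, ∑ b : Fin n, ∑ c : Fin n, ∑ d : Fin n, g c d a b
      = ∑ a : Fin n, ∑ b : Fin n, ∑ c : Fin n, ∑ d : Fin n, g b d a c :=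
        p23 (fun a b c d => g c d a b)
    _ = ∑ a : Fin n, ∑ b : Fin n, ∑ c : Fin n, ∑ d : Fin n, g a b c d :=
        q1 g

lemma final_scalar (e : ℕ) (N : Fin n → Fin n → Fin n → Fin n → ℂ) :
    (8:ℂ) * ∑ a : Fin n, epsC n e a * ∑ b : Fin n, epsC n e b *
        (4 * ∑ c : Fin n, epsC n e c *
            (∑ d : Fin n, epsC n e d * (N b d a c * N a c b d) +
              ∑ d : Fin n, epsC n e d * (N a d b c * N b c a d)) +
          ∑ c : Fin n, epsC n e c * (4 * ∑ d : Fin n, epsC n e d * (N c d a b * N a b c d)))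
    = 3 * 2 ^ 5 * ∑ α : Fin n, ∑ β : Fin n, ∑ γ : Fin n, ∑ δ : Fin n,
        epsC n e α * epsC n e β * epsC n e γ * epsC n e δ * N α β γ δ * N γ δ α β := by
  set h : Fin n → Fin n → Fin n → Fin n → ℂ := fun α β γ δ =>
    epsC n e α * epsC n e β * epsC n e γ * epsC n e δ * N α β γ δ * N γ δ α β with hh
  have flat : (8:ℂ) * ∑ a : Fin n, epsC n e a * ∑ b : Fin n, epsC n e b *
        (4 * ∑ c : Fin n, epsC n e c *
            (∑ d : Fin n, epsC n e d * (N b d a c * N a c b d) +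
              ∑ d : Fin n, epsC n e d * (N a d b c * N b c a d)) +
          ∑ c : Fin n, epsC n e c * (4 * ∑ d : Fin n, epsC n e d * (N c d a b * N a b c d)))
      = ∑ a : Fin n, ∑ b : Fin n, ∑ c : Fin n, ∑ d : Fin n,
          (32 * h b d a c + 32 * h a d b c + 32 * h c d a b) := by
    simp only [Finset.mul_sum, mul_add, ← Finset.sum_add_distrib]
    refine Finset.sum_congr rfl fun a _ => Finset.sum_congr rfl fun b _ =>
      Finset.sum_congr rfl fun c _ => Finset.sum_congr rfl fun d _ => ?_
    simp only [hh]
    ring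
  rw [flat]
  simp only [Finset.sum_add_distrib]
  rw [q1 (fun a b c d => 32 * h a b c d), q2 (fun a b c d => 32 * h a b c d),
    q3 (fun a b c d => 32 * h a b c d)]
  simp only [← Finset.mul_sum, ← Finset.sum_add_distrib]
  ring

end
end Stmt12Aux


/-- If `F₂₂ = Σ N_{αβγ̄δ̄} z^α z^β z̄^γ z̄^δ` with `N` symmetric in
`(α,β)` and in `(γ,δ)` satisfies `ΔF₂₂ = 0`, then `Δ⁴(F₂₂²)` is the constant
`3·2⁵·Σ ε_α ε_β ε_γ ε_δ N_{αβγ̄δ̄} N_{γδᾱβ̄}`. -/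
theorem stmt12 (n e : ℕ) (hn : 1 ≤ n) (he1 : n ≤ 2 * e) (he2 : e ≤ n)
    (N : Fin n → Fin n → Fin n → Fin n → ℂ)
    (hsym1 : ∀ α β γ δ, N α β γ δ = N β α γ δ)
    (hsym2 : ∀ α β γ δ, N α β γ δ = N α β δ γ)
    (htrace : DeltaOp n e (F22poly n N) = 0) :
    (DeltaOp n e)^[4] (F22poly n N * F22poly n N)
      = MvPolynomial.C (3 * 2 ^ 5 *
          ∑ α : Fin n, ∑ β : Fin n, ∑ γ : Fin n, ∑ δ : Fin n,
            epsC n e α * epsC n e β * epsC n e γ * epsC n e δ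
              * N α β γ δ * N γ δ α β) := by
  show DeltaOp n e (DeltaOp n e (DeltaOp n e (DeltaOp n e (F22poly n N * F22poly n N)))) = _
  rw [Stmt12Aux.stage1 e N hsym1 hsym2 htrace, Delta_C_mul, Delta_sum]
  simp only [Delta_C_mul, Stmt12Aux.stage2 e N hsym1 hsym2 htrace]
  simp only [Delta_C_mul, Delta_sum, Delta_add,
    Stmt12Aux.stage3a e N hsym1 hsym2 htrace, Stmt12Aux.stage3b e N hsym1 hsym2]
  simp only [Delta_C_mul, Delta_sum, Delta_add,
    Stmt12Aux.stage4 e (n := n), Stmt12Aux.stage4' e (n := n)]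
  simp only [← map_add, ← C_mul, ← map_sum]
  exact congrArg MvPolynomial.C (Stmt12Aux.final_scalar e N)
end
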